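/- arXiv:math/0302350 — 10 statements merged into one kernel-verified Lean document; each statement's English description precedes it below -/
import Mathlib

section
/- Let U ⊆ ℂᵐ be open and convex and let M = {(z, w) ∈ ℂⁿ × ℂᵐ : zᵢ ≠ 0 for all i, and w ∈ U}. If g : M → ℝ is smooth, pluriharmonic, and T-invariant, then there exist λ₁, …, λₙ ∈ ℝ and a holomorphic function f : U → ℂ such that g(z, w) = Σᵢ λᵢ · log |zᵢ|² + Re f(w) for all (z, w) ∈ M. (Theorem 2.2.) -/
/-- The Laplacian of a `C²` function `ℂ → ℝ`: the sum of its second directional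
derivatives in the directions `1` and `i`. -/
noncomputable def planeLaplacian (u : ℂ → ℝ) (z : ℂ) : ℝ :=
  fderiv ℝ (fun w => fderiv ℝ u w 1) z 1 +
    fderiv ℝ (fun w => fderiv ℝ u w Complex.I) z Complex.I

/-- A function `g` on a subset `Ω` of a complex vector space is pluriharmonic if for
all `a, b` the function `ζ ↦ g (a + ζ • b)` has vanishing Laplacian on `{ζ | a + ζ • b ∈ Ω}`. -/
def Pluriharmonic {E : Type*} [AddCommGroup E] [Module ℂ E]
    (g : E → ℝ) (Ω : Set E) : Prop :=
  ∀ a b : E, ∀ ζ : ℂ, a + ζ • b ∈ Ω → planeLaplacian (fun ξ : ℂ => g (a + ξ • b)) ζ = 0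

open Complex Set Filter Topology

section Helpers

variable {E : Type*} [NormedAddCommGroup E] [NormedSpace ℂ E] [NormedSpace ℝ E]
  [IsScalarTower ℝ ℂ E]

/-- The real-linear map `ℂ → E`, `v ↦ v • b`. -/
noncomputable def lineCLM (b : E) : ℂ →L[ℝ] E :=
  ((ContinuousLinearMap.id ℂ ℂ).smulRight b).restrictScalars ℝ

@[simp] lemma lineCLM_apply (b : E) (v : ℂ) : lineCLM b v = v • b := rfl

lemma smooth_package {F G : Type*} [NormedAddCommGroup F] [NormedSpace ℝ F]
    [NormedAddCommGroup G] [NormedSpace ℝ G] {f : F → G} {s : Set F}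
    (hs : IsOpen s) (hf : ContDiffOn ℝ (⊤ : ℕ∞) f s) :
    (∀ x ∈ s, HasFDerivAt f (fderiv ℝ f x) x) ∧
      ContinuousOn (fderiv ℝ f) s ∧
      (∀ x ∈ s, HasFDerivAt (fderiv ℝ f) (fderiv ℝ (fderiv ℝ f) x) x) ∧
      ContinuousOn (fderiv ℝ (fderiv ℝ f)) s := by
  have h1 : ∀ x ∈ s, HasFDerivAt f (fderiv ℝ f x) x := fun x hx =>
    ((hf.differentiableOn (by simp)).differentiableAt (hs.mem_nhds hx)).hasFDerivAt
  have hΦ : ContDiffOn ℝ (⊤ : ℕ∞) (fderiv ℝ f) s := hf.fderiv_of_isOpen hs (by simp)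
  have h2 : ∀ x ∈ s, HasFDerivAt (fderiv ℝ f) (fderiv ℝ (fderiv ℝ f) x) x := fun x hx =>
    ((hΦ.differentiableOn (by simp)).differentiableAt (hs.mem_nhds hx)).hasFDerivAt
  exact ⟨h1, hf.continuousOn_fderiv_of_isOpen hs (by simp), h2,
    hΦ.continuousOn_fderiv_of_isOpen hs (by simp)⟩

lemma hasFDerivAt_line (g : E → ℝ) {s : Set E}
    (hg : ∀ p ∈ s, HasFDerivAt g (fderiv ℝ g p) p)
    (a b : E) {ζ : ℂ} (hζ : a + ζ • b ∈ s) :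
    HasFDerivAt (fun ξ : ℂ => g (a + ξ • b))
      ((fderiv ℝ g (a + ζ • b)).comp (lineCLM b)) ζ := by
  have hA : HasFDerivAt (fun ξ : ℂ => a + ξ • b) (lineCLM b) ζ :=
    (lineCLM b).hasFDerivAt.const_add a
  exact (hg _ hζ).comp ζ hA

lemma planeLaplacian_line (g : E → ℝ) {s : Set E} (hs : IsOpen s)
    (hg : ∀ p ∈ s, HasFDerivAt g (fderiv ℝ g p) p)
    (hΦ : ∀ p ∈ s, HasFDerivAt (fderiv ℝ g) (fderiv ℝ (fderiv ℝ g) p) p)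
    {p : E} (hp : p ∈ s) (b : E) :
    planeLaplacian (fun ξ : ℂ => g (p + ξ • b)) 0
      = fderiv ℝ (fderiv ℝ g) p b b
        + fderiv ℝ (fderiv ℝ g) p (Complex.I • b) (Complex.I • b) := by
  have hc : Continuous fun ξ : ℂ => p + ξ • b := by
    continuity
  have hmem0 : p + (0:ℂ) • b ∈ s := by simpa using hp
  have hev : ∀ᶠ ξ in 𝓝 (0:ℂ), p + ξ • b ∈ s := by
    have := hc.continuousAt (x := (0:ℂ)).preimage_mem_nhds (hs.mem_nhds hmem0)
    exact this
  have hA : ∀ ξ : ℂ, HasFDerivAt (fun ξ : ℂ => p + ξ • b) (lineCLM b) ξ := fun ξ =>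
    (lineCLM b).hasFDerivAt.const_add p
  have hΦA : HasFDerivAt (fun ξ : ℂ => fderiv ℝ g (p + ξ • b))
      ((fderiv ℝ (fderiv ℝ g) p).comp (lineCLM b)) 0 := by
    have := (hΦ _ hmem0).comp (0:ℂ) (hA 0)
    simpa [Function.comp_def] using this
  have key : ∀ c : ℂ, fderiv ℝ (fun ξ : ℂ => fderiv ℝ (fun ξ' : ℂ => g (p + ξ' • b)) ξ c) 0
      = ((fderiv ℝ (fderiv ℝ g) p).comp (lineCLM b)).flip (c • b) := by
    intro c
    have h1 : (fun ξ : ℂ => fderiv ℝ (fun ξ' : ℂ => g (p + ξ' • b)) ξ c)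
        =ᶠ[𝓝 (0:ℂ)] fun ξ : ℂ => fderiv ℝ g (p + ξ • b) (c • b) := by
      filter_upwards [hev] with ξ hξ
      rw [(hasFDerivAt_line g hg p b hξ).fderiv]
      rfl
    rw [h1.fderiv_eq]
    have h2 : HasFDerivAt (fun ξ : ℂ => fderiv ℝ g (p + ξ • b) (c • b))
        (((fderiv ℝ g p).comp (0 : ℂ →L[ℝ] E)) +
          ((fderiv ℝ (fderiv ℝ g) p).comp (lineCLM b)).flip (c • b)) 0 := by
      have := hΦA.clm_apply (hasFDerivAt_const (c • b) (0:ℂ))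
      simpa using this
    rw [h2.fderiv]
    simp
  have e1 := congrFun (congrArg DFunLike.coe (key 1)) 1
  have eI := congrFun (congrArg DFunLike.coe (key Complex.I)) Complex.I
  simp only [ContinuousLinearMap.flip_apply, ContinuousLinearMap.coe_comp',
    Function.comp_apply, lineCLM_apply] at e1 eI
  rw [planeLaplacian]
  rw [e1, eI]
  simp [one_smul]

end Helpers

section Helpers2

open Complex Set Filter Topology

variable {E : Type*} [NormedAddCommGroup E] [NormedSpace ℂ E] [NormedSpace ℝ E]
  [IsScalarTower ℝ ℂ E]

/-- Symmetry of the second derivative on an open set. -/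
lemma sderiv_symm (g : E → ℝ) {s : Set E} (hs : IsOpen s)
    (hg : ∀ p ∈ s, HasFDerivAt g (fderiv ℝ g p) p)
    (hΦ : ∀ p ∈ s, HasFDerivAt (fderiv ℝ g) (fderiv ℝ (fderiv ℝ g) p) p)
    {p : E} (hp : p ∈ s) (x y : E) :
    fderiv ℝ (fderiv ℝ g) p x y = fderiv ℝ (fderiv ℝ g) p y x := by
  have hev : ∀ᶠ q in 𝓝 p, HasFDerivAt g (fderiv ℝ g q) q := by
    filter_upwards [hs.mem_nhds hp] with q hq using hg q hq
  exact second_derivative_symmetric_of_eventually hev (hΦ p hp) x y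

/-- Pluriharmonicity gives the polarized identity `S x y + S (I•x) (I•y) = 0`. -/
lemma sderiv_polarized (g : E → ℝ) {s : Set E} (hs : IsOpen s)
    (hg : ∀ p ∈ s, HasFDerivAt g (fderiv ℝ g p) p)
    (hΦ : ∀ p ∈ s, HasFDerivAt (fderiv ℝ g) (fderiv ℝ (fderiv ℝ g) p) p)
    (hph : Pluriharmonic g s) {p : E} (hp : p ∈ s) (x y : E) :
    fderiv ℝ (fderiv ℝ g) p x y
      + fderiv ℝ (fderiv ℝ g) p (Complex.I • x) (Complex.I • y) = 0 := by
  set S := fderiv ℝ (fderiv ℝ g) p with hS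
  have hQ : ∀ b : E, S b b + S (Complex.I • b) (Complex.I • b) = 0 := by
    intro b
    have hmem : p + (0:ℂ) • b ∈ s := by simpa using hp
    have := hph p b 0 hmem
    rw [planeLaplacian_line g hs hg hΦ hp b] at this
    exact this
  have hsymm : ∀ x y : E, S x y = S y x := sderiv_symm g hs hg hΦ hp
  have hxy := hQ (x + y)
  have hx := hQ x
  have hy := hQ y
  have expand : S (x + y) (x + y) = S x x + S x y + S y x + S y y := by
    rw [map_add]
    simp only [ContinuousLinearMap.add_apply, map_add]
    ring
  have expand2 : S (Complex.I • (x + y)) (Complex.I • (x + y))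
      = S (Complex.I • x) (Complex.I • x) + S (Complex.I • x) (Complex.I • y)
        + S (Complex.I • y) (Complex.I • x) + S (Complex.I • y) (Complex.I • y) := by
    rw [smul_add, map_add]
    simp only [ContinuousLinearMap.add_apply, map_add]
    ring
  rw [expand, expand2] at hxy
  have h1 := hsymm y x
  have h2 := hsymm (Complex.I • y) (Complex.I • x)
  linarith

/-- Pluriharmonicity gives `S x (I•y) = S (I•x) y`. -/
lemma sderiv_swapI (g : E → ℝ) {s : Set E} (hs : IsOpen s)
    (hg : ∀ p ∈ s, HasFDerivAt g (fderiv ℝ g p) p)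
    (hΦ : ∀ p ∈ s, HasFDerivAt (fderiv ℝ g) (fderiv ℝ (fderiv ℝ g) p) p)
    (hph : Pluriharmonic g s) {p : E} (hp : p ∈ s) (x y : E) :
    fderiv ℝ (fderiv ℝ g) p x (Complex.I • y)
      = fderiv ℝ (fderiv ℝ g) p (Complex.I • x) y := by
  have h := sderiv_polarized g hs hg hΦ hph hp x (Complex.I • y)
  have hII : Complex.I • (Complex.I • y) = -y := by
    rw [smul_smul, Complex.I_mul_I, neg_one_smul]
  rw [hII, map_neg] at h
  linarith

/-- A function with vanishing derivative on an open preconnected set is constant there. -/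
lemma const_of_hasFDerivAt_zero {F : Type*} [NormedAddCommGroup F] [NormedSpace ℝ F]
    {f : F → ℝ} {s : Set F} (hs : IsOpen s) (hconn : IsPreconnected s)
    (hf : ∀ x ∈ s, HasFDerivAt f (0 : F →L[ℝ] ℝ) x) :
    ∀ x ∈ s, ∀ y ∈ s, f x = f y := by
  have hball : ∀ x ∈ s, ∃ r > 0, Metric.ball x r ⊆ s ∧
      ∀ y ∈ Metric.ball x r, f y = f x := by
    intro x hx
    obtain ⟨r, hr, hsub⟩ := Metric.isOpen_iff.1 hs x hx
    refine ⟨r, hr, hsub, fun y hy => ?_⟩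
    refine (convex_ball x r).is_const_of_fderivWithin_eq_zero (𝕜 := ℝ)
      (fun z hz => ((hf z (hsub hz)).differentiableAt).differentiableWithinAt)
      (fun z hz => ?_) hy (Metric.mem_ball_self hr)
    rw [fderivWithin_of_isOpen Metric.isOpen_ball hz]
    exact (hf z (hsub hz)).fderiv
  intro x hx y hy
  by_contra hne
  set u := {p | p ∈ s ∧ f p = f x} with hu
  set v := {p | p ∈ s ∧ f p ≠ f x} with hv
  have hou : IsOpen u := by
    rw [Metric.isOpen_iff]
    rintro p ⟨hps, hpf⟩
    obtain ⟨r, hr, hsub, hconst⟩ := hball p hps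
    exact ⟨r, hr, fun q hq => ⟨hsub hq, (hconst q hq).trans hpf⟩⟩
  have hov : IsOpen v := by
    rw [Metric.isOpen_iff]
    rintro p ⟨hps, hpf⟩
    obtain ⟨r, hr, hsub, hconst⟩ := hball p hps
    exact ⟨r, hr, fun q hq => ⟨hsub hq, by rw [hconst q hq]; exact hpf⟩⟩
  have hcover : s ⊆ u ∪ v := by
    intro p hp
    by_cases h : f p = f x
    · exact Or.inl ⟨hp, h⟩
    · exact Or.inr ⟨hp, h⟩
  obtain ⟨q, hqs, hqu, hqv⟩ := hconn u v hou hov hcover ⟨x, hx, hx, rfl⟩ ⟨y, hy, hy, hne ∘ Eq.symm⟩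
  exact hqv.2 hqu.2

end Helpers2

section OneVar

open Complex Set Filter Topology

/-- The real-linear map `ℂ → ℂ`, `v ↦ I * v`. -/
noncomputable def JmulI : ℂ →L[ℝ] ℂ := lineCLM (Complex.I)

@[simp] lemma JmulI_apply (v : ℂ) : JmulI v = Complex.I * v := by
  show v • Complex.I = Complex.I * v
  rw [smul_eq_mul, mul_comm]

/-- Rotation invariance kills the angular derivative. -/
lemma rot_kill (u : ℂ → ℝ)
    (hu : ∀ ξ : ℂ, ξ ≠ 0 → HasFDerivAt u (fderiv ℝ u ξ) ξ)
    (hrot : ∀ t : ℝ, ∀ ξ : ℂ, ξ ≠ 0 → u (Complex.exp (Complex.I * t) * ξ) = u ξ) :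
    ∀ ξ : ℂ, ξ ≠ 0 → fderiv ℝ u ξ (Complex.I * ξ) = 0 := by
  intro ξ hξ
  set c : ℝ → ℂ := fun t => Complex.exp (Complex.I * t) * ξ with hc
  have hc0 : c 0 = ξ := by simp [hc]
  have hcder : HasDerivAt c (Complex.I * ξ) 0 := by
    have h1 : HasDerivAt (fun z : ℂ => Complex.exp (Complex.I * z) * ξ)
        (Complex.exp (Complex.I * 0) * Complex.I * ξ) ((0:ℝ) : ℂ) := by
      have hz : HasDerivAt (fun z : ℂ => Complex.I * z) Complex.I ((0:ℝ):ℂ) := by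
        simpa using (hasDerivAt_id ((0:ℝ):ℂ)).const_mul Complex.I
      have := hz.cexp.mul_const ξ
      simpa using this
    have := h1.comp_ofReal
    simpa using this
  have hconst : (fun t : ℝ => u (c t)) = fun _ => u ξ := by
    funext t
    exact hrot t ξ hξ
  have h2 : HasDerivAt (fun t : ℝ => u (c t)) (fderiv ℝ u ξ (Complex.I * ξ)) 0 := by
    have h2' : HasDerivAt (fun t : ℝ => u (c t)) (fderiv ℝ u (c 0) (Complex.I * ξ)) 0 :=
      (hu (c 0) (by rw [hc0]; exact hξ)).comp_hasDerivAt 0 hcder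
    rwa [hc0] at h2'
  have h3 : HasDerivAt (fun t : ℝ => u (c t)) 0 0 := by
    rw [hconst]; exact hasDerivAt_const 0 _
  exact h2.unique h3

/-- One-variable radial lemma: a rotation invariant harmonic function on `ℂ*`. -/
lemma one_var (u : ℂ → ℝ)
    (hu : ∀ ξ : ℂ, ξ ≠ 0 → HasFDerivAt u (fderiv ℝ u ξ) ξ)
    (hu2 : ∀ ξ : ℂ, ξ ≠ 0 → HasFDerivAt (fderiv ℝ u) (fderiv ℝ (fderiv ℝ u) ξ) ξ)
    (hlap : ∀ ξ : ℂ, ξ ≠ 0 → fderiv ℝ (fderiv ℝ u) ξ 1 1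
      + fderiv ℝ (fderiv ℝ u) ξ Complex.I Complex.I = 0)
    (hrot : ∀ t : ℝ, ∀ ξ : ℂ, ξ ≠ 0 → u (Complex.exp (Complex.I * t) * ξ) = u ξ) :
    ∀ ξ : ℂ, ξ ≠ 0 → u ξ = u 1 + (fderiv ℝ u 1 1) * Real.log ‖ξ‖ := by
  have hkill := rot_kill u hu hrot
  -- differentiated rotation identity
  have hkill' : ∀ ξ : ℂ, ξ ≠ 0 → ∀ d : ℂ,
      fderiv ℝ u ξ (Complex.I * d) + fderiv ℝ (fderiv ℝ u) ξ d (Complex.I * ξ) = 0 := by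
    intro ξ hξ d
    set W : ℂ → ℝ := fun η => fderiv ℝ u η (JmulI η) with hW
    have h1 : HasFDerivAt W ((fderiv ℝ u ξ).comp JmulI
        + (fderiv ℝ (fderiv ℝ u) ξ).flip (JmulI ξ)) ξ :=
      (hu2 ξ hξ).clm_apply JmulI.hasFDerivAt
    have hev : W =ᶠ[𝓝 ξ] fun _ => (0:ℝ) := by
      filter_upwards [isOpen_compl_singleton.mem_nhds (by simpa using hξ :
        ξ ∈ ({0}ᶜ : Set ℂ))] with η hη
      have : η ≠ 0 := hη
      simp only [hW, JmulI_apply]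
      exact hkill η this
    have h2 : HasFDerivAt W (0 : ℂ →L[ℝ] ℝ) ξ := by
      exact (hev.hasFDerivAt_iff).2 (hasFDerivAt_const 0 ξ)
    have h3 := h1.unique h2
    have := congrFun (congrArg DFunLike.coe h3) d
    simpa [JmulI_apply] using this
  -- radial second-order identity at positive reals
  have hstar : ∀ r : ℝ, r ≠ 0 →
      (r : ℝ) * fderiv ℝ (fderiv ℝ u) (r : ℂ) Complex.I Complex.I
        = fderiv ℝ u (r : ℂ) 1 := by
    intro r hr
    have := hkill' (r : ℂ) (by exact_mod_cast hr) Complex.I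
    rw [Complex.I_mul_I] at this
    have hIr : (Complex.I * (r:ℂ)) = (r : ℝ) • Complex.I := by
      rw [Complex.real_smul, mul_comm]
    rw [hIr, (fderiv ℝ (fderiv ℝ u) (r:ℂ) Complex.I).map_smul] at this
    have hneg : fderiv ℝ u (r:ℂ) (-1) = -(fderiv ℝ u (r:ℂ) 1) :=
      (fderiv ℝ u (r:ℂ)).map_neg 1
    rw [hneg] at this
    simp only [smul_eq_mul] at this
    linarith
  set ψ : ℝ → ℝ := fun t => fderiv ℝ u (t : ℂ) 1 with hψ
  set φ : ℝ → ℝ := fun t => u (t : ℂ) with hφ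
  have hofReal : ∀ t : ℝ, HasDerivAt (fun x : ℝ => (x : ℂ)) 1 t := fun t => by
    simpa using (hasDerivAt_id t).ofReal_comp
  have hφ' : ∀ r : ℝ, r ≠ 0 → HasDerivAt φ (ψ r) r := by
    intro r hr
    have := (hu (r:ℂ) (by exact_mod_cast hr)).comp_hasDerivAt r (hofReal r)
    simpa [hφ, hψ, Function.comp_def] using this
  have hψ' : ∀ r : ℝ, r ≠ 0 → HasDerivAt ψ (fderiv ℝ (fderiv ℝ u) (r:ℂ) 1 1) r := by
    intro r hr
    have h1 : HasFDerivAt (fun ξ : ℂ => fderiv ℝ u ξ 1)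
        ((fderiv ℝ u (r:ℂ)).comp (0 : ℂ →L[ℝ] ℂ)
          + (fderiv ℝ (fderiv ℝ u) (r:ℂ)).flip 1) (r:ℂ) :=
      (hu2 (r:ℂ) (by exact_mod_cast hr)).clm_apply (hasFDerivAt_const 1 _)
    have h2 := h1.comp_hasDerivAt r (hofReal r)
    simpa [hψ, Function.comp_def] using h2
  -- the function r * ψ r is constant on (0, ∞)
  set Λ : ℝ := ψ 1 with hΛ
  have hθconst : ∀ r : ℝ, 0 < r → r * ψ r = Λ := by
    have hθ' : ∀ r ∈ Ioi (0:ℝ), HasFDerivAt (fun t : ℝ => t * ψ t) (0 : ℝ →L[ℝ] ℝ) r := by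
      intro r hr
      have hrne : r ≠ 0 := ne_of_gt hr
      have h1 : HasDerivAt (fun t : ℝ => t * ψ t) (1 * ψ r + r * fderiv ℝ (fderiv ℝ u) (r:ℂ) 1 1) r :=
        (hasDerivAt_id r).mul (hψ' r hrne)
      have hzero : 1 * ψ r + r * fderiv ℝ (fderiv ℝ u) (r:ℂ) 1 1 = 0 := by
        have hl := hlap (r:ℂ) (by exact_mod_cast hrne)
        have hst := hstar r hrne
        have : fderiv ℝ (fderiv ℝ u) (r:ℂ) 1 1 = - fderiv ℝ (fderiv ℝ u) (r:ℂ) Complex.I Complex.I := by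
          linarith
        rw [this]
        simp only [hψ]
        nlinarith [hst]
      rw [hzero] at h1
      have h2 := h1.hasFDerivAt
      have h3 : ContinuousLinearMap.toSpanSingleton ℝ (0:ℝ) = 0 := by ext x; simp
      rwa [h3] at h2
    intro r hr
    have := const_of_hasFDerivAt_zero (F := ℝ) isOpen_Ioi isPreconnected_Ioi hθ'
      r hr 1 (by norm_num)
    simpa [hΛ] using this
  have hψval : ∀ r : ℝ, 0 < r → ψ r = Λ / r := by
    intro r hr
    have := hθconst r hr
    field_simp at this ⊢
    linarith
  -- φ r - Λ log r is constant on (0, ∞)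
  have hρconst : ∀ r : ℝ, 0 < r → φ r = φ 1 + Λ * Real.log r := by
    have hρ' : ∀ r ∈ Ioi (0:ℝ), HasFDerivAt (fun t : ℝ => φ t - Λ * Real.log t)
        (0 : ℝ →L[ℝ] ℝ) r := by
      intro r hr
      have hrne : r ≠ 0 := ne_of_gt hr
      have h1 : HasDerivAt (fun t : ℝ => φ t - Λ * Real.log t) (ψ r - Λ * r⁻¹) r :=
        (hφ' r hrne).sub ((Real.hasDerivAt_log hrne).const_mul Λ)
      have hzero : ψ r - Λ * r⁻¹ = 0 := by
        rw [hψval r hr]; field_simp; ring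
      rw [hzero] at h1
      have h2 := h1.hasFDerivAt
      have h3 : ContinuousLinearMap.toSpanSingleton ℝ (0:ℝ) = 0 := by ext x; simp
      rwa [h3] at h2
    intro r hr
    have := const_of_hasFDerivAt_zero (F := ℝ) isOpen_Ioi isPreconnected_Ioi hρ'
      r hr 1 (by norm_num)
    simp only [Real.log_one, mul_zero, sub_zero] at this
    linarith
  -- conclusion
  intro ξ hξ
  have habs : (0:ℝ) < ‖ξ‖ := norm_pos_iff.mpr hξ
  have habsne : ((‖ξ‖ : ℝ) : ℂ) ≠ 0 := by exact_mod_cast ne_of_gt habs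
  have hval : u ξ = u ((‖ξ‖ : ℝ) : ℂ) := by
    have := hrot (Complex.arg ξ) ((‖ξ‖ : ℝ) : ℂ) habsne
    rw [show Complex.exp (Complex.I * (Complex.arg ξ : ℂ)) * ((‖ξ‖ : ℝ) : ℂ) = ξ by
      rw [mul_comm Complex.I, mul_comm]; exact Complex.norm_mul_exp_arg_mul_I ξ] at this
    exact this
  rw [hval]
  have := hρconst ‖ξ‖ habs
  simp only [hφ] at this
  rw [this]
  have hΛval : Λ = fderiv ℝ u 1 1 := by simp [hΛ, hψ]
  rw [hΛval]
  norm_num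
end OneVar

section ConjHelpers

open Complex Set Filter Topology MeasureTheory

/-- The real-linear map `x ↦ I • x`. -/
noncomputable def smulICLM (E : Type*) [NormedAddCommGroup E] [NormedSpace ℂ E] :
    E →L[ℝ] E :=
  (Complex.I • ContinuousLinearMap.id ℂ E).restrictScalars ℝ

@[simp] lemma smulICLM_apply {E : Type*} [NormedAddCommGroup E] [NormedSpace ℂ E] (x : E) :
    smulICLM E x = Complex.I • x := rfl

/-- Fubini for continuous functions on the unit square. -/
lemma integral_swap_unit_square {P : ℝ → ℝ → ℝ}
    (hPc : ContinuousOn (fun q : ℝ × ℝ => P q.1 q.2) (Icc 0 1 ×ˢ Icc 0 1)) :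
    ∫ t in (0:ℝ)..1, ∫ s in (0:ℝ)..1, P t s = ∫ s in (0:ℝ)..1, ∫ t in (0:ℝ)..1, P t s := by
  have h01 : (0:ℝ) ≤ 1 := zero_le_one
  have hint : MeasureTheory.Integrable (Function.uncurry P)
      ((MeasureTheory.volume.restrict (Ioc (0:ℝ) 1)).prod
        (MeasureTheory.volume.restrict (Ioc (0:ℝ) 1))) := by
    rw [MeasureTheory.Measure.prod_restrict]
    refine MeasureTheory.IntegrableOn.mono_set ?_
      (Set.prod_mono Ioc_subset_Icc_self Ioc_subset_Icc_self)
    exact hPc.integrableOn_compact (isCompact_Icc.prod isCompact_Icc)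
  rw [intervalIntegral.integral_of_le h01, intervalIntegral.integral_of_le h01]
  simp_rw [intervalIntegral.integral_of_le h01]
  exact MeasureTheory.integral_integral_swap hint

end ConjHelpers

section Conjugate

open Complex Set Filter Topology MeasureTheory

variable {m : ℕ}

set_option maxHeartbeats 1000000 in
/-- The circulation identity: integrating the conjugate differential along the segment
`w₀ → w + η` minus along `w₀ → w` equals integrating along `w → w + η`. -/
lemma key_segment {U : Set (Fin m → ℂ)} (hUc : Convex ℝ U)
    (Φ : (Fin m → ℂ) → (Fin m → ℂ) →L[ℝ] ℝ)
    (S : (Fin m → ℂ) → (Fin m → ℂ) →L[ℝ] (Fin m → ℂ) →L[ℝ] ℝ)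
    (hΦd : ∀ p ∈ U, HasFDerivAt Φ (S p) p)
    (hΦc : ContinuousOn Φ U) (hSc : ContinuousOn S U)
    (hsymm : ∀ p ∈ U, ∀ x y, S p x y = S p y x)
    (hswap : ∀ p ∈ U, ∀ x y, S p x (Complex.I • y) = S p (Complex.I • x) y)
    {w₀ w η : Fin m → ℂ} (hw₀ : w₀ ∈ U) (hw : w ∈ U) (hwη : w + η ∈ U) :
    (∫ t in (0:ℝ)..1, -(Φ (w₀ + t • ((w + η) - w₀)) (Complex.I • ((w + η) - w₀))))
      - (∫ t in (0:ℝ)..1, -(Φ (w₀ + t • (w - w₀)) (Complex.I • (w - w₀))))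
      = ∫ s in (0:ℝ)..1, -(Φ (w + s • η) (Complex.I • η)) := by
  obtain ⟨δ, hδdef⟩ : ∃ δ : ℝ → (Fin m → ℂ), δ = fun s => (w - w₀) + s • η := ⟨_, rfl⟩
  obtain ⟨γ, hγdef⟩ : ∃ γ : ℝ → ℝ → (Fin m → ℂ), γ = fun t s => w₀ + t • δ s := ⟨_, rfl⟩
  have hq : ∀ s ∈ Icc (0:ℝ) 1, w + s • η ∈ U := by
    intro s hs
    have := hUc.add_smul_sub_mem hw hwη hs
    rwa [add_sub_cancel_left] at this
  have memγ : ∀ t ∈ Icc (0:ℝ) 1, ∀ s ∈ Icc (0:ℝ) 1, γ t s ∈ U := by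
    intro t ht s hs
    have h1 : δ s = (w + s • η) - w₀ := by simp only [hδdef]; abel
    simp only [hγdef, h1]
    exact hUc.add_smul_sub_mem hw₀ (hq s hs) ht
  obtain ⟨P, hPdef⟩ : ∃ P : ℝ → ℝ → ℝ,
      P = fun t s => -(S (γ t s) (t • η) (Complex.I • δ s) + Φ (γ t s) (Complex.I • η)) :=
    ⟨_, rfl⟩
  obtain ⟨F, hFdef⟩ : ∃ F : ℝ → ℝ → ℝ, F = fun t s => -(Φ (γ t s) (Complex.I • δ s)) := ⟨_, rfl⟩
  obtain ⟨G, hGdef⟩ : ∃ G : ℝ → ℝ → ℝ, G = fun t s => -(t * (Φ (γ t s) (Complex.I • η))) := ⟨_, rfl⟩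
  have hF1 : ∀ t ∈ Icc (0:ℝ) 1, ∀ s ∈ Icc (0:ℝ) 1,
      HasDerivAt (fun s' => F t s') (P t s) s := by
    intro t ht s hs
    have hδ' : HasDerivAt δ η s := by
      simp only [hδdef]
      simpa using ((hasDerivAt_id s).smul_const η).const_add (w - w₀)
    have hγs : HasDerivAt (fun s' => γ t s') (t • η) s := by
      simp only [hγdef]
      exact (hδ'.const_smul t).const_add w₀
    have hΦγ : HasDerivAt (fun s' => Φ (γ t s')) (S (γ t s) (t • η)) s := by
      simpa [Function.comp_def] using (hΦd _ (memγ t ht s hs)).comp_hasDerivAt s hγs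
    have hu2 : HasDerivAt (fun s' => Complex.I • δ s') (Complex.I • η) s :=
      hδ'.const_smul Complex.I
    have hres := (hΦγ.clm_apply hu2).neg
    simp only [hFdef, hPdef]
    exact hres
  have hG1 : ∀ s ∈ Icc (0:ℝ) 1, ∀ t ∈ Icc (0:ℝ) 1,
      HasDerivAt (fun t' => G t' s) (P t s) t := by
    intro s hs t ht
    have hγt : HasDerivAt (fun t' => γ t' s) (δ s) t := by
      simp only [hγdef]
      simpa using ((hasDerivAt_id t).smul_const (δ s)).const_add w₀
    have happ : HasDerivAt (fun t' => Φ (γ t' s) (Complex.I • η))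
        (S (γ t s) (δ s) (Complex.I • η)) t := by
      have hΦγ : HasDerivAt (fun t' => Φ (γ t' s)) (S (γ t s) (δ s)) t := by
        simpa [Function.comp_def] using (hΦd _ (memγ t ht s hs)).comp_hasDerivAt t hγt
      simpa using hΦγ.clm_apply (hasDerivAt_const t (Complex.I • η))
    have hmul : HasDerivAt (fun t' => t' * (Φ (γ t' s) (Complex.I • η)))
        (1 * Φ (γ t s) (Complex.I • η) + t * S (γ t s) (δ s) (Complex.I • η)) t :=
      (hasDerivAt_id t).mul happ
    have hrw : 1 * Φ (γ t s) (Complex.I • η) + t * S (γ t s) (δ s) (Complex.I • η)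
        = S (γ t s) (t • η) (Complex.I • δ s) + Φ (γ t s) (Complex.I • η) := by
      have h1 : S (γ t s) (δ s) (Complex.I • η) = S (γ t s) η (Complex.I • δ s) := by
        rw [hswap _ (memγ t ht s hs) η (δ s), hsymm _ (memγ t ht s hs)]
      have h2 : S (γ t s) (t • η) (Complex.I • δ s)
          = t * S (γ t s) η (Complex.I • δ s) := by
        rw [(S (γ t s)).map_smul]
        simp
      rw [h1, h2]; ring
    rw [hrw] at hmul
    have hres := hmul.neg
    simp only [hGdef, hPdef]
    exact hres
  have hγc : Continuous (fun q : ℝ × ℝ => γ q.1 q.2) := by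
    simp only [hγdef, hδdef]
    exact continuous_const.add
      (continuous_fst.smul (continuous_const.add (continuous_snd.smul continuous_const)))
  have hγmaps : MapsTo (fun q : ℝ × ℝ => γ q.1 q.2) (Icc 0 1 ×ˢ Icc 0 1) U := by
    rintro ⟨t, s⟩ ⟨ht, hs⟩
    exact memγ t ht s hs
  have hδc : Continuous (fun q : ℝ × ℝ => Complex.I • δ q.2) := by
    simp only [hδdef]
    exact (continuous_const.add (continuous_snd.smul continuous_const)).const_smul Complex.I
  have hPc : ContinuousOn (fun q : ℝ × ℝ => P q.1 q.2) (Icc 0 1 ×ˢ Icc 0 1) := by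
    have hSγ : ContinuousOn (fun q : ℝ × ℝ => S (γ q.1 q.2)) (Icc 0 1 ×ˢ Icc 0 1) :=
      hSc.comp hγc.continuousOn hγmaps
    have hΦγ : ContinuousOn (fun q : ℝ × ℝ => Φ (γ q.1 q.2)) (Icc 0 1 ×ˢ Icc 0 1) :=
      hΦc.comp hγc.continuousOn hγmaps
    have hc1 : Continuous (fun q : ℝ × ℝ => q.1 • η) := continuous_fst.smul continuous_const
    simp only [hPdef]
    exact (((hSγ.clm_apply hc1.continuousOn).clm_apply hδc.continuousOn).add
      (hΦγ.clm_apply continuousOn_const)).neg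
  have hPslice_s : ∀ t ∈ Icc (0:ℝ) 1, IntervalIntegrable (fun s => P t s)
      MeasureTheory.volume 0 1 := by
    intro t ht
    apply ContinuousOn.intervalIntegrable
    rw [uIcc_of_le zero_le_one]
    have hc : Continuous (fun s : ℝ => ((t, s) : ℝ × ℝ)) := continuous_const.prodMk continuous_id
    exact hPc.comp hc.continuousOn (fun s hs => ⟨ht, hs⟩)
  have hPslice_t : ∀ s ∈ Icc (0:ℝ) 1, IntervalIntegrable (fun t => P t s)
      MeasureTheory.volume 0 1 := by
    intro s hs
    apply ContinuousOn.intervalIntegrable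
    rw [uIcc_of_le zero_le_one]
    have hc : Continuous (fun t : ℝ => ((t, s) : ℝ × ℝ)) := continuous_id.prodMk continuous_const
    exact hPc.comp hc.continuousOn (fun t ht => ⟨ht, hs⟩)
  have eq1 : ∀ t ∈ Icc (0:ℝ) 1, F t 1 - F t 0 = ∫ s in (0:ℝ)..1, P t s := by
    intro t ht
    rw [intervalIntegral.integral_eq_sub_of_hasDerivAt (f := fun s => F t s)
      (fun s hs => hF1 t ht s (by rwa [uIcc_of_le zero_le_one] at hs)) (hPslice_s t ht)]
  have eq2 : ∀ s ∈ Icc (0:ℝ) 1, G 1 s - G 0 s = ∫ t in (0:ℝ)..1, P t s := by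
    intro s hs
    rw [intervalIntegral.integral_eq_sub_of_hasDerivAt (f := fun t => G t s)
      (fun t ht => hG1 s hs t (by rwa [uIcc_of_le zero_le_one] at ht)) (hPslice_t s hs)]
  have hδ1 : δ 1 = (w + η) - w₀ := by simp only [hδdef, one_smul]; abel
  have hδ0 : δ 0 = w - w₀ := by simp only [hδdef, zero_smul, add_zero]
  have hv1 : (∫ t in (0:ℝ)..1, -(Φ (w₀ + t • ((w + η) - w₀)) (Complex.I • ((w + η) - w₀))))
      = ∫ t in (0:ℝ)..1, F t 1 := by
    apply intervalIntegral.integral_congr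
    intro t ht
    simp only [hFdef, hγdef, hδ1]
  have hv0 : (∫ t in (0:ℝ)..1, -(Φ (w₀ + t • (w - w₀)) (Complex.I • (w - w₀))))
      = ∫ t in (0:ℝ)..1, F t 0 := by
    apply intervalIntegral.integral_congr
    intro t ht
    simp only [hFdef, hγdef, hδ0]
  have hFcont : ContinuousOn (fun q : ℝ × ℝ => F q.1 q.2) (Icc 0 1 ×ˢ Icc 0 1) := by
    have hΦγ : ContinuousOn (fun q : ℝ × ℝ => Φ (γ q.1 q.2)) (Icc 0 1 ×ˢ Icc 0 1) :=
      hΦc.comp hγc.continuousOn hγmaps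
    simp only [hFdef]
    exact (hΦγ.clm_apply hδc.continuousOn).neg
  have hFc : ∀ s₀ ∈ Icc (0:ℝ) 1, IntervalIntegrable (fun t => F t s₀)
      MeasureTheory.volume 0 1 := by
    intro s₀ hs₀
    apply ContinuousOn.intervalIntegrable
    rw [uIcc_of_le zero_le_one]
    have hc : Continuous (fun t : ℝ => ((t, s₀) : ℝ × ℝ)) := continuous_id.prodMk continuous_const
    exact hFcont.comp hc.continuousOn (fun t ht => ⟨ht, hs₀⟩)
  rw [hv1, hv0]
  calc (∫ t in (0:ℝ)..1, F t 1) - ∫ t in (0:ℝ)..1, F t 0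
      = ∫ t in (0:ℝ)..1, (F t 1 - F t 0) := by
        rw [intervalIntegral.integral_sub (hFc 1 (by norm_num)) (hFc 0 (by norm_num))]
    _ = ∫ t in (0:ℝ)..1, ∫ s in (0:ℝ)..1, P t s := by
        apply intervalIntegral.integral_congr
        intro t ht
        rw [uIcc_of_le zero_le_one] at ht
        exact eq1 t ht
    _ = ∫ s in (0:ℝ)..1, ∫ t in (0:ℝ)..1, P t s := integral_swap_unit_square hPc
    _ = ∫ s in (0:ℝ)..1, (G 1 s - G 0 s) := by
        apply intervalIntegral.integral_congr
        intro s hs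
        rw [uIcc_of_le zero_le_one] at hs
        exact (eq2 s hs).symm
    _ = ∫ s in (0:ℝ)..1, -(Φ (w + s • η) (Complex.I • η)) := by
        apply intervalIntegral.integral_congr
        intro s hs
        have hγ1 : γ 1 s = w + s • η := by
          simp only [hγdef, hδdef, one_smul]
          abel
        simp only [hGdef, hγ1, one_mul, zero_mul, neg_zero, sub_zero]

end Conjugate

section Conjugate2

open Complex Set Filter Topology MeasureTheory

variable {m : ℕ}

/-- If `v` satisfies the segment-integral identity with a continuous `ω`, then `v` is
differentiable with derivative `ω`. -/
lemma hasFDerivAt_of_segment (U : Set (Fin m → ℂ)) (hUo : IsOpen U)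
    (ω : (Fin m → ℂ) → (Fin m → ℂ) →L[ℝ] ℝ) (hωc : ContinuousOn ω U)
    (v : (Fin m → ℂ) → ℝ)
    (key : ∀ w ∈ U, ∀ η : Fin m → ℂ, w + η ∈ U →
      v (w + η) - v w = ∫ s in (0:ℝ)..1, ω (w + s • η) η)
    {w : Fin m → ℂ} (hw : w ∈ U) : HasFDerivAt v (ω w) w := by
  rw [hasFDerivAt_iff_isLittleO_nhds_zero, Asymptotics.isLittleO_iff]
  intro c hc
  obtain ⟨ε, hε0, hballU⟩ := Metric.isOpen_iff.1 hUo w hw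
  have h1 : ∀ᶠ p in 𝓝 w, ‖ω p - ω w‖ < c := by
    have h2 : ContinuousAt (fun p => ‖ω p - ω w‖) w :=
      ((hωc.continuousAt (hUo.mem_nhds hw)).sub continuousAt_const).norm
    have h3 : ‖ω w - ω w‖ < c := by simpa using hc
    exact h2.eventually_lt continuousAt_const h3
  obtain ⟨ε', hε'0, hball'⟩ := Metric.eventually_nhds_iff_ball.1 h1
  have hr0 : 0 < min ε ε' := lt_min hε0 hε'0
  filter_upwards [Metric.ball_mem_nhds (0 : Fin m → ℂ) hr0] with η hη
  rw [mem_ball_zero_iff] at hη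
  have hmemball : ∀ s ∈ Icc (0:ℝ) 1, w + s • η ∈ Metric.ball w (min ε ε') := by
    intro s hs
    rw [Metric.mem_ball, dist_eq_norm, add_sub_cancel_left, norm_smul]
    calc ‖s‖ * ‖η‖ ≤ 1 * ‖η‖ := by
          apply mul_le_mul_of_nonneg_right _ (norm_nonneg η)
          rw [Real.norm_eq_abs, abs_le]
          constructor <;> linarith [hs.1, hs.2]
      _ = ‖η‖ := one_mul _
      _ < min ε ε' := hη
  have hwη : w + η ∈ U := by
    apply hballU
    apply Metric.ball_subset_ball (min_le_left ε ε')
    simpa using hmemball 1 (by norm_num)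
  have hint : IntervalIntegrable (fun s => ω (w + s • η) η) MeasureTheory.volume 0 1 := by
    apply ContinuousOn.intervalIntegrable
    rw [uIcc_of_le zero_le_one]
    have hmapsU : MapsTo (fun s : ℝ => w + s • η) (Icc 0 1) U := fun s hs =>
      hballU (Metric.ball_subset_ball (min_le_left ε ε') (hmemball s hs))
    have hcont : Continuous (fun s : ℝ => w + s • η) :=
      continuous_const.add (continuous_id.smul continuous_const)
    exact (hωc.comp hcont.continuousOn hmapsU).clm_apply continuousOn_const
  have hsplit : v (w + η) - v w - ω w η
      = ∫ s in (0:ℝ)..1, (ω (w + s • η) η - ω w η) := by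
    rw [intervalIntegral.integral_sub hint intervalIntegrable_const]
    rw [key w hw η hwη]
    simp
  rw [hsplit]
  have hbound : ∀ s ∈ Set.uIoc (0:ℝ) 1, ‖ω (w + s • η) η - ω w η‖ ≤ c * ‖η‖ := by
    intro s hs
    rw [Set.uIoc_of_le zero_le_one] at hs
    have hsIcc : s ∈ Icc (0:ℝ) 1 := ⟨le_of_lt hs.1, hs.2⟩
    have hb : w + s • η ∈ Metric.ball w ε' :=
      Metric.ball_subset_ball (min_le_right ε ε') (hmemball s hsIcc)
    have hlt := hball' _ hb
    calc ‖ω (w + s • η) η - ω w η‖ = ‖(ω (w + s • η) - ω w) η‖ := by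
          rw [ContinuousLinearMap.sub_apply]
      _ ≤ ‖ω (w + s • η) - ω w‖ * ‖η‖ := (ω (w + s • η) - ω w).le_opNorm η
      _ ≤ c * ‖η‖ := mul_le_mul_of_nonneg_right (le_of_lt hlt) (norm_nonneg η)
  have hfin := intervalIntegral.norm_integral_le_of_norm_le_const hbound
  simpa using hfin

/-- From `h` and a conjugate `v`, build a holomorphic function with real part `h`. -/
lemma differentiableOn_of_conj (U : Set (Fin m → ℂ)) (hUo : IsOpen U)
    (h v : (Fin m → ℂ) → ℝ)
    (Φ : (Fin m → ℂ) → (Fin m → ℂ) →L[ℝ] ℝ)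
    (hdiff : ∀ w ∈ U, HasFDerivAt h (Φ w) w)
    (hv : ∀ w ∈ U, HasFDerivAt v (-((Φ w).comp (smulICLM (Fin m → ℂ)))) w) :
    DifferentiableOn ℂ (fun w => (h w : ℂ) + (v w : ℂ) * Complex.I) U := by
  intro w hw
  obtain ⟨ω, hωdef⟩ : ∃ ω : (Fin m → ℂ) →L[ℝ] ℝ,
      ω = -((Φ w).comp (smulICLM (Fin m → ℂ))) := ⟨_, rfl⟩
  have hωapp : ∀ ξ, ω ξ = -(Φ w (Complex.I • ξ)) := by
    intro ξ; rw [hωdef]; rfl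
  obtain ⟨T, hTdef⟩ : ∃ T : (Fin m → ℂ) →L[ℝ] ℂ,
      T = (Complex.ofRealCLM.comp (Φ w)) + (ω.smulRight Complex.I) := ⟨_, rfl⟩
  have hTapp : ∀ x, T x = (Φ w x : ℂ) + (ω x : ℝ) • (Complex.I : ℂ) := by
    intro x; rw [hTdef]; rfl
  have hfd : HasFDerivAt (fun w' => (h w' : ℂ) + (v w' : ℂ) * Complex.I) T w := by
    have h1 : HasFDerivAt (fun w' => (h w' : ℂ)) (Complex.ofRealCLM.comp (Φ w)) w :=
      Complex.ofRealCLM.hasFDerivAt.comp w (hdiff w hw)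
    have h2 : HasFDerivAt (fun w' => (v w' : ℂ)) (Complex.ofRealCLM.comp ω) w := by
      rw [hωdef]
      exact Complex.ofRealCLM.hasFDerivAt.comp w (hv w hw)
    have h3 := h2.mul_const Complex.I
    have h4 := h1.add h3
    have heq : (Complex.ofRealCLM.comp (Φ w))
        + Complex.I • (Complex.ofRealCLM.comp ω) = T := by
      rw [hTdef]
      congr 1
      ext x
      simp [Complex.real_smul, mul_comm]
    rwa [heq] at h4
  have hTI : ∀ x, T (Complex.I • x) = Complex.I * T x := by
    intro x
    have hII : Complex.I • (Complex.I • x) = -x := by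
      rw [smul_smul, Complex.I_mul_I, neg_one_smul]
    have hω1 : ω (Complex.I • x) = Φ w x := by
      rw [hωapp, hII, map_neg, neg_neg]
    rw [hTapp, hTapp, hω1, hωapp]
    rw [Complex.real_smul, Complex.real_smul]
    push_cast
    linear_combination ((Φ w (Complex.I • x) : ℝ) : ℂ) * Complex.I_sq
  have hcast : ∀ (r : ℝ) (y : Fin m → ℂ), (r : ℝ) • y = ((r : ℂ)) • y := by
    intro r y
    rw [← Complex.coe_algebraMap, algebraMap_smul]
  have hTsmul : ∀ (c : ℂ) (x : Fin m → ℂ), T (c • x) = c * T x := by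
    intro c x
    have hdecomp : c • x = (c.re : ℝ) • x + (c.im : ℝ) • (Complex.I • x) := by
      rw [hcast, hcast, smul_smul, ← add_smul]
      congr 1
      exact (Complex.re_add_im c).symm
    calc T (c • x) = T ((c.re : ℝ) • x + (c.im : ℝ) • (Complex.I • x)) := by rw [← hdecomp]
      _ = (c.re : ℝ) • T x + (c.im : ℝ) • T (Complex.I • x) := by
          rw [T.map_add, T.map_smul, T.map_smul]
      _ = c * T x := by
          rw [hTI, Complex.real_smul, Complex.real_smul]
          conv_rhs => rw [← Complex.re_add_im c]
          ring
  obtain ⟨Tl, hTldef⟩ : ∃ Tl : (Fin m → ℂ) →ₗ[ℂ] ℂ, Tl =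
      { toFun := T, map_add' := T.map_add, map_smul' := fun c x => by simpa using hTsmul c x } :=
    ⟨_, rfl⟩
  obtain ⟨Lc, hLcdef⟩ : ∃ Lc : (Fin m → ℂ) →L[ℂ] ℂ,
      Lc = LinearMap.toContinuousLinearMap Tl := ⟨_, rfl⟩
  have hLcT : ∀ x, Lc x = T x := by
    intro x
    rw [hLcdef, LinearMap.coe_toContinuousLinearMap', hTldef]
    rfl
  have hfd' : HasFDerivAt (𝕜 := ℂ) (fun w' => (h w' : ℂ) + (v w' : ℂ) * Complex.I) Lc w := by
    rw [hasFDerivAt_iff_isLittleO_nhds_zero] at hfd ⊢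
    refine hfd.congr' (Filter.Eventually.of_forall fun η => ?_)
      (Filter.Eventually.of_forall fun _ => rfl)
    simp only [hLcT]
  exact hfd'.differentiableAt.differentiableWithinAt

/-- Existence of a holomorphic function with prescribed pluriharmonic real part on a
convex open set. -/
lemma exists_conjugate (U : Set (Fin m → ℂ)) (hUo : IsOpen U) (hUc : Convex ℝ U)
    (h : (Fin m → ℂ) → ℝ) (hsm : ContDiffOn ℝ (⊤ : ℕ∞) h U) (hph : Pluriharmonic h U) :
    ∃ f : (Fin m → ℂ) → ℂ, DifferentiableOn ℂ f U ∧ ∀ w ∈ U, (f w).re = h w := by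
  rcases U.eq_empty_or_nonempty with hUe | ⟨w₀, hw₀⟩
  · exact ⟨0, differentiableOn_const 0, fun w hw => absurd hw (by rw [hUe]; exact notMem_empty w)⟩
  obtain ⟨hdiff, hΦc, hΦd, hSc⟩ := smooth_package hUo hsm
  have hsymm : ∀ p ∈ U, ∀ x y, fderiv ℝ (fderiv ℝ h) p x y = fderiv ℝ (fderiv ℝ h) p y x :=
    fun p hp => sderiv_symm h hUo hdiff hΦd hp
  have hswap : ∀ p ∈ U, ∀ x y, fderiv ℝ (fderiv ℝ h) p x (Complex.I • y)
      = fderiv ℝ (fderiv ℝ h) p (Complex.I • x) y :=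
    fun p hp => sderiv_swapI h hUo hdiff hΦd hph hp
  obtain ⟨v, hvdef⟩ : ∃ v : (Fin m → ℂ) → ℝ,
      v = fun x => ∫ t in (0:ℝ)..1,
        -(fderiv ℝ h (w₀ + t • (x - w₀)) (Complex.I • (x - w₀))) := ⟨_, rfl⟩
  obtain ⟨ω, hωdef⟩ : ∃ ω : (Fin m → ℂ) → (Fin m → ℂ) →L[ℝ] ℝ,
      ω = fun p => -((fderiv ℝ h p).comp (smulICLM (Fin m → ℂ))) := ⟨_, rfl⟩
  have hωapp : ∀ p ξ, ω p ξ = -(fderiv ℝ h p (Complex.I • ξ)) := by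
    intro p ξ; rw [hωdef]; rfl
  have hωc : ContinuousOn ω U := by
    rw [hωdef]
    exact (hΦc.clm_comp continuousOn_const).neg
  have key : ∀ w ∈ U, ∀ η : Fin m → ℂ, w + η ∈ U →
      v (w + η) - v w = ∫ s in (0:ℝ)..1, ω (w + s • η) η := by
    intro w hw η hwη
    have hks := key_segment hUc (fderiv ℝ h) (fderiv ℝ (fderiv ℝ h)) hΦd hΦc hSc
      hsymm hswap hw₀ hw hwη
    rw [hvdef]
    simp only []
    rw [hks]
    apply intervalIntegral.integral_congr
    intro s hs
    simp only [hωapp]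
  have hv : ∀ w ∈ U, HasFDerivAt v (ω w) w :=
    fun w hw => hasFDerivAt_of_segment U hUo ω hωc v key hw
  refine ⟨fun w => (h w : ℂ) + (v w : ℂ) * Complex.I, ?_, fun w hw => by simp⟩
  apply differentiableOn_of_conj U hUo h v (fderiv ℝ h) hdiff
  intro w hw
  have := hv w hw
  rwa [hωdef] at this

end Conjugate2

section MainSetup

open Complex Set Filter Topology

variable {n m : ℕ}

/-- The basis direction in the `i`-th `z`-coordinate. -/
noncomputable def eVecP (n m : ℕ) (i : Fin n) : (Fin n → ℂ) × (Fin m → ℂ) :=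
  (Pi.single i 1, 0)

lemma update_line (z : Fin n → ℂ) (w : Fin m → ℂ) (i : Fin n) (ξ : ℂ) :
    (Function.update z i 0, w) + ξ • eVecP n m i = (Function.update z i ξ, w) := by
  have h1 : (Function.update z i 0) + ξ • (Pi.single i 1 : Fin n → ℂ)
      = Function.update z i ξ := by
    funext j
    by_cases hj : j = i
    · subst hj
      simp
    · simp [Function.update_of_ne hj, Pi.single_apply, hj]
  rw [eVecP, Prod.ext_iff]
  constructor
  · exact h1
  · simp

lemma M_open {U : Set (Fin m → ℂ)} (hUopen : IsOpen U)
    {M : Set ((Fin n → ℂ) × (Fin m → ℂ))}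
    (hM : M = {p : (Fin n → ℂ) × (Fin m → ℂ) | (∀ i, p.1 i ≠ 0) ∧ p.2 ∈ U}) :
    IsOpen M := by
  rw [hM]
  have heq : {p : (Fin n → ℂ) × (Fin m → ℂ) | (∀ i, p.1 i ≠ 0) ∧ p.2 ∈ U}
      = (⋂ i, {p : (Fin n → ℂ) × (Fin m → ℂ) | p.1 i ≠ 0}) ∩ (Prod.snd ⁻¹' U) := by
    ext p
    simp [Set.mem_iInter]
  rw [heq]
  refine IsOpen.inter (isOpen_iInter_of_finite fun i => ?_) (hUopen.preimage continuous_snd)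
  have : {p : (Fin n → ℂ) × (Fin m → ℂ) | p.1 i ≠ 0}
      = (fun p : (Fin n → ℂ) × (Fin m → ℂ) => p.1 i) ⁻¹' {(0:ℂ)}ᶜ := rfl
  rw [this]
  exact isOpen_compl_singleton.preimage ((continuous_apply i).comp continuous_fst)

lemma M_preconnected {U : Set (Fin m → ℂ)} (hUconv : Convex ℝ U)
    {M : Set ((Fin n → ℂ) × (Fin m → ℂ))}
    (hM : M = {p : (Fin n → ℂ) × (Fin m → ℂ) | (∀ i, p.1 i ≠ 0) ∧ p.2 ∈ U}) :
    IsPreconnected M := by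
  rw [hM]
  have heq : {p : (Fin n → ℂ) × (Fin m → ℂ) | (∀ i, p.1 i ≠ 0) ∧ p.2 ∈ U}
      = {z : Fin n → ℂ | ∀ i, z i ≠ 0} ×ˢ U := rfl
  rw [heq]
  apply IsPreconnected.prod
  · have h2 : {z : Fin n → ℂ | ∀ i, z i ≠ 0} = Set.pi univ (fun _ => {(0:ℂ)}ᶜ) := by
      ext z
      simp [Set.mem_pi]
    rw [h2]
    refine isPreconnected_univ_pi fun i => ?_
    exact (isPathConnected_compl_singleton_of_one_lt_rank
      (by rw [rank_real_complex]; norm_num) (0:ℂ)).isConnected.isPreconnected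
  · exact hUconv.isPreconnected

end MainSetup

section CoordMain

open Complex Set Filter Topology

variable {n m : ℕ}

set_option maxHeartbeats 1000000 in
/-- Main one-coordinate computation: radial form of `g` in the `i`-th coordinate, and
vanishing of the angular derivative. -/
lemma coordinate_main {U : Set (Fin m → ℂ)} (hUopen : IsOpen U)
    {M : Set ((Fin n → ℂ) × (Fin m → ℂ))}
    (hM : M = {p : (Fin n → ℂ) × (Fin m → ℂ) | (∀ i, p.1 i ≠ 0) ∧ p.2 ∈ U})
    (g : (Fin n → ℂ) × (Fin m → ℂ) → ℝ)
    (hsmooth : ContDiffOn ℝ (⊤ : ℕ∞) g M)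
    (hph : Pluriharmonic g M)
    (hinv : ∀ θ : Fin n → ℝ, ∀ z : Fin n → ℂ, ∀ w : Fin m → ℂ, (z, w) ∈ M →
      g (fun i => Complex.exp (Complex.I * (θ i : ℂ)) * z i, w) = g (z, w))
    {z : Fin n → ℂ} {w : Fin m → ℂ} (hzw : (z, w) ∈ M) (i : Fin n) :
    g (z, w) = g (Function.update z i 1, w)
      + fderiv ℝ g (Function.update z i 1, w) (eVecP n m i) * Real.log ‖z i‖
    ∧ fderiv ℝ g (z, w) ((Complex.I * z i) • eVecP n m i) = 0 := by
  have hMopen : IsOpen M := M_open hUopen hM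
  obtain ⟨hgdiff, _, hgΦd, _⟩ := smooth_package hMopen hsmooth
  have hwU : w ∈ U := by rw [hM] at hzw; exact hzw.2
  have hznz : ∀ j, z j ≠ 0 := by rw [hM] at hzw; exact hzw.1
  obtain ⟨a, hadef⟩ : ∃ a : (Fin n → ℂ) × (Fin m → ℂ), a = (Function.update z i 0, w) :=
    ⟨_, rfl⟩
  obtain ⟨b, hbdef⟩ : ∃ b : (Fin n → ℂ) × (Fin m → ℂ), b = eVecP n m i := ⟨_, rfl⟩
  have hline : ∀ ξ : ℂ, a + ξ • b = (Function.update z i ξ, w) := by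
    intro ξ
    rw [hadef, hbdef, update_line]
  have hmem : ∀ ξ : ℂ, ξ ≠ 0 → a + ξ • b ∈ M := by
    intro ξ hξ
    rw [hline, hM]
    refine ⟨fun j => ?_, hwU⟩
    by_cases hj : j = i
    · subst hj; simpa using hξ
    · simpa [Function.update_of_ne hj] using hznz j
  obtain ⟨u, hudef⟩ : ∃ u : ℂ → ℝ, u = fun ξ : ℂ => g (a + ξ • b) := ⟨_, rfl⟩
  -- smoothness of u away from 0
  have hAcd : ContDiff ℝ (⊤ : ℕ∞) (fun ξ : ℂ => a + ξ • b) :=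
    contDiff_const.add (lineCLM b).contDiff
  have hucd : ContDiffOn ℝ (⊤ : ℕ∞) u {(0:ℂ)}ᶜ := by
    rw [hudef]
    exact hsmooth.comp hAcd.contDiffOn (fun ξ hξ => hmem ξ hξ)
  obtain ⟨hu, _, hu2, _⟩ := smooth_package (isOpen_compl_singleton (x := (0:ℂ))) hucd
  have hu' : ∀ ξ : ℂ, ξ ≠ 0 → HasFDerivAt u (fderiv ℝ u ξ) ξ := fun ξ hξ => hu ξ hξ
  have hu2' : ∀ ξ : ℂ, ξ ≠ 0 → HasFDerivAt (fderiv ℝ u) (fderiv ℝ (fderiv ℝ u) ξ) ξ :=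
    fun ξ hξ => hu2 ξ hξ
  -- pluriharmonicity of u
  have huph : Pluriharmonic u {(0:ℂ)}ᶜ := by
    intro α β ζ hζ
    have hAmove : ∀ ξ : ℂ, a + (α + ξ * β) • b = (a + α • b) + ξ • (β • b) := by
      intro ξ
      rw [add_smul, mul_smul, add_assoc]
    have hmem2 : (a + α • b) + ζ • (β • b) ∈ M := by
      rw [← hAmove]
      exact hmem _ hζ
    have := hph (a + α • b) (β • b) ζ hmem2
    have hfeq : (fun ξ : ℂ => u (α + ξ • β)) = fun ξ : ℂ => g ((a + α • b) + ξ • (β • b)) := by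
      funext ξ
      rw [hudef]
      simp only [smul_eq_mul]
      rw [hAmove]
    rw [hfeq]
    exact this
  -- Laplace equation for u
  have hulap : ∀ ξ : ℂ, ξ ≠ 0 → fderiv ℝ (fderiv ℝ u) ξ 1 1
      + fderiv ℝ (fderiv ℝ u) ξ Complex.I Complex.I = 0 := by
    intro ξ hξ
    have hmemξ : ξ ∈ ({(0:ℂ)}ᶜ : Set ℂ) := hξ
    have h1 := planeLaplacian_line (E := ℂ) u (isOpen_compl_singleton) hu hu2 hmemξ 1
    have h2 := huph ξ 1 0 (by simpa using hξ)
    have h3 : (fun ζ : ℂ => u (ξ + ζ • 1)) = fun ζ : ℂ => u (ξ + ζ) := by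
      funext ζ; rw [smul_eq_mul, mul_one]
    have hIone : Complex.I • (1:ℂ) = Complex.I := by rw [smul_eq_mul, mul_one]
    rw [h3] at h1 h2
    rw [hIone] at h1
    exact h1.symm.trans h2
  -- rotation invariance of u
  have hurot : ∀ t : ℝ, ∀ ξ : ℂ, ξ ≠ 0 → u (Complex.exp (Complex.I * t) * ξ) = u ξ := by
    intro t ξ hξ
    have hmemu : (Function.update z i ξ, w) ∈ M := by rw [← hline]; exact hmem ξ hξ
    have h1 := hinv (fun j => if j = i then t else 0) (Function.update z i ξ) w hmemu
    have h2 : (fun j => Complex.exp (Complex.I * ((if j = i then t else 0 : ℝ) : ℂ))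
        * (Function.update z i ξ) j) = Function.update z i (Complex.exp (Complex.I * t) * ξ) := by
      funext j
      by_cases hj : j = i
      · subst hj
        simp
      · simp [Function.update_of_ne hj, hj]
    rw [h2] at h1
    rw [hudef]
    simp only []
    rw [hline, hline]
    exact h1
  -- apply the one-variable results
  have hzi : z i ≠ 0 := hznz i
  have hmain := one_var u hu' hu2' hulap hurot (z i) hzi
  have hkill := rot_kill u hu' hurot (z i) hzi
  -- translate back
  have hself : a + (z i) • b = (z, w) := by
    rw [hline, Function.update_eq_self]
  have hu_zi : u (z i) = g (z, w) := by rw [hudef]; simp only []; rw [hself]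
  have hu_1 : u 1 = g (Function.update z i 1, w) := by rw [hudef]; simp only []; rw [hline]
  have hfder1 : fderiv ℝ u 1 = (fderiv ℝ g (Function.update z i 1, w)).comp (lineCLM b) := by
    have h1 : a + (1:ℂ) • b ∈ M := hmem 1 one_ne_zero
    have h2 := (hasFDerivAt_line g hgdiff a b h1).fderiv
    rw [hudef]
    rw [h2, hline]
  have hfderz : fderiv ℝ u (z i) = (fderiv ℝ g (z, w)).comp (lineCLM b) := by
    have h1 : a + (z i) • b ∈ M := hmem _ hzi
    have h2 := (hasFDerivAt_line g hgdiff a b h1).fderiv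
    rw [hudef]
    rw [h2, hself]
  constructor
  · rw [← hu_zi, ← hu_1, hmain]
    congr 2
    rw [hfder1]
    simp only [ContinuousLinearMap.coe_comp', Function.comp_apply, lineCLM_apply, one_smul]
    rw [hbdef]
  · have := hkill
    rw [hfderz] at this
    simpa [hbdef] using this

end CoordMain

section LamConst

open Complex Set Filter Topology

variable {n m : ℕ}

noncomputable def coordCLM (n m : ℕ) (i : Fin n) :
    ((Fin n → ℂ) × (Fin m → ℂ)) →L[ℝ] ℂ :=
  ((ContinuousLinearMap.proj i : (Fin n → ℂ) →L[ℂ] ℂ).restrictScalars ℝ).comp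
    (ContinuousLinearMap.fst ℝ (Fin n → ℂ) (Fin m → ℂ))

@[simp] lemma coordCLM_apply (i : Fin n) (p : (Fin n → ℂ) × (Fin m → ℂ)) :
    coordCLM n m i p = p.1 i := rfl

noncomputable def LzCLM (n m : ℕ) (i : Fin n) :
    ((Fin n → ℂ) × (Fin m → ℂ)) →L[ℝ] ((Fin n → ℂ) × (Fin m → ℂ)) :=
  ((ContinuousLinearMap.toSpanSingleton ℂ (eVecP n m i)).restrictScalars ℝ).comp (coordCLM n m i)

@[simp] lemma LzCLM_apply (i : Fin n) (p : (Fin n → ℂ) × (Fin m → ℂ)) :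
    LzCLM n m i p = (p.1 i) • eVecP n m i := rfl

noncomputable def LICLM (n m : ℕ) (i : Fin n) :
    ((Fin n → ℂ) × (Fin m → ℂ)) →L[ℝ] ((Fin n → ℂ) × (Fin m → ℂ)) :=
  ((ContinuousLinearMap.toSpanSingleton ℂ (eVecP n m i)).restrictScalars ℝ).comp
    (JmulI.comp (coordCLM n m i))

lemma LICLM_apply (i : Fin n) (p : (Fin n → ℂ) × (Fin m → ℂ)) :
    LICLM n m i p = (Complex.I * p.1 i) • eVecP n m i := by
  show (JmulI (p.1 i)) • eVecP n m i = _
  rw [JmulI_apply]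

lemma lam_const {U : Set (Fin m → ℂ)} (hUopen : IsOpen U) (hUconv : Convex ℝ U)
    {M : Set ((Fin n → ℂ) × (Fin m → ℂ))}
    (hM : M = {p : (Fin n → ℂ) × (Fin m → ℂ) | (∀ i, p.1 i ≠ 0) ∧ p.2 ∈ U})
    (g : (Fin n → ℂ) × (Fin m → ℂ) → ℝ)
    (hsmooth : ContDiffOn ℝ (⊤ : ℕ∞) g M)
    (hph : Pluriharmonic g M)
    (hinv : ∀ θ : Fin n → ℝ, ∀ z : Fin n → ℂ, ∀ w : Fin m → ℂ, (z, w) ∈ M →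
      g (fun i => Complex.exp (Complex.I * (θ i : ℂ)) * z i, w) = g (z, w))
    (i : Fin n) : ∀ p ∈ M, ∀ q ∈ M,
    fderiv ℝ g p ((p.1 i) • eVecP n m i) = fderiv ℝ g q ((q.1 i) • eVecP n m i) := by
  have hMopen : IsOpen M := M_open hUopen hM
  have hMconn : IsPreconnected M := M_preconnected hUconv hM
  obtain ⟨hgdiff, _, hgΦd, _⟩ := smooth_package hMopen hsmooth
  have hkillg : ∀ p ∈ M, fderiv ℝ g p ((Complex.I * p.1 i) • eVecP n m i) = 0 := by
    rintro ⟨z, w⟩ hp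
    exact (coordinate_main hUopen hM g hsmooth hph hinv hp i).2
  have hMR : ∀ p ∈ M, ∀ d,
      fderiv ℝ (fderiv ℝ g) p d (LICLM n m i p) + fderiv ℝ g p (LICLM n m i d) = 0 := by
    intro p hp d
    have h1 : HasFDerivAt (fun q => fderiv ℝ g q (LICLM n m i q))
        ((fderiv ℝ g p).comp (LICLM n m i)
          + (fderiv ℝ (fderiv ℝ g) p).flip (LICLM n m i p)) p :=
      (hgΦd p hp).clm_apply (LICLM n m i).hasFDerivAt
    have hev : (fun q => fderiv ℝ g q (LICLM n m i q)) =ᶠ[𝓝 p] (fun _ => (0:ℝ)) := by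
      filter_upwards [hMopen.mem_nhds hp] with q hq
      rw [LICLM_apply]
      exact hkillg q hq
    have h2 : HasFDerivAt (fun q => fderiv ℝ g q (LICLM n m i q)) (0 : _ →L[ℝ] ℝ) p :=
      (hev.hasFDerivAt_iff).2 (hasFDerivAt_const 0 p)
    have h3 := h1.unique h2
    have h4 := congrFun (congrArg DFunLike.coe h3) d
    simp only [ContinuousLinearMap.add_apply, ContinuousLinearMap.coe_comp',
      Function.comp_apply, ContinuousLinearMap.flip_apply,
      ContinuousLinearMap.zero_apply] at h4
    linarith
  have hlamder : ∀ p ∈ M, HasFDerivAt (fun q => fderiv ℝ g q (LzCLM n m i q))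
      (0 : _ →L[ℝ] ℝ) p := by
    intro p hp
    have h1 : HasFDerivAt (fun q => fderiv ℝ g q (LzCLM n m i q))
        ((fderiv ℝ g p).comp (LzCLM n m i)
          + (fderiv ℝ (fderiv ℝ g) p).flip (LzCLM n m i p)) p :=
      (hgΦd p hp).clm_apply (LzCLM n m i).hasFDerivAt
    have hzero : ((fderiv ℝ g p).comp (LzCLM n m i)
        + (fderiv ℝ (fderiv ℝ g) p).flip (LzCLM n m i p)) = 0 := by
      refine ContinuousLinearMap.ext fun d => ?_
      have hMRd := hMR p hp (Complex.I • d)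
      have e1 : LICLM n m i (Complex.I • d) = -(LzCLM n m i d) := by
        rw [LICLM_apply, LzCLM_apply]
        have hfst : (Complex.I • d).1 i = Complex.I * d.1 i := rfl
        rw [hfst, ← mul_assoc, Complex.I_mul_I, neg_one_mul, neg_smul]
      have e2 : LICLM n m i p = Complex.I • (LzCLM n m i p) := by
        rw [LICLM_apply, LzCLM_apply, mul_smul]
      have e3 := sderiv_polarized g hMopen hgdiff hgΦd hph hp d (LzCLM n m i p)
      rw [e1, e2, map_neg] at hMRd
      simp only [ContinuousLinearMap.add_apply, ContinuousLinearMap.coe_comp',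
        Function.comp_apply, ContinuousLinearMap.flip_apply,
        ContinuousLinearMap.zero_apply]
      linarith
    rw [hzero] at h1
    exact h1
  intro p hp q hq
  exact const_of_hasFDerivAt_zero hMopen hMconn hlamder p hp q hq

end LamConst

open Complex Set Filter Topology

set_option maxHeartbeats 1000000 in
/-- Theorem 2.2: a `T`-invariant real-valued pluriharmonic function on
`M = (ℂ*)ⁿ × U` is of the form `Σ λᵢ Log |zᵢ|² + Re f(w)` with `f` holomorphic on `U`. -/
theorem pluriharmonic_torus_invariant {n m : ℕ}
    (U : Set (Fin m → ℂ)) (hUopen : IsOpen U) (hUconv : Convex ℝ U)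
    (M : Set ((Fin n → ℂ) × (Fin m → ℂ)))
    (hM : M = {p : (Fin n → ℂ) × (Fin m → ℂ) | (∀ i, p.1 i ≠ 0) ∧ p.2 ∈ U})
    (g : (Fin n → ℂ) × (Fin m → ℂ) → ℝ)
    (hsmooth : ContDiffOn ℝ (⊤ : ℕ∞) g M)
    (hph : Pluriharmonic g M)
    (hinv : ∀ θ : Fin n → ℝ, ∀ z : Fin n → ℂ, ∀ w : Fin m → ℂ, (z, w) ∈ M →
      g (fun i => Complex.exp (Complex.I * (θ i : ℂ)) * z i, w) = g (z, w)) :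
    ∃ (lam : Fin n → ℝ) (f : (Fin m → ℂ) → ℂ), DifferentiableOn ℂ f U ∧
      ∀ z : Fin n → ℂ, ∀ w : Fin m → ℂ, (z, w) ∈ M →
        g (z, w) = (∑ i, lam i * Real.log (‖z i‖ ^ 2)) + (f w).re := by
  classical
  rcases U.eq_empty_or_nonempty with hUe | ⟨w₀, hw₀⟩
  · refine ⟨0, fun _ => 0, differentiableOn_const 0, ?_⟩
    intro z w hzw
    exfalso
    rw [hM] at hzw
    rw [hUe] at hzw
    exact absurd hzw.2 (notMem_empty w)
  have hbase : (((fun _ => (1:ℂ)) : Fin n → ℂ), w₀) ∈ M := by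
    rw [hM]; exact ⟨fun i => one_ne_zero, hw₀⟩
  obtain ⟨lamC, hlamCdef⟩ : ∃ lamC : Fin n → ℝ,
      lamC = fun i => fderiv ℝ g (((fun _ => (1:ℂ)) : Fin n → ℂ), w₀) (eVecP n m i) := ⟨_, rfl⟩
  obtain ⟨h, hhdef⟩ : ∃ h : (Fin m → ℂ) → ℝ,
      h = fun w => g (((fun _ => (1:ℂ)) : Fin n → ℂ), w) := ⟨_, rfl⟩
  have hsm_h : ContDiffOn ℝ (⊤ : ℕ∞) h U := by
    rw [hhdef]
    have hcd : ContDiff ℝ (⊤ : ℕ∞) (fun w : Fin m → ℂ => (((fun _ => (1:ℂ)) : Fin n → ℂ), w)) :=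
      contDiff_const.prodMk contDiff_id
    exact hsmooth.comp hcd.contDiffOn
      (fun w hw => by rw [hM]; exact ⟨fun i => one_ne_zero, hw⟩)
  have hph_h : Pluriharmonic h U := by
    intro α β ζ hζ
    have hmemζ : (((fun _ => (1:ℂ)) : Fin n → ℂ), α) + ζ • ((0 : Fin n → ℂ), β) ∈ M := by
      rw [hM]
      constructor
      · intro i
        simp
      · simpa using hζ
    have hres := hph (((fun _ => (1:ℂ)) : Fin n → ℂ), α) ((0 : Fin n → ℂ), β) ζ hmemζ
    have hfeq : (fun ξ : ℂ => h (α + ξ • β))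
        = fun ξ : ℂ => g ((((fun _ => (1:ℂ)) : Fin n → ℂ), α) + ξ • ((0 : Fin n → ℂ), β)) := by
      funext ξ
      rw [hhdef]
      simp only []
      congr 1
      rw [Prod.ext_iff]
      constructor
      · funext j
        simp
      · rfl
    rw [hfeq]
    exact hres
  obtain ⟨f, hfdiff, hfre⟩ := exists_conjugate U hUopen hUconv h hsm_h hph_h
  refine ⟨fun i => lamC i / 2, f, hfdiff, ?_⟩
  intro z w hzw
  have hwU : w ∈ U := by rw [hM] at hzw; exact hzw.2
  have hznz : ∀ j, z j ≠ 0 := by rw [hM] at hzw; exact hzw.1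
  have hpeel : ∀ s : Finset (Fin n),
      g (z, w) = g ((fun j => if j ∈ s then 1 else z j), w)
        + ∑ i ∈ s, lamC i * Real.log ‖z i‖ := by
    intro s
    induction s using Finset.induction_on with
    | empty => simp
    | @insert a s ha ih =>
      have hz'M : ((fun j => if j ∈ s then (1:ℂ) else z j), w) ∈ M := by
        rw [hM]
        refine ⟨fun j => ?_, hwU⟩
        by_cases hj : j ∈ s <;> simp [hj, hznz j]
      have hstep := (coordinate_main hUopen hM g hsmooth hph hinv hz'M a).1
      have hupd : Function.update (fun j => if j ∈ s then (1:ℂ) else z j) a 1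
          = fun j => if j ∈ insert a s then (1:ℂ) else z j := by
        funext j
        by_cases hj : j = a
        · subst hj; simp
        · simp [Function.update_of_ne hj, hj, Finset.mem_insert]
      have hqM : (Function.update (fun j => if j ∈ s then (1:ℂ) else z j) a 1, w) ∈ M := by
        rw [hM]
        refine ⟨fun j => ?_, hwU⟩
        by_cases hj : j = a
        · subst hj; simp
        · show Function.update (fun j => if j ∈ s then (1:ℂ) else z j) a 1 j ≠ 0
          rw [Function.update_of_ne hj]
          by_cases hjs : j ∈ s <;> simp [hjs, hznz j]
      have hcoef : fderiv ℝ g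
          (Function.update (fun j => if j ∈ s then (1:ℂ) else z j) a 1, w)
          (eVecP n m a) = lamC a := by
        have hc := lam_const hUopen hUconv hM g hsmooth hph hinv a _ hqM _ hbase
        have hc' : fderiv ℝ g (Function.update (fun j => if j ∈ s then (1:ℂ) else z j) a 1, w)
            (eVecP n m a)
            = fderiv ℝ g (((fun _ => (1:ℂ)) : Fin n → ℂ), w₀) (eVecP n m a) := by
          simpa using hc
        rw [hc', hlamCdef]
      rw [ih, hstep, hcoef, hupd, Finset.sum_insert ha]
      simp only [if_neg ha]
      ring
  have huniv := hpeel Finset.univ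
  have hif : (fun j => if j ∈ Finset.univ then (1:ℂ) else z j) = fun _ => (1:ℂ) := by
    funext j; simp
  rw [hif] at huniv
  have hre : (f w).re = h w := hfre w hwU
  rw [huniv, hre]
  simp only [hhdef]
  rw [add_comm]
  congr 1
  apply Finset.sum_congr rfl
  intro i _
  rw [Real.log_pow]
  push_cast
  ring
end

section
/- Let U ⊆ ℂᵐ be open and convex and let M = {(z, w) ∈ ℂⁿ × ℂᵐ : zᵢ ≠ 0 for all i, and w ∈ U}. Suppose g : M → ℝ is smooth, pluriharmonic, and T-invariant, and suppose that for every j ∈ {1, …, n} and every (z, w) ∈ M the derivative at r = 1 of the function r ↦ g((z₁, …, z_{j−1}, r·zⱼ, z_{j+1}, …, zₙ), w) (for real r > 0) vanishes. Then there exists a holomorphic function f : U → ℂ such that g(z, w) = Re f(w) for all (z, w) ∈ M. (This is Theorem 3.1 in equivalent form: if two T-invariant strictly plurisubharmonic potentials determine the same Kähler form and the same moment map, their difference g satisfies exactly these hypotheses, and the conclusion says the difference is the real part of a holomorphic function of w.) -/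
open Set Metric MeasureTheory intervalIntegral Interval

set_option maxHeartbeats 1000000
set_option synthInstance.maxHeartbeats 400000

theorem poincare_primitive {E F : Type*} [NormedAddCommGroup E] [NormedSpace ℝ E]
    [ProperSpace E] [NormedAddCommGroup F] [NormedSpace ℝ F] [CompleteSpace F]
    {U : Set E} (hU : IsOpen U) (hconv : Convex ℝ U) {a : E} (ha : a ∈ U)
    {ω : E → E →L[ℝ] F} {ω' : E → E →L[ℝ] E →L[ℝ] F}
    (hω : ∀ p ∈ U, HasFDerivAt ω (ω' p) p)
    (hωc : ContinuousOn ω U) (hω'c : ContinuousOn ω' U)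
    (hsym : ∀ p ∈ U, ∀ u v, ω' p u v = ω' p v u)
    {w : E} (hw : w ∈ U) :
    HasFDerivAt (fun x => ∫ t in (0:ℝ)..1, ω (a + t • (x - a)) (x - a)) (ω w) w := by
  obtain ⟨ε, εpos, hball⟩ : ∃ ε > 0, closedBall w ε ⊆ U := by
    rcases Metric.isOpen_iff.1 hU w hw with ⟨δ, δpos, hδ⟩
    exact ⟨δ/2, by positivity, (closedBall_subset_ball (by linarith)).trans hδ⟩
  set γ : E → ℝ → E := fun x t => a + t • (x - a) with hγdef
  have hseg : ∀ t ∈ Icc (0:ℝ) 1, ∀ x ∈ closedBall w ε, γ x t ∈ U := by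
    intro t ht x hx
    have hx' : x ∈ U := hball hx
    have h2 := hconv ha hx' (by linarith [ht.2] : (0:ℝ) ≤ 1 - t) ht.1 (by ring)
    have : γ x t = (1 - t) • a + t • x := by
      simp only [hγdef, smul_sub, sub_smul, one_smul]; abel
    rw [this]; exact h2
  have hKc : IsCompact ((fun q : ℝ × E => a + q.1 • (q.2 - a)) ''
      (Icc (0:ℝ) 1 ×ˢ closedBall w ε)) := by
    apply (isCompact_Icc.prod (isCompact_closedBall w ε)).image
    continuity
  set K := (fun q : ℝ × E => a + q.1 • (q.2 - a)) '' (Icc (0:ℝ) 1 ×ˢ closedBall w ε) with hKdef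
  have hKU : K ⊆ U := by
    rintro _ ⟨⟨t, x⟩, ⟨ht, hx⟩, rfl⟩
    exact hseg t ht x hx
  have hmemK : ∀ t ∈ Icc (0:ℝ) 1, ∀ x ∈ closedBall w ε, γ x t ∈ K := by
    intro t ht x hx
    exact ⟨(t, x), ⟨ht, hx⟩, rfl⟩
  obtain ⟨C₁, hC₁⟩ := hKc.exists_bound_of_continuousOn (hωc.mono hKU)
  obtain ⟨C₂, hC₂⟩ := hKc.exists_bound_of_continuousOn (f := ω') (hω'c.mono hKU)
  have hC₁0 : 0 ≤ C₁ := le_trans (norm_nonneg _) (hC₁ _ (hmemK 0 (by norm_num) w (mem_closedBall_self εpos.le)))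
  have hC₂0 : 0 ≤ C₂ := le_trans (norm_nonneg _) (hC₂ _ (hmemK 0 (by norm_num) w (mem_closedBall_self εpos.le)))
  set F' : E → ℝ → E →L[ℝ] F := fun x t => ω (γ x t) + t • ((ω' (γ x t)).flip (x - a)) with hF'def
  have hIoc : Ι (0:ℝ) 1 = Ioc (0:ℝ) 1 := uIoc_of_le zero_le_one
  have hγcont : ∀ x, Continuous (fun t => γ x t) := by
    intro x; exact continuous_const.add (continuous_id.smul continuous_const)
  -- continuity of t ↦ F x t on Icc for x ∈ closedBall
  have hFcont : ∀ x ∈ closedBall w ε, ContinuousOn (fun t => ω (γ x t) (x - a)) (Icc (0:ℝ) 1) := by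
    intro x hx
    have h1 : ContinuousOn (fun t => ω (γ x t)) (Icc (0:ℝ) 1) :=
      hωc.comp (hγcont x).continuousOn (fun t ht => hseg t ht x hx)
    exact (ContinuousLinearMap.apply ℝ F (x - a)).continuous.comp_continuousOn h1
  have hF'cont : ∀ x ∈ closedBall w ε, ContinuousOn (fun t => F' x t) (Icc (0:ℝ) 1) := by
    intro x hx
    have h1 : ContinuousOn (fun t => ω (γ x t)) (Icc (0:ℝ) 1) :=
      hωc.comp (hγcont x).continuousOn (fun t ht => hseg t ht x hx)
    have h2 : ContinuousOn (fun t => ω' (γ x t)) (Icc (0:ℝ) 1) :=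
      hω'c.comp (hγcont x).continuousOn (fun t ht => hseg t ht x hx)
    have h3 : ContinuousOn (fun t => (ω' (γ x t)).flip (x - a)) (Icc (0:ℝ) 1) := by
      have hflip : Continuous (fun T : E →L[ℝ] E →L[ℝ] F => T.flip (x - a)) :=
        ((ContinuousLinearMap.apply ℝ (E →L[ℝ] F) (x-a)).comp
          (ContinuousLinearMap.flipₗᵢ ℝ E E F).toLinearIsometry.toContinuousLinearMap).continuous
      exact hflip.comp_continuousOn h2
    exact h1.add (continuousOn_id.smul h3)
  -- derivative in x
  have hdiff : ∀ t ∈ Ι (0:ℝ) 1, ∀ x ∈ ball w ε,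
      HasFDerivAt (fun x' => ω (γ x' t) (x' - a)) (F' x t) x := by
    intro t ht x hx
    rw [hIoc] at ht
    have ht' : t ∈ Icc (0:ℝ) 1 := Ioc_subset_Icc_self ht
    have hx' : x ∈ closedBall w ε := ball_subset_closedBall hx
    have hφ : HasFDerivAt (fun x' => γ x' t) (t • ContinuousLinearMap.id ℝ E) x := by
      have : HasFDerivAt (fun x' : E => x' - a) (ContinuousLinearMap.id ℝ E) x :=
        (hasFDerivAt_id x).sub_const a
      simpa [hγdef] using (this.const_smul t).const_add a
    have hc : HasFDerivAt (fun x' => ω (γ x' t))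
        ((ω' (γ x t)).comp (t • ContinuousLinearMap.id ℝ E)) x :=
      (hω _ (hseg t ht' x hx')).comp x hφ
    have hu : HasFDerivAt (fun x' : E => x' - a) (ContinuousLinearMap.id ℝ E) x :=
      (hasFDerivAt_id x).sub_const a
    have := hc.clm_apply hu
    convert this using 1
    ext h
    simp [hF'def, ContinuousLinearMap.smul_apply, ContinuousLinearMap.flip_apply,
      ContinuousLinearMap.comp_apply, _root_.map_smul]
  -- bound
  set R : ℝ := ‖w - a‖ + ε with hRdef
  have hbound : ∀ t ∈ Ι (0:ℝ) 1, ∀ x ∈ ball w ε, ‖F' x t‖ ≤ C₁ + C₂ * R := by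
    intro t ht x hx
    rw [hIoc] at ht
    have ht' : t ∈ Icc (0:ℝ) 1 := Ioc_subset_Icc_self ht
    have hx' : x ∈ closedBall w ε := ball_subset_closedBall hx
    have hxa : ‖x - a‖ ≤ R := by
      have : ‖x - a‖ ≤ ‖x - w‖ + ‖w - a‖ := norm_sub_le_norm_sub_add_norm_sub x w a
      have hxw : ‖x - w‖ ≤ ε := by simpa [dist_eq_norm] using hx'
      rw [hRdef]; linarith
    have h1 : ‖ω (γ x t)‖ ≤ C₁ := hC₁ _ (hmemK t ht' x hx')
    have h2 : ‖(ω' (γ x t)).flip (x - a)‖ ≤ C₂ * R := by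
      calc ‖(ω' (γ x t)).flip (x - a)‖ ≤ ‖(ω' (γ x t)).flip‖ * ‖x - a‖ :=
            ContinuousLinearMap.le_opNorm _ _
        _ ≤ C₂ * R := by
            rw [ContinuousLinearMap.opNorm_flip]
            exact mul_le_mul (hC₂ _ (hmemK t ht' x hx')) hxa (norm_nonneg _) hC₂0
    calc ‖F' x t‖ ≤ ‖ω (γ x t)‖ + ‖t • ((ω' (γ x t)).flip (x - a))‖ := norm_add_le _ _
      _ ≤ C₁ + C₂ * R := by
          have h3 : ‖t • ((ω' (γ x t)).flip (x - a))‖ ≤ ‖(ω' (γ x t)).flip (x - a)‖ := by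
            refine (norm_smul_le (α := ℝ) (β := E →L[ℝ] F) t _).trans ?_
            have ht1 : ‖t‖ ≤ 1 := by rw [Real.norm_eq_abs, abs_of_pos ht.1]; exact ht.2
            nlinarith [norm_nonneg ((ω' (γ x t)).flip (x - a))]
          linarith
  have hIccIoc : Ι (0:ℝ) 1 ⊆ Icc (0:ℝ) 1 := by rw [hIoc]; exact Ioc_subset_Icc_self
  have hmeasIoc : MeasurableSet (Ι (0:ℝ) 1) := by rw [hIoc]; exact measurableSet_Ioc
  have main := intervalIntegral.hasFDerivAt_integral_of_dominated_of_fderiv_le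
    (𝕜 := ℝ) (F := fun x t => ω (γ x t) (x - a)) (F' := F') (x₀ := w) (μ := volume)
    (a := 0) (b := 1) (bound := fun _ => C₁ + C₂ * R) (ball_mem_nhds w εpos)
    (by
      filter_upwards [ball_mem_nhds w εpos] with x hx
      exact ((hFcont x (ball_subset_closedBall hx)).mono hIccIoc).aestronglyMeasurable hmeasIoc)
    (by
      apply ContinuousOn.intervalIntegrable
      rw [uIcc_of_le zero_le_one]
      exact hFcont w (mem_closedBall_self εpos.le))
    (((hF'cont w (mem_closedBall_self εpos.le)).mono hIccIoc).aestronglyMeasurable hmeasIoc)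
    (Filter.Eventually.of_forall hbound)
    intervalIntegrable_const
    (Filter.Eventually.of_forall hdiff)
  -- compute the integral of F' w by FTC
  have hFTCderiv : ∀ t ∈ uIcc (0:ℝ) 1, HasDerivAt (fun s => s • ω (γ w s)) (F' w t) t := by
    intro t ht
    rw [uIcc_of_le zero_le_one] at ht
    have h1 : HasDerivAt (fun s : ℝ => γ w s) (w - a) t := by
      have := ((hasDerivAt_id t).smul_const (w - a)).const_add a; rwa [one_smul] at this
    have h2 : HasDerivAt (fun s => ω (γ w s)) (ω' (γ w t) (w - a)) t :=
      (hω _ (hseg t ht w (mem_closedBall_self εpos.le))).comp_hasDerivAt t h1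
    have h3 := (hasDerivAt_id t).smul h2
    refine h3.congr_deriv ?_
    symm
    ext h
    simp only [hF'def, ContinuousLinearMap.add_apply, ContinuousLinearMap.smul_apply,
      ContinuousLinearMap.flip_apply, id_eq]
    rw [hsym _ (hseg t ht w (mem_closedBall_self εpos.le)) h (w - a)]
    simp [one_smul, add_comm]
  have hint : ∫ t in (0:ℝ)..1, F' w t = ω w := by
    rw [intervalIntegral.integral_eq_sub_of_hasDerivAt hFTCderiv
      (by
        apply ContinuousOn.intervalIntegrable
        rw [uIcc_of_le zero_le_one]
        exact hF'cont w (mem_closedBall_self εpos.le))]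
    simp [hγdef]
  rw [hint] at main
  exact main

theorem pluriharmonic_second_deriv {E : Type*} [NormedAddCommGroup E] [NormedSpace ℂ E]
    [NormedSpace ℝ E] [IsScalarTower ℝ ℂ E]
    {G : E → ℝ} {U : Set E} (hU : IsOpen U) (hG : ContDiffOn ℝ (⊤ : ℕ∞) G U)
    {p : E} (hp : p ∈ U) (b : E)
    (hplh : planeLaplacian (fun ξ : ℂ => G (p + ξ • b)) 0 = 0) :
    fderiv ℝ (fderiv ℝ G) p b b
      + fderiv ℝ (fderiv ℝ G) p (Complex.I • b) (Complex.I • b) = 0 := by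
  have hDq : ∀ q ∈ U, HasFDerivAt G (fderiv ℝ G q) q := fun q hq =>
    ((hG.contDiffAt (hU.mem_nhds hq)).differentiableAt (by simp)).hasFDerivAt
  have hH : HasFDerivAt (fderiv ℝ G) (fderiv ℝ (fderiv ℝ G) p) p := by
    have h2 : ContDiffAt ℝ 2 G p := (hG.contDiffAt (hU.mem_nhds hp)).of_le (WithTop.coe_le_coe.mpr le_top)
    exact ((h2.fderiv_right (m := 1) (by norm_num)).differentiableAt one_ne_zero).hasFDerivAt
  set Lb : ℂ →L[ℝ] E := (ContinuousLinearMap.id ℝ ℂ).smulRight b with hLbdef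
  have hLbapp : ∀ d : ℂ, Lb d = d • b := fun d => rfl
  have hLb : ∀ ξ : ℂ, HasFDerivAt (fun ξ : ℂ => p + ξ • b) Lb ξ := by
    intro ξ
    exact (Lb.hasFDerivAt (x := ξ)).const_add p
  have hs : IsOpen {ξ : ℂ | p + ξ • b ∈ U} :=
    hU.preimage (by continuity)
  have h0s : (0 : ℂ) ∈ {ξ : ℂ | p + ξ • b ∈ U} := by simp [hp]
  -- the key directional computation
  have key : ∀ d : ℂ,
      fderiv ℝ (fun ξ : ℂ => fderiv ℝ (fun ξ' : ℂ => G (p + ξ' • b)) ξ d) 0 d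
        = fderiv ℝ (fderiv ℝ G) p (d • b) (d • b) := by
    intro d
    have hev : (fun ξ : ℂ => fderiv ℝ (fun ξ' : ℂ => G (p + ξ' • b)) ξ d)
        =ᶠ[nhds 0] (fun ξ : ℂ => fderiv ℝ G (p + ξ • b) (d • b)) := by
      filter_upwards [hs.mem_nhds h0s] with ξ hξ
      have : HasFDerivAt (fun ξ' : ℂ => G (p + ξ' • b))
          ((fderiv ℝ G (p + ξ • b)).comp Lb) ξ := (hDq _ hξ).comp ξ (hLb ξ)
      rw [this.fderiv]
      simp [ContinuousLinearMap.comp_apply, hLbapp]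
    rw [hev.fderiv_eq]
    have hinner : HasFDerivAt (fun ξ : ℂ => fderiv ℝ G (p + ξ • b))
        ((fderiv ℝ (fderiv ℝ G) p).comp Lb) 0 := by
      have hH' : HasFDerivAt (fderiv ℝ G) (fderiv ℝ (fderiv ℝ G) p) (p + (0:ℂ) • b) := by
        simpa using hH
      exact hH'.comp (0 : ℂ) (hLb 0)
    have happ : HasFDerivAt (fun ξ : ℂ => fderiv ℝ G (p + ξ • b) (d • b))
        ((ContinuousLinearMap.apply ℝ ℝ (d • b)).comp
          ((fderiv ℝ (fderiv ℝ G) p).comp Lb)) 0 :=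
      (ContinuousLinearMap.apply ℝ ℝ (d • b)).hasFDerivAt.comp 0 hinner
    rw [happ.fderiv]
    simp [ContinuousLinearMap.comp_apply, hLbapp]
  have h1 := key 1
  have hI := key Complex.I
  rw [one_smul] at h1
  unfold planeLaplacian at hplh
  rw [h1, hI] at hplh
  exact hplh

theorem partA {n m : ℕ}
    (U : Set (Fin m → ℂ)) (hUopen : IsOpen U)
    (M : Set ((Fin n → ℂ) × (Fin m → ℂ)))
    (hM : M = {p : (Fin n → ℂ) × (Fin m → ℂ) | (∀ i, p.1 i ≠ 0) ∧ p.2 ∈ U})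
    (g : (Fin n → ℂ) × (Fin m → ℂ) → ℝ)
    (hsmooth : ContDiffOn ℝ (⊤ : ℕ∞) g M)
    (hinv : ∀ θ : Fin n → ℝ, ∀ z : Fin n → ℂ, ∀ w : Fin m → ℂ, (z, w) ∈ M →
      g (fun i => Complex.exp (Complex.I * (θ i : ℂ)) * z i, w) = g (z, w))
    (hrad : ∀ j : Fin n, ∀ z : Fin n → ℂ, ∀ w : Fin m → ℂ, (z, w) ∈ M →
      deriv (fun r : ℝ => g (Function.update z j ((r : ℂ) * z j), w)) 1 = 0) :
    ∀ z : Fin n → ℂ, ∀ w : Fin m → ℂ, (z, w) ∈ M →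
      g (z, w) = g ((fun _ => 1), w) := by
  classical
  have hMopen : IsOpen M := by
    rw [hM]
    have : {p : (Fin n → ℂ) × (Fin m → ℂ) | (∀ i, p.1 i ≠ 0) ∧ p.2 ∈ U}
        = (⋂ i, {p : (Fin n → ℂ) × (Fin m → ℂ) | p.1 i ≠ 0}) ∩ {p | p.2 ∈ U} := by
      ext p; simp [Set.mem_iInter]
    rw [this]
    refine IsOpen.inter (isOpen_iInter_of_finite fun i => ?_) (hUopen.preimage continuous_snd)
    exact isOpen_compl_singleton.preimage ((continuous_apply i).comp continuous_fst)
  have hmemM : ∀ (z : Fin n → ℂ) (w : Fin m → ℂ), (∀ i, z i ≠ 0) → w ∈ U → (z, w) ∈ M := by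
    intro z w hz hw; rw [hM]; exact ⟨hz, hw⟩
  -- core single-coordinate constancy
  have key0 : ∀ (j : Fin n) (z : Fin n → ℂ) (w : Fin m → ℂ), (∀ i, z i ≠ 0) → w ∈ U →
      ∀ ζ : ℂ, ζ ≠ 0 → g (Function.update z j ζ, w) = g (Function.update z j 1, w) := by
    intro j z w hz hw
    have hmem : ∀ ζ : ℂ, ζ ≠ 0 → (Function.update z j ζ, w) ∈ M := by
      intro ζ hζ
      refine hmemM _ _ (fun i => ?_) hw
      rcases eq_or_ne i j with rfl | hij
      · simpa using hζ
      · simpa [Function.update_of_ne hij] using hz i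
    set v : ℝ → ℝ := fun r => g (Function.update z j ((r : ℝ) : ℂ), w) with hvdef
    -- differentiability of v at r ≠ 0
    have hvd : ∀ r : ℝ, r ≠ 0 → DifferentiableAt ℝ v r := by
      intro r hr
      have hinner : DifferentiableAt ℝ
          (fun r : ℝ => ((Function.update z j ((r : ℝ) : ℂ)), w)) r := by
        refine DifferentiableAt.prodMk ?_ (differentiableAt_const _)
        rw [differentiableAt_pi]
        intro i
        rcases eq_or_ne i j with rfl | hij
        · simp only [Function.update_self]
          exact Complex.ofRealCLM.differentiableAt
        · simpa [Function.update_of_ne hij] using differentiableAt_const (z i)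
      have hg : DifferentiableAt ℝ g ((Function.update z j ((r : ℝ) : ℂ)), w) :=
        (hsmooth.contDiffAt (hMopen.mem_nhds (hmem _ (by exact_mod_cast hr)))).differentiableAt (by simp)
      exact hg.comp r hinner
    -- derivative of v vanishes for r > 0
    have hv0 : ∀ r : ℝ, 0 < r → HasDerivAt v 0 r := by
      intro r hr
      have hd := (hvd r hr.ne').hasDerivAt
      have h1 : HasDerivAt (fun s : ℝ => s * r) r 1 := by
        simpa using (hasDerivAt_id (1 : ℝ)).mul_const r
      have hd' : HasDerivAt v (deriv v r) (1 * r) := by rwa [one_mul]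
      have hscale : HasDerivAt (fun s : ℝ => v (s * r)) (deriv v r * r) 1 :=
        by have := HasDerivAt.comp 1 hd' h1; exact this
      have hrc : ((r : ℝ) : ℂ) ≠ 0 := by exact_mod_cast hr.ne'
      have hrad' := hrad j (Function.update z j ((r : ℝ) : ℂ)) w (hmem _ hrc)
      have hfe : (fun s : ℝ => g (Function.update (Function.update z j ((r : ℝ) : ℂ)) j
          ((s : ℂ) * Function.update z j ((r : ℝ) : ℂ) j), w)) = fun s : ℝ => v (s * r) := by
        funext s
        rw [hvdef]
        simp only [Function.update_idem, Function.update_self]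
        norm_cast
      rw [hfe] at hrad'
      rw [hscale.deriv] at hrad'
      have : deriv v r = 0 := by
        rcases mul_eq_zero.1 hrad' with h | h
        · exact h
        · exact absurd h hr.ne'
      rw [← this]
      exact hd
    -- v is constant on Ioi 0
    have hvconst : ∀ r : ℝ, 0 < r → v r = v 1 := by
      intro r hr
      have hdiff : DifferentiableOn ℝ v (Ioi (0 : ℝ)) :=
        fun x hx => (hvd x (ne_of_gt hx)).differentiableWithinAt
      have hzero : ∀ x ∈ Ioi (0 : ℝ), fderivWithin ℝ v (Ioi (0 : ℝ)) x = 0 := by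
        intro x hx
        rw [fderivWithin_of_isOpen isOpen_Ioi hx]
        have := (hv0 x hx).hasFDerivAt.fderiv
        rw [this]
        ext y
        simp
      exact (convex_Ioi (0 : ℝ)).is_const_of_fderivWithin_eq_zero hdiff hzero hr (by norm_num)
    -- rotation invariance
    intro ζ hζ
    have habs : ((‖ζ‖ : ℝ) : ℂ) ≠ 0 := by
      simpa using (norm_ne_zero_iff.mpr hζ)
    have hrot := hinv (fun i => if i = j then Complex.arg ζ else 0)
      (Function.update z j ((‖ζ‖ : ℝ) : ℂ)) w (hmem _ habs)
    have hfun : (fun i => Complex.exp (Complex.I * (((if i = j then Complex.arg ζ else 0 : ℝ)) : ℂ))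
        * Function.update z j ((‖ζ‖ : ℝ) : ℂ) i) = Function.update z j ζ := by
      funext i
      rcases eq_or_ne i j with rfl | hij
      · simp only [Function.update_self, eq_self_iff_true, if_true]
        rw [mul_comm Complex.I, mul_comm, Complex.norm_mul_exp_arg_mul_I]
      · simp [Function.update_of_ne hij, if_neg hij]
    rw [hfun] at hrot
    have h1 : g (Function.update z j ζ, w) = v ‖ζ‖ := by
      simpa only [hvdef] using hrot
    have h2 : v 1 = g (Function.update z j 1, w) := by
      rw [hvdef]; norm_num
    rw [h1, hvconst _ (norm_pos_iff.mpr hζ), h2]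
  -- induction over coordinates
  intro z w hzw
  rw [hM] at hzw
  obtain ⟨hz, hw⟩ := hzw
  have main : ∀ s : Finset (Fin n),
      g ((fun i => if i ∈ s then z i else 1), w) = g ((fun _ => 1), w) := by
    intro s
    induction s using Finset.induction_on with
    | empty => simp
    | @insert j s' hj ih =>
      have hbase : ∀ i, (fun i => if i ∈ s' then z i else 1) i ≠ 0 := by
        intro i; by_cases h : i ∈ s' <;> simp [h, hz i]
      have hupd : (fun i => if i ∈ insert j s' then z i else 1)
          = Function.update (fun i => if i ∈ s' then z i else 1) j (z j) := by
        funext i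
        rcases eq_or_ne i j with rfl | hij
        · simp [Function.update_self]
        · simp [Function.update_of_ne hij, Finset.mem_insert, hij]
      have hself : Function.update (fun i => if i ∈ s' then z i else 1) j 1
          = fun i => if i ∈ s' then z i else 1 := by
        funext i
        rcases eq_or_ne i j with rfl | hij
        · simp [Function.update_self, hj]
        · simp [Function.update_of_ne hij]
      rw [hupd, key0 j _ w hbase hw (z j) (hz j), hself, ih]
  have hu := main Finset.univ
  simpa using hu


/-- Theorem 3.1 (equivalent form): a `T`-invariant pluriharmonic function on
`M = (ℂ*)ⁿ × U` whose radial derivatives in each of the first `n` coordinates vanish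
is the real part of a holomorphic function of `w`. -/
theorem pluriharmonic_torus_invariant_radial_deriv_zero {n m : ℕ}
    (U : Set (Fin m → ℂ)) (hUopen : IsOpen U) (hUconv : Convex ℝ U)
    (M : Set ((Fin n → ℂ) × (Fin m → ℂ)))
    (hM : M = {p : (Fin n → ℂ) × (Fin m → ℂ) | (∀ i, p.1 i ≠ 0) ∧ p.2 ∈ U})
    (g : (Fin n → ℂ) × (Fin m → ℂ) → ℝ)
    (hsmooth : ContDiffOn ℝ (⊤ : ℕ∞) g M)
    (hph : Pluriharmonic g M)
    (hinv : ∀ θ : Fin n → ℝ, ∀ z : Fin n → ℂ, ∀ w : Fin m → ℂ, (z, w) ∈ M →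
      g (fun i => Complex.exp (Complex.I * (θ i : ℂ)) * z i, w) = g (z, w))
    (hrad : ∀ j : Fin n, ∀ z : Fin n → ℂ, ∀ w : Fin m → ℂ, (z, w) ∈ M →
      deriv (fun r : ℝ => g (Function.update z j ((r : ℂ) * z j), w)) 1 = 0) :
    ∃ f : (Fin m → ℂ) → ℂ, DifferentiableOn ℂ f U ∧
      ∀ z : Fin n → ℂ, ∀ w : Fin m → ℂ, (z, w) ∈ M → g (z, w) = (f w).re := by
  classical
  rcases Set.eq_empty_or_nonempty U with hUe | ⟨a, ha⟩
  · refine ⟨0, ?_, ?_⟩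
    · intro x hx; rw [hUe] at hx; exact absurd hx (Set.notMem_empty x)
    · intro z w hzw
      rw [hM] at hzw
      rw [hUe] at hzw
      exact absurd hzw.2 (Set.notMem_empty w)
  have hGA := partA U hUopen M hM g hsmooth hinv hrad
  set G : (Fin m → ℂ) → ℝ := fun w => g ((fun _ => 1), w) with hGdef
  have hmemM : ∀ (z : Fin n → ℂ) (w : Fin m → ℂ), (∀ i, z i ≠ 0) → w ∈ U → (z, w) ∈ M := by
    intro z w hz hw; rw [hM]; exact ⟨hz, hw⟩
  have honem : ∀ w ∈ U, ((fun _ : Fin n => (1 : ℂ)), w) ∈ M := fun w hw =>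
    hmemM _ _ (fun _ => one_ne_zero) hw
  have hGsm : ContDiffOn ℝ (⊤ : ℕ∞) G U := by
    have hι : ContDiff ℝ (⊤ : ℕ∞) (fun w : Fin m → ℂ => ((fun _ : Fin n => (1 : ℂ)), w)) :=
      contDiff_const.prodMk contDiff_id
    exact hsmooth.comp hι.contDiffOn (fun w hw => honem w hw)
  have hplhG : ∀ p ∈ U, ∀ b, planeLaplacian (fun ξ : ℂ => G (p + ξ • b)) 0 = 0 := by
    intro p hp b
    have hm : ((fun _ : Fin n => (1 : ℂ)), p) + (0 : ℂ) • ((0 : Fin n → ℂ), b) ∈ M := by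
      simpa using honem p hp
    have h0 := hph ((fun _ : Fin n => (1 : ℂ)), p) ((0 : Fin n → ℂ), b) 0 hm
    have hfe : (fun ξ : ℂ => g (((fun _ : Fin n => (1 : ℂ)), p) + ξ • ((0 : Fin n → ℂ), b)))
        = fun ξ : ℂ => G (p + ξ • b) := by
      funext ξ
      rw [hGdef]
      congr 1
      simp [Prod.ext_iff]
    rwa [hfe] at h0
  have hDq : ∀ q ∈ U, HasFDerivAt G (fderiv ℝ G q) q := fun q hq =>
    ((hGsm.contDiffAt (hUopen.mem_nhds hq)).differentiableAt (by simp)).hasFDerivAt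
  have hHq : ∀ p ∈ U, HasFDerivAt (fderiv ℝ G) (fderiv ℝ (fderiv ℝ G) p) p := by
    intro p hp
    have h2 : ContDiffAt ℝ 2 G p := (hGsm.contDiffAt (hUopen.mem_nhds hp)).of_le (WithTop.coe_le_coe.mpr le_top)
    exact ((h2.fderiv_right (m := 1) (by norm_num)).differentiableAt one_ne_zero).hasFDerivAt
  have hsymH : ∀ p ∈ U, ∀ u v, fderiv ℝ (fderiv ℝ G) p u v = fderiv ℝ (fderiv ℝ G) p v u := by
    intro p hp u v
    refine second_derivative_symmetric_of_eventually (f := G) ?_ (hHq p hp) u v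
    filter_upwards [hUopen.mem_nhds hp] with q hq using hDq q hq
  have hdiag : ∀ p ∈ U, ∀ b, fderiv ℝ (fderiv ℝ G) p b b
      + fderiv ℝ (fderiv ℝ G) p (Complex.I • b) (Complex.I • b) = 0 :=
    fun p hp b => pluriharmonic_second_deriv hUopen hGsm hp b (hplhG p hp b)
  have hpolar : ∀ p ∈ U, ∀ u v, fderiv ℝ (fderiv ℝ G) p u v
      + fderiv ℝ (fderiv ℝ G) p (Complex.I • u) (Complex.I • v) = 0 := by
    intro p hp u v
    have h1 := hdiag p hp (u + v)
    have h2 := hdiag p hp u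
    have h3 := hdiag p hp v
    rw [smul_add] at h1
    simp only [map_add, ContinuousLinearMap.add_apply] at h1
    have hs1 := hsymH p hp u v
    have hs2 := hsymH p hp (Complex.I • u) (Complex.I • v)
    linarith
  have hIIu : ∀ u : Fin m → ℂ, Complex.I • (Complex.I • u) = -u := by
    intro u
    rw [smul_smul, Complex.I_mul_I, neg_one_smul]
  have hHmix : ∀ p ∈ U, ∀ u v, fderiv ℝ (fderiv ℝ G) p u (Complex.I • v)
      = fderiv ℝ (fderiv ℝ G) p v (Complex.I • u) := by
    intro p hp u v
    have h1 := hpolar p hp (Complex.I • v) u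
    rw [hIIu v] at h1
    have h2 : fderiv ℝ (fderiv ℝ G) p (-v) (Complex.I • u)
        = - fderiv ℝ (fderiv ℝ G) p v (Complex.I • u) := by simp
    rw [h2] at h1
    have h3 := hsymH p hp u (Complex.I • v)
    linarith
  -- the complex-linear `(1,0)`-form ω built from dG
  set J : (Fin m → ℂ) →L[ℝ] (Fin m → ℂ) :=
    (Complex.I • (ContinuousLinearMap.id ℂ (Fin m → ℂ))).restrictScalars ℝ with hJdef
  have hJapp : ∀ v, J v = Complex.I • v := fun v => rfl
  set A : ((Fin m → ℂ) →L[ℝ] ℝ) →L[ℝ] ((Fin m → ℂ) →L[ℝ] ℂ) :=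
    ContinuousLinearMap.compL ℝ (Fin m → ℂ) ℝ ℂ Complex.ofRealCLM with hAdef
  set P : ((Fin m → ℂ) →L[ℝ] ℂ) →L[ℝ] ((Fin m → ℂ) →L[ℝ] ℂ) :=
    (ContinuousLinearMap.compL ℝ (Fin m → ℂ) (Fin m → ℂ) ℂ).flip J with hPdef
  set Φ : ((Fin m → ℂ) →L[ℝ] ℝ) →L[ℝ] ((Fin m → ℂ) →L[ℝ] ℂ) :=
    A - Complex.I • (P.comp A) with hΦdef
  have hΦapp : ∀ (T : (Fin m → ℂ) →L[ℝ] ℝ) (v : Fin m → ℂ),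
      Φ T v = (T v : ℂ) - Complex.I * (T (Complex.I • v) : ℂ) := by
    intro T v
    simp [hΦdef, hAdef, hPdef, hJapp, ContinuousLinearMap.smul_apply, smul_eq_mul,
      ContinuousLinearMap.sub_apply, ContinuousLinearMap.comp_apply]
  set ω : (Fin m → ℂ) → ((Fin m → ℂ) →L[ℝ] ℂ) := fun p => Φ (fderiv ℝ G p) with hωdef
  set ω' : (Fin m → ℂ) → ((Fin m → ℂ) →L[ℝ] ((Fin m → ℂ) →L[ℝ] ℂ)) :=
    fun p => Φ.comp (fderiv ℝ (fderiv ℝ G) p) with hω'def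
  have hω : ∀ p ∈ U, HasFDerivAt ω (ω' p) p := fun p hp =>
    Φ.hasFDerivAt.comp p (hHq p hp)
  have hDsm : ContDiffOn ℝ (⊤ : ℕ∞) (fderiv ℝ G) U := hGsm.fderiv_of_isOpen hUopen (by simp)
  have hHsm : ContDiffOn ℝ (⊤ : ℕ∞) (fun p => fderiv ℝ (fderiv ℝ G) p) U :=
    hDsm.fderiv_of_isOpen hUopen (by simp)
  have hωc : ContinuousOn ω U := Φ.continuous.comp_continuousOn hDsm.continuousOn
  have hω'c : ContinuousOn ω' U := by
    have hc : Continuous (fun T : (Fin m → ℂ) →L[ℝ] ((Fin m → ℂ) →L[ℝ] ℝ) => Φ.comp T) :=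
      (ContinuousLinearMap.compL ℝ (Fin m → ℂ) ((Fin m → ℂ) →L[ℝ] ℝ)
        ((Fin m → ℂ) →L[ℝ] ℂ) Φ).continuous
    exact hc.comp_continuousOn hHsm.continuousOn
  have hsymω' : ∀ p ∈ U, ∀ u v, ω' p u v = ω' p v u := by
    intro p hp u v
    simp only [hω'def, ContinuousLinearMap.comp_apply]
    rw [hΦapp, hΦapp, hsymH p hp u v, hHmix p hp u v]
  have hprim : ∀ w ∈ U, HasFDerivAt
      (fun x => ∫ t in (0:ℝ)..1, ω (a + t • (x - a)) (x - a)) (ω w) w := fun w hw =>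
    poincare_primitive hUopen hUconv ha hω hωc hω'c hsymω' hw
  set f0 : (Fin m → ℂ) → ℂ := fun x => ∫ t in (0:ℝ)..1, ω (a + t • (x - a)) (x - a) with hf0def
  -- complex linearity of ω p
  have hΦI : ∀ (T : (Fin m → ℂ) →L[ℝ] ℝ) (v : Fin m → ℂ),
      Φ T (Complex.I • v) = Complex.I * Φ T v := by
    intro T v
    rw [hΦapp, hΦapp, hIIu v, map_neg]
    push_cast
    ring_nf
    rw [Complex.I_sq]
    ring
  have hωsmulC : ∀ p : Fin m → ℂ, ∀ (c : ℂ) (v : Fin m → ℂ), ω p (c • v) = c * ω p v := by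
    intro p c v
    have hdecomp : c • v = (c.re : ℝ) • v + (c.im : ℝ) • (Complex.I • v) := by
      have h1 : (c.re : ℝ) • v = ((c.re : ℂ)) • v := by
        rw [← Complex.coe_algebraMap, algebraMap_smul]
      have h2 : (c.im : ℝ) • (Complex.I • v) = ((c.im : ℂ) * Complex.I) • v := by
        rw [mul_smul, ← Complex.coe_algebraMap, algebraMap_smul]
      rw [h1, h2, ← add_smul, Complex.re_add_im]
    rw [hdecomp, map_add, (ω p).map_smul, (ω p).map_smul]
    rw [hωdef] at *
    rw [hΦI (fderiv ℝ G p) v]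
    rw [Complex.real_smul, Complex.real_smul]
    conv_rhs => rw [← Complex.re_add_im c]
    ring
  -- differentiability over ℂ
  have hdiffC : DifferentiableOn ℂ (fun x => ((G a : ℂ) + f0 x)) U := by
    intro w hw
    have hF : HasFDerivAt (fun x => ((G a : ℂ) + f0 x)) (ω w) w :=
      (hprim w hw).const_add ((G a : ℂ))
    let Lc : (Fin m → ℂ) →L[ℂ] ℂ :=
      ⟨{ toAddHom := ⟨fun v => ω w v, fun x y => map_add (ω w) x y⟩,
         map_smul' := fun c v => by simpa [smul_eq_mul] using hωsmulC w c v },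
       (ω w).continuous⟩
    have hLc : HasFDerivAt (𝕜 := ℂ) (fun x => ((G a : ℂ) + f0 x)) Lc w :=
      hasFDerivAt_of_restrictScalars ℝ hF (by ext v; rfl)
    exact hLc.differentiableAt.differentiableWithinAt
  -- real part computation
  have hre : ∀ w ∈ U, ((G a : ℂ) + f0 w).re = G w := by
    intro w hw
    have hseg : ∀ t ∈ Icc (0:ℝ) 1, a + t • (w - a) ∈ U := by
      intro t ht
      have h2 := hUconv ha hw (by linarith [ht.2] : (0:ℝ) ≤ 1 - t) ht.1 (by ring)
      have he : a + t • (w - a) = (1 - t) • a + t • w := by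
        simp only [smul_sub, sub_smul, one_smul]; abel
      rw [he]; exact h2
    have hγc : Continuous (fun t : ℝ => a + t • (w - a)) :=
      continuous_const.add (continuous_id.smul continuous_const)
    have hcont : ContinuousOn (fun t : ℝ => ω (a + t • (w - a)) (w - a)) (Icc (0:ℝ) 1) := by
      have h1 : ContinuousOn (fun t : ℝ => ω (a + t • (w - a))) (Icc (0:ℝ) 1) :=
        hωc.comp hγc.continuousOn (fun t ht => hseg t ht)
      exact (ContinuousLinearMap.apply ℝ ℂ (w - a)).continuous.comp_continuousOn h1
    have hii : IntervalIntegrable (fun t : ℝ => ω (a + t • (w - a)) (w - a)) volume 0 1 := by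
      apply ContinuousOn.intervalIntegrable
      rw [uIcc_of_le zero_le_one]; exact hcont
    have hrei : (f0 w).re = ∫ t in (0:ℝ)..1, (ω (a + t • (w - a)) (w - a)).re := by
      rw [hf0def]
      exact (Complex.reCLM.intervalIntegral_comp_comm hii).symm
    have hreω : ∀ (p : Fin m → ℂ) (v : Fin m → ℂ), (ω p v).re = fderiv ℝ G p v := by
      intro p v
      rw [hωdef, hΦapp]
      simp [Complex.sub_re, Complex.mul_re]
    have hint2 : (fun t : ℝ => (ω (a + t • (w - a)) (w - a)).re)
        = fun t : ℝ => fderiv ℝ G (a + t • (w - a)) (w - a) := by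
      funext t; rw [hreω]
    have hFTC : ∫ t in (0:ℝ)..1, fderiv ℝ G (a + t • (w - a)) (w - a) = G w - G a := by
      have hψ : ∀ t ∈ uIcc (0:ℝ) 1, HasDerivAt (fun t : ℝ => G (a + t • (w - a)))
          (fderiv ℝ G (a + t • (w - a)) (w - a)) t := by
        intro t ht
        rw [uIcc_of_le zero_le_one] at ht
        have h1 : HasDerivAt (fun t : ℝ => a + t • (w - a)) (w - a) t := by
          simpa using ((hasDerivAt_id t).smul_const (w - a)).const_add a
        exact (hDq _ (hseg t ht)).comp_hasDerivAt t h1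
      rw [intervalIntegral.integral_eq_sub_of_hasDerivAt hψ ?_]
      · simp
      · rw [← hint2]
        apply ContinuousOn.intervalIntegrable
        rw [uIcc_of_le zero_le_one]
        exact Complex.continuous_re.comp_continuousOn hcont
    have : (f0 w).re = G w - G a := by
      rw [hrei, hint2, hFTC]
    simp [Complex.add_re, Complex.ofReal_re, this]
  refine ⟨fun x => ((G a : ℂ) + f0 x), hdiffC, fun z w hzw => ?_⟩
  have hw : w ∈ U := by rw [hM] at hzw; exact hzw.2
  calc g (z, w) = G w := hGA z w hzw
    _ = ((G a : ℂ) + f0 w).re := (hre w hw).symm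
end

section
/- If F : V → ℝ is smooth and strictly convex (positive definite second derivative at every point), then its stability set S_F is an open and convex subset of the dual space V*. (Proposition 1.) -/
open Filter Bornology

/-- A function `F` on a normed space is *stable* if `F x → +∞` as `‖x‖ → ∞`. -/
def Stable {V : Type*} [NormedAddCommGroup V] (F : V → ℝ) : Prop :=
  Filter.Tendsto F (Bornology.cobounded V) Filter.atTop

/-- The stability set of `F`: the set of continuous linear functionals `ℓ` such that
`F - ℓ` is stable. -/
def stabilitySet {V : Type*} [NormedAddCommGroup V] [NormedSpace ℝ V] (F : V → ℝ) :
    Set (V →L[ℝ] ℝ) :=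
  {ℓ : V →L[ℝ] ℝ | Stable fun x => F x - ℓ x}

section Aux

variable {V : Type*} [NormedAddCommGroup V] [NormedSpace ℝ V] [FiniteDimensional ℝ V]

/-- A continuous stable function on a finite-dimensional space is bounded below. -/
lemma stable_bddBelow {G : V → ℝ} (hcont : Continuous G) (hG : Stable G) :
    ∃ m : ℝ, ∀ x, m ≤ G x := by
  have h := hG.eventually_ge_atTop 0
  rw [← comap_norm_atTop, eventually_comap] at h
  rw [eventually_atTop] at h
  obtain ⟨R, hR⟩ := h
  have hcompact : IsCompact (Metric.closedBall (0 : V) R) := isCompact_closedBall _ _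
  rcases le_or_gt R 0 with hR0 | hR0
  · refine ⟨0, fun x => hR ‖x‖ (le_trans hR0 (norm_nonneg x)) x rfl⟩
  · obtain ⟨x0, _, hx0⟩ := hcompact.exists_isMinOn
      ⟨0, by simp [le_of_lt hR0]⟩ hcont.continuousOn
    refine ⟨min (G x0) 0, fun x => ?_⟩
    rcases le_or_gt ‖x‖ R with hx | hx
    · exact le_trans (min_le_left _ _) (hx0 (by simpa [Metric.mem_closedBall, dist_eq_norm]))
    · exact le_trans (min_le_right _ _) (hR ‖x‖ hx.le x rfl)

/-- A continuous stable function that is convex on every ray through the origin grows at least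
linearly. -/
lemma stable_linear_growth {G : V → ℝ} (hcont : Continuous G) (hG : Stable G)
    (hray : ∀ x : V, ConvexOn ℝ Set.univ fun t : ℝ => G (t • x)) :
    ∃ δ > (0 : ℝ), ∃ C : ℝ, ∀ x, δ * ‖x‖ - C ≤ G x := by
  have h := hG.eventually_ge_atTop (G 0 + 1)
  rw [← comap_norm_atTop, eventually_comap, eventually_atTop] at h
  obtain ⟨R, hR⟩ := h
  set R' : ℝ := max R 1 with hR'def
  have hR'pos : (0 : ℝ) < R' := lt_of_lt_of_le one_pos (le_max_right _ _)
  obtain ⟨m, hm⟩ := stable_bddBelow hcont hG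
  refine ⟨1 / R', by positivity, max (1 - m) (-(G 0)), fun x => ?_⟩
  rcases le_or_gt ‖x‖ R' with hx | hx
  · have h1 : (1 / R') * ‖x‖ ≤ 1 := by
      rw [div_mul_eq_mul_div, one_mul, div_le_one hR'pos]; exact hx
    have h2 : 1 - m ≤ max (1 - m) (-(G 0)) := le_max_left _ _
    have := hm x
    linarith
  · set s : ℝ := R' / ‖x‖ with hs_def
    have hxpos : (0 : ℝ) < ‖x‖ := lt_trans hR'pos hx
    have hs0 : 0 < s := by positivity
    have hs1 : s ≤ 1 := by rw [div_le_one hxpos]; exact hx.le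
    have hnorm : ‖s • x‖ = R' := by
      rw [norm_smul, Real.norm_eq_abs, abs_of_pos hs0, hs_def,
        div_mul_eq_mul_div, mul_div_assoc, div_self hxpos.ne', mul_one]
    have hGsx : G 0 + 1 ≤ G (s • x) := hR ‖s • x‖ (by rw [hnorm]; exact le_max_left _ _) _ rfl
    have hconvx := (hray x).2 (Set.mem_univ (0 : ℝ)) (Set.mem_univ (1 : ℝ))
      (by linarith : (0:ℝ) ≤ 1 - s) hs0.le (by ring)
    simp only [smul_eq_mul, mul_zero, mul_one, zero_add, zero_smul, one_smul] at hconvx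
    -- hconvx : G (s • x) ≤ (1 - s) * G 0 + s * G x
    have key : G 0 + 1 ≤ (1 - s) * G 0 + s * G x := le_trans hGsx hconvx
    have h1 : 1 ≤ s * (G x - G 0) := by nlinarith
    have h2 : G 0 + ‖x‖ / R' ≤ G x := by
      have he : ‖x‖ / R' = 1 / s := by
        rw [hs_def]; field_simp
      rw [he]
      have : 1 / s ≤ G x - G 0 := by
        rw [div_le_iff₀ hs0]; nlinarith
      linarith
    have h3 : -(G 0) ≤ max (1 - m) (-(G 0)) := le_max_right _ _
    have h4 : (1 / R') * ‖x‖ = ‖x‖ / R' := by ring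
    linarith

end Aux

section Ray

variable {V : Type*} [NormedAddCommGroup V] [InnerProductSpace ℝ V]

/-- A smooth function with positive-definite second derivative is convex along every ray. -/
lemma ray_convexOn (F : V → ℝ) (hF : ContDiff ℝ (⊤ : ℕ∞) F)
    (hconv : ∀ p v : V, v ≠ 0 → 0 < fderiv ℝ (fderiv ℝ F) p v v)
    (ℓ : V →L[ℝ] ℝ) (x : V) :
    ConvexOn ℝ Set.univ fun t : ℝ => F (t • x) - ℓ (t • x) := by
  by_cases hx : x = 0
  · subst hx
    simp only [smul_zero]
    exact convexOn_const _ convex_univ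
  have hdF : Differentiable ℝ F := hF.differentiable (by simp)
  have hdF' : Differentiable ℝ (fderiv ℝ F) :=
    (hF.fderiv_right (m := (⊤ : ℕ∞)) (by simp)).differentiable (by simp)
  set g : ℝ → ℝ := fun t => F (t • x) - ℓ (t • x) with hg_def
  have hc : ∀ t : ℝ, HasDerivAt (fun s : ℝ => s • x) x t := fun t => by
    simpa using (hasDerivAt_id t).smul_const x
  have hg1 : ∀ t, HasDerivAt g (fderiv ℝ F (t • x) x - ℓ x) t := by
    intro t
    have h1 : HasDerivAt (fun t : ℝ => F (t • x)) (fderiv ℝ F (t • x) x) t :=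
      (hdF (t • x)).hasFDerivAt.comp_hasDerivAt t (hc t)
    have h2 : HasDerivAt (fun t : ℝ => ℓ (t • x)) (ℓ x) t :=
      ℓ.hasFDerivAt.comp_hasDerivAt t (hc t)
    exact h1.sub h2
  have hderiv_g : deriv g = fun t => fderiv ℝ F (t • x) x - ℓ x :=
    funext fun t => (hg1 t).deriv
  have hg2 : ∀ t : ℝ, HasDerivAt (fun t : ℝ => fderiv ℝ F (t • x) x - ℓ x)
      (fderiv ℝ (fderiv ℝ F) (t • x) x x) t := by
    intro t
    have h1 : HasDerivAt (fun t : ℝ => fderiv ℝ F (t • x))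
        (fderiv ℝ (fderiv ℝ F) (t • x) x) t :=
      (hdF' (t • x)).hasFDerivAt.comp_hasDerivAt t (hc t)
    have h2 := h1.clm_apply (hasDerivAt_const t x)
    simpa using h2.sub_const (ℓ x)
  apply convexOn_of_deriv2_nonneg' convex_univ
  · exact fun t _ => (hg1 t).differentiableAt.differentiableWithinAt
  · rw [hderiv_g]
    exact fun t _ => (hg2 t).differentiableAt.differentiableWithinAt
  · intro t _
    have hd2 : deriv (deriv g) t = fderiv ℝ (fderiv ℝ F) (t • x) x x := by
      rw [hderiv_g]; exact (hg2 t).deriv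
    have : deriv^[2] g t = deriv (deriv g) t := by
      simp [Function.iterate_succ_apply', Function.iterate_zero_apply]
    rw [this, hd2]
    exact (hconv _ _ hx).le

end Ray

/-- Proposition 1: the stability set of a smooth strictly convex function is open and convex. -/
theorem stabilitySet_isOpen_convex {V : Type*} [NormedAddCommGroup V]
    [InnerProductSpace ℝ V] [FiniteDimensional ℝ V] (F : V → ℝ)
    (hF : ContDiff ℝ (⊤ : ℕ∞) F)
    (hconv : ∀ p v : V, v ≠ 0 → 0 < fderiv ℝ (fderiv ℝ F) p v v) :
    IsOpen (stabilitySet F) ∧ Convex ℝ (stabilitySet F) := by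
  have hFc : Continuous F := hF.continuous
  constructor
  · rw [Metric.isOpen_iff]
    intro ℓ hℓ
    have hℓ' : Stable fun x => F x - ℓ x := hℓ
    obtain ⟨δ, hδ, C, hgrow⟩ := stable_linear_growth (hFc.sub ℓ.continuous) hℓ'
      (fun x => ray_convexOn F hF hconv ℓ x)
    refine ⟨δ / 2, by positivity, fun ℓ' hd => ?_⟩
    have hd' : ‖ℓ' - ℓ‖ < δ / 2 := by rwa [← dist_eq_norm]
    show Stable fun x => F x - ℓ' x
    have key : ∀ x, (δ / 2) * ‖x‖ - C ≤ F x - ℓ' x := by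
      intro x
      have h1 : δ * ‖x‖ - C ≤ F x - ℓ x := hgrow x
      have h2 : ℓ' x - ℓ x ≤ ‖ℓ' - ℓ‖ * ‖x‖ := by
        calc ℓ' x - ℓ x = (ℓ' - ℓ) x := by simp
          _ ≤ ‖(ℓ' - ℓ) x‖ := le_abs_self _
          _ ≤ ‖ℓ' - ℓ‖ * ‖x‖ := (ℓ' - ℓ).le_opNorm x
      nlinarith [norm_nonneg x, norm_nonneg (ℓ' - ℓ)]
    have htend : Tendsto (fun x : V => (δ / 2) * ‖x‖ - C) (cobounded V) atTop := by
      have h1 : Tendsto (fun x : V => (δ / 2) * ‖x‖) (cobounded V) atTop :=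
        tendsto_norm_cobounded_atTop.const_mul_atTop (by positivity)
      simpa [sub_eq_add_neg] using tendsto_atTop_add_const_right _ (-C) h1
    exact tendsto_atTop_mono key htend
  · intro ℓ₁ h₁ ℓ₂ h₂ a b ha hb hab
    have h₁' : Stable fun x => F x - ℓ₁ x := h₁
    have h₂' : Stable fun x => F x - ℓ₂ x := h₂
    show Stable fun x => F x - (a • ℓ₁ + b • ℓ₂) x
    rcases eq_or_lt_of_le ha with ha0 | ha0
    · have hb1 : b = 1 := by linarith
      have : (fun x => F x - (a • ℓ₁ + b • ℓ₂) x) = fun x => F x - ℓ₂ x := by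
        funext x; simp [← ha0, hb1]
      rw [this]; exact h₂'
    · obtain ⟨m, hm⟩ := stable_bddBelow (hFc.sub ℓ₂.continuous) h₂'
      have key : ∀ x, a * (F x - ℓ₁ x) + b * m ≤ F x - (a • ℓ₁ + b • ℓ₂) x := by
        intro x
        have := hm x
        simp only [ContinuousLinearMap.add_apply, ContinuousLinearMap.coe_smul',
          Pi.smul_apply, smul_eq_mul]
        have heq : F x - (a * ℓ₁ x + b * ℓ₂ x)
            = a * (F x - ℓ₁ x) + b * (F x - ℓ₂ x) := by
          have h1 : a = 1 - b := by linarith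
          rw [h1]; ring
        rw [heq]
        have h2 : b * m ≤ b * (F x - ℓ₂ x) := mul_le_mul_of_nonneg_left this hb
        linarith
      have htend : Tendsto (fun x : V => a * (F x - ℓ₁ x) + b * m) (cobounded V) atTop :=
        tendsto_atTop_add_const_right _ _ (h₁'.const_mul_atTop ha0)
      exact tendsto_atTop_mono key htend
end

section
/- Let α₁, …, α_N ∈ V* (N ≥ 1) and c₁, …, c_N > 0, and define F : V → ℝ by F(x) = Σᵢ cᵢ · e^{αᵢ(x)}. Then F is stable if and only if 0 is contained in the interior of the convex hull of {α₁, …, α_N} in V*. (Proposition 3.) -/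
open Filter Bornology Metric Set

section DualCharacterization

variable {V : Type*} [NormedAddCommGroup V] [NormedSpace ℝ V]

theorem exists_mul_norm_le_apply_of_closedBall_subset {S : Set (V →L[ℝ] ℝ)} {r : ℝ}
    (hr : 0 ≤ r) (hS : closedBall 0 r ⊆ S) (x : V) : ∃ φ ∈ S, r * ‖x‖ ≤ φ x := by
  obtain ⟨g, hg, hgx⟩ := exists_dual_vector'' ℝ x
  refine ⟨r • g, hS ?_, ?_⟩
  · rw [mem_closedBall_zero_iff, norm_smul, Real.norm_of_nonneg hr]
    exact mul_le_of_le_one_right hr hg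
  · simp [hgx]

variable [FiniteDimensional ℝ V]

theorem exists_eq_apply_of_doubleDual (f : (V →L[ℝ] ℝ) →L[ℝ] ℝ) :
    ∃ w : V, ∀ φ : V →L[ℝ] ℝ, f φ = φ w := by
  let f' : Module.Dual ℝ (Module.Dual ℝ V) :=
    f.toLinearMap ∘ₗ LinearMap.toContinuousLinearMap.toLinearMap
  exact ⟨(Module.evalEquiv ℝ V).symm f',
    fun φ => (Module.apply_evalEquiv_symm_apply ℝ V φ.toLinearMap f').symm⟩

theorem ball_subset_of_forall_exists_mul_norm_le {K : Set (V →L[ℝ] ℝ)} (hconv : Convex ℝ K)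
    (hclosed : IsClosed K) {r : ℝ} (h : ∀ x : V, ∃ φ ∈ K, r * ‖x‖ ≤ φ x) : ball 0 r ⊆ K := by
  intro ψ hψ
  by_contra hψK
  obtain ⟨f, u, hfK, hfψ⟩ := geometric_hahn_banach_closed_point hconv hclosed hψK
  obtain ⟨w, hw⟩ := exists_eq_apply_of_doubleDual f
  obtain ⟨φ, hφK, hφw⟩ := h w
  have hφu : φ w < u := hw φ ▸ hfK φ hφK
  have hψw : ψ w ≤ r * ‖w‖ := calc
    ψ w ≤ ‖ψ‖ * ‖w‖ := (le_abs_self _).trans (ψ.le_opNorm w)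
    _ ≤ r * ‖w‖ := by gcongr; exact (mem_ball_zero_iff.mp hψ).le
  linarith [hw ψ]

theorem zero_mem_interior_iff_exists_mul_norm_le {K : Set (V →L[ℝ] ℝ)} (hconv : Convex ℝ K)
    (hclosed : IsClosed K) :
    (0 : V →L[ℝ] ℝ) ∈ interior K ↔ ∃ r > 0, ∀ x : V, ∃ φ ∈ K, r * ‖x‖ ≤ φ x := by
  constructor
  · intro h
    obtain ⟨r, hr, hrK⟩ := nhds_basis_closedBall.mem_iff.mp (mem_interior_iff_mem_nhds.mp h)
    exact ⟨r, hr, exists_mul_norm_le_apply_of_closedBall_subset hr.le hrK⟩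
  · rintro ⟨r, hr, h⟩
    exact interior_maximal (ball_subset_of_forall_exists_mul_norm_le hconv hclosed h) isOpen_ball
      (mem_ball_self hr)

end DualCharacterization

section FiniteFamily

variable {V : Type*} [NormedAddCommGroup V] [NormedSpace ℝ V] {ι : Type*} (α : ι → V →L[ℝ] ℝ)

theorem exists_mem_convexHull_mul_norm_le_iff (r : ℝ) :
    (∀ x : V, ∃ φ ∈ convexHull ℝ (range α), r * ‖x‖ ≤ φ x) ↔ ∀ x : V, ∃ i, r * ‖x‖ ≤ α i x := by
  refine forall_congr' fun x => ⟨fun ⟨φ, hφ, hφx⟩ => ?_, fun ⟨i, hi⟩ => ?_⟩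
  · obtain ⟨_, ⟨i, rfl⟩, hi⟩ := ((ContinuousLinearMap.apply ℝ ℝ x).toLinearMap.convexOn
      (convex_convexHull ℝ _)).exists_ge_of_mem_convexHull (subset_convexHull ℝ _) hφ
    exact ⟨i, hφx.trans hi⟩
  · exact ⟨α i, subset_convexHull ℝ _ (mem_range_self i), hi⟩

variable [Fintype ι]

theorem exists_pos_mul_norm_le_of_forall_ne_zero [Nonempty ι] [FiniteDimensional ℝ V]
    (h : ∀ x ≠ 0, ∃ i, 0 < α i x) : ∃ r > 0, ∀ x : V, ∃ i, r * ‖x‖ ≤ α i x := by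
  let g : V → ℝ := fun x => Finset.univ.sup' Finset.univ_nonempty fun i => α i x
  have hg : Continuous g := Continuous.finset_sup'_apply _ fun i _ => (α i).continuous
  have hpos : ∀ u ∈ sphere (0 : V) 1, 0 < g u := fun u hu => by
    obtain ⟨i, hi⟩ := h u (ne_zero_of_mem_unit_sphere ⟨u, hu⟩)
    exact hi.trans_le (Finset.le_sup' (fun i => α i u) (Finset.mem_univ i))
  obtain ⟨r, hr, hrg⟩ := (isCompact_sphere (0 : V) 1).exists_forall_le' hg.continuousOn hpos
  refine ⟨r, hr, fun x => ?_⟩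
  rcases eq_or_ne x 0 with rfl | hx
  · exact ⟨Classical.arbitrary ι, by simp⟩
  have hx' : 0 < ‖x‖ := norm_pos_iff.mpr hx
  obtain ⟨i, -, hi⟩ := Finset.exists_mem_eq_sup' Finset.univ_nonempty fun i => α i (‖x‖⁻¹ • x)
  refine ⟨i, ?_⟩
  have := hrg (‖x‖⁻¹ • x) (by simp [norm_smul, hx'.ne'])
  rw [show g (‖x‖⁻¹ • x) = _ from hi, map_smul, smul_eq_mul, le_inv_mul_iff₀ hx'] at this
  linarith

theorem stable_exp_sum_of_mul_norm_le {c : ι → ℝ} (hc : ∀ i, 0 < c i) {r : ℝ} (hr : 0 < r)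
    (h : ∀ x : V, ∃ i, r * ‖x‖ ≤ α i x) : Stable fun x => ∑ i, c i * Real.exp (α i x) := by
  have : Nonempty ι := ⟨(h 0).choose⟩
  obtain ⟨i₀, hi₀⟩ := Finite.exists_min c
  have hlower : ∀ x : V, c i₀ * Real.exp (r * ‖x‖) ≤ ∑ i, c i * Real.exp (α i x) := fun x => by
    obtain ⟨i, hi⟩ := h x
    calc c i₀ * Real.exp (r * ‖x‖) ≤ c i * Real.exp (α i x) :=
          mul_le_mul (hi₀ i) (Real.exp_le_exp.mpr hi) (Real.exp_pos _).le (hc i).le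
      _ ≤ ∑ i, c i * Real.exp (α i x) :=
        Finset.single_le_sum (f := fun i => c i * Real.exp (α i x))
          (fun i _ => by have := hc i; positivity) (Finset.mem_univ i)
  refine tendsto_atTop_mono hlower (Tendsto.const_mul_atTop (hc i₀) ?_)
  exact Real.tendsto_exp_atTop.comp (tendsto_norm_cobounded_atTop.const_mul_atTop hr)

theorem exists_pos_apply_of_stable_exp_sum {c : ι → ℝ} (hc : ∀ i, 0 ≤ c i)
    (hF : Stable fun x => ∑ i, c i * Real.exp (α i x)) {x : V} (hx : x ≠ 0) : ∃ i, 0 < α i x := by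
  by_contra! hneg
  have hray : Tendsto (fun t : ℝ => t • x) atTop (cobounded V) := by
    rw [← tendsto_norm_atTop_iff_cobounded]
    simp_rw [norm_smul, Real.norm_eq_abs]
    exact tendsto_abs_atTop_atTop.atTop_mul_const (norm_pos_iff.mpr hx)
  obtain ⟨t, hbig, ht⟩ :=
    ((hF.comp hray).eventually_gt_atTop (∑ i, c i)).and (eventually_ge_atTop 0) |>.exists
  have hsmall : ∑ i, c i * Real.exp (α i (t • x)) ≤ ∑ i, c i := Finset.sum_le_sum fun i _ => by
    have : α i (t • x) ≤ 0 := by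
      rw [map_smul, smul_eq_mul]; exact mul_nonpos_of_nonneg_of_nonpos ht (hneg i)
    exact mul_le_of_le_one_right (hc i) (Real.exp_le_one_iff.mpr this)
  exact hsmall.not_gt hbig

end FiniteFamily

/-- Proposition 3: `F(x) = Σᵢ cᵢ e^{αᵢ(x)}` (with all `cᵢ > 0`) is stable if and only if
`0` lies in the interior of the convex hull of the `αᵢ` in `V*`. -/
theorem exp_sum_stable_iff {V : Type*} [NormedAddCommGroup V]
    [InnerProductSpace ℝ V] [FiniteDimensional ℝ V] {N : ℕ} (hN : 1 ≤ N)
    (α : Fin N → V →L[ℝ] ℝ) (c : Fin N → ℝ) (hc : ∀ i, 0 < c i) :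
    Stable (fun x : V => ∑ i, c i * Real.exp (α i x)) ↔
      (0 : V →L[ℝ] ℝ) ∈ interior (convexHull ℝ (Set.range α)) := by
  have : Nonempty (Fin N) := ⟨⟨0, hN⟩⟩
  rw [zero_mem_interior_iff_exists_mul_norm_le (convex_convexHull ℝ _)
    ((finite_range α).isCompact_convexHull (𝕜 := ℝ)).isClosed]
  simp only [exists_mem_convexHull_mul_norm_le_iff]
  constructor
  · intro hF
    exact exists_pos_mul_norm_le_of_forall_ne_zero α
      fun x hx => exists_pos_apply_of_stable_exp_sum α (fun i => (hc i).le) hF hx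
  · rintro ⟨r, hr, h⟩
    exact stable_exp_sum_of_mul_norm_le α hc hr h
end

section
/- Let α₁, …, α_N ∈ V* (N ≥ 1) and c₁, …, c_N > 0, and define F : V → ℝ by F(x) = Σᵢ cᵢ · e^{αᵢ(x)} (note F > 0 everywhere, so log F is defined). Then the stability set of log F equals the interior of the convex hull of {α₁, …, α_N} in V*: S_{log F} = int(conv{α₁, …, α_N}). (Corollary to Proposition 3.) -/
open Filter Set

section Stable

variable {V : Type*} [NormedAddCommGroup V]

theorem stable_of_forall_add_mul_norm_le {f : V → ℝ} {C ε : ℝ} (hε : 0 < ε)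
    (hf : ∀ x, C + ε * ‖x‖ ≤ f x) : Stable f :=
  tendsto_atTop_mono hf <| tendsto_atTop_add_const_left _ C <|
    tendsto_norm_cobounded_atTop.const_mul_atTop hε

theorem not_stable_of_forall_smul_le [NormedSpace ℝ V] {f : V → ℝ} {v : V} (hv : v ≠ 0) {M : ℝ}
    (hf : ∀ t : ℝ, 0 ≤ t → f (t • v) ≤ M) : ¬ Stable f := by
  intro hstab
  have hray : Tendsto (fun t : ℝ => t • v) atTop (Bornology.cobounded V) := by
    simp_rw [← tendsto_norm_atTop_iff_cobounded, norm_smul, Real.norm_eq_abs]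
    exact tendsto_abs_atTop_atTop.atTop_mul_const (norm_pos_iff.mpr hv)
  obtain ⟨t, ht, hM⟩ :=
    ((hstab.comp hray).eventually_gt_atTop M |>.and (eventually_ge_atTop 0)).exists
  exact (hf t hM).not_gt ht

end Stable

section LogSumExp

variable {ι : Type*} [Fintype ι] {c : ι → ℝ} (a : ι → ℝ)

theorem log_add_le_log_sum_mul_exp (hc : ∀ i, 0 < c i) (i : ι) :
    Real.log (c i) + a i ≤ Real.log (∑ j, c j * Real.exp (a j)) := by
  have hpos : ∀ j, 0 < c j * Real.exp (a j) := fun j => mul_pos (hc j) (Real.exp_pos _)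
  rw [← Real.log_exp (a i), ← Real.log_mul (hc i).ne' (Real.exp_pos _).ne']
  exact Real.log_le_log (hpos i)
    (Finset.single_le_sum (fun j _ => (hpos j).le) (Finset.mem_univ i))

theorem log_sum_mul_exp_le [Nonempty ι] (hc : ∀ i, 0 < c i) {b : ℝ} (hab : ∀ i, a i ≤ b) :
    Real.log (∑ j, c j * Real.exp (a j)) ≤ Real.log (∑ j, c j) + b := by
  have hsum : 0 < ∑ j, c j := Finset.sum_pos (fun j _ => hc j) Finset.univ_nonempty
  rw [← Real.log_exp b, ← Real.log_mul hsum.ne' (Real.exp_pos _).ne', Finset.sum_mul]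
  exact Real.log_le_log (Finset.sum_pos (fun j _ => mul_pos (hc j) (Real.exp_pos _))
    Finset.univ_nonempty) (Finset.sum_le_sum fun j _ =>
      mul_le_mul_of_nonneg_left (Real.exp_le_exp.mpr (hab j)) (hc j).le)

end LogSumExp

section Separation

variable {E : Type*} [NormedAddCommGroup E] [NormedSpace ℝ E] [FiniteDimensional ℝ E]

theorem Convex.exists_ne_zero_forall_apply_eq_of_interior_eq_empty {K : Set E}
    (hK : Convex ℝ K) (hne : K.Nonempty) (hint : interior K = ∅) :
    ∃ f : StrongDual ℝ E, f ≠ 0 ∧ ∀ a ∈ K, ∀ b ∈ K, f a = f b := by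
  have hspan : vectorSpan ℝ K ≠ ⊤ := by
    rw [Ne, ← AffineSubspace.affineSpan_eq_top_iff_vectorSpan_eq_top_of_nonempty ℝ E E hne,
      ← hK.interior_nonempty_iff_affineSpan_eq_top, hint]
    exact not_nonempty_empty
  obtain ⟨f, hf, hmap⟩ := Submodule.exists_dual_map_eq_bot_of_lt_top hspan.lt_top inferInstance
  refine ⟨LinearMap.toContinuousLinearMap f, by simpa using hf, fun a ha b hb => ?_⟩
  have hab : f (a - b) ∈ (vectorSpan ℝ K).map f :=
    Submodule.mem_map_of_mem (vsub_mem_vectorSpan ℝ ha hb)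
  rw [hmap, Submodule.mem_bot, map_sub, sub_eq_zero] at hab
  exact hab

theorem Convex.exists_ne_zero_forall_apply_le_of_notMem_interior {K : Set E} (hK : Convex ℝ K)
    (hne : K.Nonempty) {x : E} (hx : x ∉ interior K) :
    ∃ f : StrongDual ℝ E, f ≠ 0 ∧ ∀ a ∈ K, f a ≤ f x := by
  rcases (interior K).eq_empty_or_nonempty with hint | hint
  · obtain ⟨f, hf, hconst⟩ := hK.exists_ne_zero_forall_apply_eq_of_interior_eq_empty hne hint
    obtain ⟨k, hk⟩ := hne
    rcases le_total (f k) (f x) with hkx | hxk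
    · exact ⟨f, hf, fun a ha => hconst a ha k hk ▸ hkx⟩
    · exact ⟨-f, neg_ne_zero.mpr hf, fun a ha => by simpa [hconst a ha k hk] using hxk⟩
  · exact geometric_hahn_banach_of_nonempty_interior_point hK hx hint

end Separation

theorem NormedSpace.inclusionInDoubleDual_surjective {V : Type*} [NormedAddCommGroup V]
    [InnerProductSpace ℝ V] [CompleteSpace V] :
    Function.Surjective (NormedSpace.inclusionInDoubleDual ℝ V) := by
  intro Φ
  refine ⟨(InnerProductSpace.toDual ℝ V).symm (Φ.comp (innerSL ℝ)),
    ContinuousLinearMap.ext fun β => ?_⟩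
  rw [NormedSpace.dual_def, ← InnerProductSpace.toDual_symm_apply, real_inner_comm,
    InnerProductSpace.toDual_symm_apply]
  exact congrArg Φ (ContinuousLinearMap.ext fun w => InnerProductSpace.toDual_symm_apply)

section ConvexHullOfFunctionals

variable {E : Type*} [NormedAddCommGroup E] [NormedSpace ℝ E]

theorem exists_apply_le_of_mem_convexHull {ι : Type*} [Finite ι] [Nonempty ι]
    (α : ι → StrongDual ℝ E) {β : StrongDual ℝ E} (hβ : β ∈ convexHull ℝ (range α)) (x : E) :
    ∃ i, β x ≤ α i x := by
  obtain ⟨i, hi⟩ := Finite.exists_max fun i => α i x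
  refine ⟨i, convexHull_min ?_ (convex_halfSpace_le (f := fun γ : StrongDual ℝ E => γ x)
    ⟨fun _ _ => rfl, fun _ _ => rfl⟩ _) hβ⟩
  rintro _ ⟨j, rfl⟩
  exact hi j

theorem exists_pos_forall_exists_add_mul_norm_le_of_mem_interior {K : Set (StrongDual ℝ E)}
    {ℓ : StrongDual ℝ E} (hℓ : ℓ ∈ interior K) :
    ∃ ε > 0, ∀ x, ∃ β ∈ K, ℓ x + ε * ‖x‖ ≤ β x := by
  obtain ⟨ε, hε, hball⟩ :=
    Metric.nhds_basis_closedBall.mem_iff.mp (mem_interior_iff_mem_nhds.mp hℓ)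
  refine ⟨ε, hε, fun x => ?_⟩
  obtain ⟨g, hg, hgx⟩ := exists_dual_vector'' ℝ x
  refine ⟨ℓ + ε • g, hball ?_, by simp [hgx]⟩
  rw [Metric.mem_closedBall, dist_eq_norm, add_sub_cancel_left, norm_smul,
    Real.norm_of_nonneg hε.le]
  exact mul_le_of_le_one_right hε.le hg

end ConvexHullOfFunctionals

theorem exists_ne_zero_forall_apply_le_of_notMem_interior_convexHull {V ι : Type*}
    [NormedAddCommGroup V] [InnerProductSpace ℝ V] [FiniteDimensional ℝ V] [Nonempty ι]
    (α : ι → StrongDual ℝ V) {ℓ : StrongDual ℝ V} (hℓ : ℓ ∉ interior (convexHull ℝ (range α))) :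
    ∃ v : V, v ≠ 0 ∧ ∀ i, α i v ≤ ℓ v := by
  obtain ⟨Φ, hΦ, hΦα⟩ :=
    (convex_convexHull ℝ (range α)).exists_ne_zero_forall_apply_le_of_notMem_interior
      ((range_nonempty α).mono (subset_convexHull ℝ _)) hℓ
  obtain ⟨v, rfl⟩ := NormedSpace.inclusionInDoubleDual_surjective Φ
  refine ⟨v, ?_, fun i => hΦα (α i) (subset_convexHull ℝ _ (mem_range_self i))⟩
  rintro rfl
  exact hΦ (map_zero _)

/-- Corollary to Proposition 3: the stability set of `log (Σᵢ cᵢ e^{αᵢ(x)})` is the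
interior of the convex hull of the `αᵢ` in `V*`. -/
theorem stabilitySet_log_exp_sum {V : Type*} [NormedAddCommGroup V]
    [InnerProductSpace ℝ V] [FiniteDimensional ℝ V] {N : ℕ} (hN : 1 ≤ N)
    (α : Fin N → V →L[ℝ] ℝ) (c : Fin N → ℝ) (hc : ∀ i, 0 < c i) :
    stabilitySet (fun x : V => Real.log (∑ i, c i * Real.exp (α i x))) =
      interior (convexHull ℝ (Set.range α)) := by
  have : Nonempty (Fin N) := ⟨⟨0, hN⟩⟩
  ext ℓ
  constructor
  · intro hstab
    by_contra hℓ
    obtain ⟨v, hv, hαv⟩ := exists_ne_zero_forall_apply_le_of_notMem_interior_convexHull α hℓ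
    refine not_stable_of_forall_smul_le hv (M := Real.log (∑ i, c i)) (fun t ht => ?_) hstab
    have := log_sum_mul_exp_le (fun i => α i (t • v)) hc (b := ℓ (t • v))
      fun i => by simpa using mul_le_mul_of_nonneg_left (hαv i) ht
    linarith
  · intro hℓ
    obtain ⟨ε, hε, hgrowth⟩ := exists_pos_forall_exists_add_mul_norm_le_of_mem_interior hℓ
    obtain ⟨C, hC⟩ := Finite.exists_ge fun i => Real.log (c i)
    refine stable_of_forall_add_mul_norm_le hε (C := C) fun x => ?_
    obtain ⟨β, hβ, hβx⟩ := hgrowth x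
    obtain ⟨i, hi⟩ := exists_apply_le_of_mem_convexHull α hβ x
    have := log_add_le_log_sum_mul_exp (fun i => α i x) hc i
    linarith [hC i]
end

section
/- If F : V → ℝ is smooth and strictly convex (positive definite second derivative at every point), then the Legendre transform L_F : V → V*, p ↦ dF_p, is injective and its range is exactly the stability set S_F; that is, L_F maps V bijectively onto S_F. (Proposition 4.) -/
open Filter

section Aux

variable {V : Type*} [NormedAddCommGroup V] [InnerProductSpace ℝ V] [FiniteDimensional ℝ V]
  {F : V → ℝ}

private lemma line_hasDerivAt (p v : V) (t : ℝ) :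
    HasDerivAt (fun t : ℝ => p + t • v) v t := by
  simpa using ((hasDerivAt_id t).smul_const v).const_add p

private lemma aux_hasDerivAt (hF : ContDiff ℝ (⊤ : ℕ∞) F) (p v : V) (t : ℝ) :
    HasDerivAt (fun t : ℝ => F (p + t • v)) (fderiv ℝ F (p + t • v) v) t :=
  ((hF.differentiable (by simp)) (p + t • v)).hasFDerivAt.comp_hasDerivAt t
    (line_hasDerivAt p v t)

private lemma aux_hasDerivAt' (hF : ContDiff ℝ (⊤ : ℕ∞) F) (p v : V) (t : ℝ) :
    HasDerivAt (fun t : ℝ => fderiv ℝ F (p + t • v) v)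
      (fderiv ℝ (fderiv ℝ F) (p + t • v) v v) t := by
  have hG : Differentiable ℝ (fderiv ℝ F) := (hF.fderiv_right (WithTop.coe_le_coe.mpr le_top) : ContDiff ℝ 1 (fderiv ℝ F)).differentiable one_ne_zero
  have h1 : HasDerivAt (fun t : ℝ => fderiv ℝ F (p + t • v))
      (fderiv ℝ (fderiv ℝ F) (p + t • v) v) t :=
    (hG (p + t • v)).hasFDerivAt.comp_hasDerivAt t (line_hasDerivAt p v t)
  have := ((ContinuousLinearMap.apply ℝ ℝ v).hasFDerivAt).comp_hasDerivAt t h1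
  exact this

private lemma aux_strictMono (hF : ContDiff ℝ (⊤ : ℕ∞) F)
    (hconv : ∀ p v : V, v ≠ 0 → 0 < fderiv ℝ (fderiv ℝ F) p v v)
    (p : V) {v : V} (hv : v ≠ 0) :
    StrictMono (fun t : ℝ => fderiv ℝ F (p + t • v) v) :=
  strictMono_of_deriv_pos fun t => by
    rw [(aux_hasDerivAt' hF p v t).deriv]; exact hconv _ v hv

end Aux

/-- Proposition 4: the Legendre transform `p ↦ dF_p` of a smooth strictly convex
function maps `V` bijectively onto the stability set `S_F`. -/
theorem legendre_transform_bijective_onto_stabilitySet {V : Type*} [NormedAddCommGroup V]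
    [InnerProductSpace ℝ V] [FiniteDimensional ℝ V] (F : V → ℝ)
    (hF : ContDiff ℝ (⊤ : ℕ∞) F)
    (hconv : ∀ p v : V, v ≠ 0 → 0 < fderiv ℝ (fderiv ℝ F) p v v) :
    Function.Injective (fun p : V => fderiv ℝ F p) ∧
      Set.range (fun p : V => fderiv ℝ F p) = stabilitySet F := by
  have hd : Differentiable ℝ F := hF.differentiable (by simp)
  constructor
  · -- injectivity
    intro p q h
    by_contra hpq
    have hv : q - p ≠ 0 := sub_ne_zero.mpr (Ne.symm hpq)
    have hm := aux_strictMono hF hconv p hv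
    have h01 : (fun t : ℝ => fderiv ℝ F (p + t • (q - p)) (q - p)) 0 <
        (fun t : ℝ => fderiv ℝ F (p + t • (q - p)) (q - p)) 1 := hm zero_lt_one
    simp only [zero_smul, add_zero, one_smul, add_sub_cancel] at h01
    rw [show fderiv ℝ F p = fderiv ℝ F q from h] at h01
    exact lt_irrefl _ h01
  · apply Set.Subset.antisymm
    · -- range ⊆ stabilitySet
      rintro ℓ ⟨p, rfl⟩
      simp only [stabilitySet, Stable, Set.mem_setOf_eq]
      rcases subsingleton_or_nontrivial V with hV | hV
      · haveI : Finite V := Finite.of_subsingleton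
        rw [Bornology.cobounded_eq_bot]
        exact tendsto_bot
      · set ℓ := fderiv ℝ F p with hℓ
        set G : V → ℝ := fun x => F x - ℓ x with hG
        -- φ v := derivative of G along v at p + v, positive for v ≠ 0
        set φ : V → ℝ := fun v => fderiv ℝ F (p + v) v - ℓ v with hφ
        have hφcont : Continuous φ := by
          have h1 : Continuous fun v : V => fderiv ℝ F (p + v) :=
            (((hF.fderiv_right (WithTop.coe_le_coe.mpr le_top) : ContDiff ℝ 1 (fderiv ℝ F)).differentiable one_ne_zero).continuous).comp
              (continuous_const.add continuous_id)
          exact (h1.clm_apply continuous_id).sub ℓ.continuous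
        have hφpos : ∀ v : V, v ≠ 0 → 0 < φ v := by
          intro v hv
          have hm := aux_strictMono hF hconv p hv
          have h01 : (fun t : ℝ => fderiv ℝ F (p + t • v) v) 0 <
              (fun t : ℝ => fderiv ℝ F (p + t • v) v) 1 := hm zero_lt_one
          simp only [zero_smul, add_zero, one_smul] at h01
          simpa [hφ, hℓ] using sub_pos.mpr h01
        -- minimum of φ on unit sphere
        obtain ⟨v₀, hv₀, hmin⟩ :=
          (isCompact_sphere (0 : V) 1).exists_isMinOn
            (NormedSpace.sphere_nonempty.mpr zero_le_one) hφcont.continuousOn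
        set c : ℝ := φ v₀ with hc
        have hcpos : 0 < c := hφpos v₀ (by
          intro h; rw [h] at hv₀; simp at hv₀)
        -- minimum of G on sphere p 1
        obtain ⟨w₀, hw₀, hminG⟩ :=
          (isCompact_sphere p 1).exists_isMinOn
            (NormedSpace.sphere_nonempty.mpr zero_le_one)
            ((hd.continuous.sub ℓ.continuous).continuousOn)
        set m : ℝ := G w₀ with hm
        -- key bound
        have key : ∀ x : V, 1 ≤ ‖x - p‖ → m + c * (‖x - p‖ - 1) ≤ G x := by
          intro x hx
          set r : ℝ := ‖x - p‖ with hr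
          have hr0 : 0 < r := lt_of_lt_of_le one_pos hx
          set v : V := r⁻¹ • (x - p) with hvdef
          have hvnorm : ‖v‖ = 1 := by
            rw [hvdef, norm_smul, norm_inv, norm_norm, ← hr, inv_mul_cancel₀ hr0.ne']
          have hvne : v ≠ 0 := by
            intro h; rw [h, norm_zero] at hvnorm; norm_num at hvnorm
          have hxeq : x = p + r • v := by
            rw [hvdef, smul_smul, mul_inv_cancel₀ hr0.ne', one_smul]
            abel
          -- G along the ray
          have hGd : ∀ t : ℝ, HasDerivAt (fun t : ℝ => G (p + t • v))
              (fderiv ℝ F (p + t • v) v - ℓ v) t := fun t =>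
            (aux_hasDerivAt hF p v t).sub (((ℓ.hasFDerivAt).comp_hasDerivAt t
              (line_hasDerivAt p v t)))
          -- derivative ≥ c on [1, ∞)
          have hderge : ∀ t ∈ Set.Ici (1 : ℝ), c ≤ fderiv ℝ F (p + t • v) v - ℓ v := by
            intro t ht
            have h1 : fderiv ℝ F (p + (1 : ℝ) • v) v ≤ fderiv ℝ F (p + t • v) v :=
              (aux_strictMono hF hconv p hvne).monotone ht
            have h2 : c ≤ φ v := hmin (by simpa [Metric.mem_sphere, dist_eq_norm] using hvnorm)
            simp only [hφ, one_smul] at h1 h2 ⊢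
            linarith
          -- ψ t := G (p + t • v) - c * t is monotone on [1, ∞)
          have hψd : ∀ t : ℝ, HasDerivAt (fun t : ℝ => G (p + t • v) - c * t)
              (fderiv ℝ F (p + t • v) v - ℓ v - c) t := by
            intro t
            have h2 : HasDerivAt (fun t : ℝ => c * t) c t := by
              simpa using (hasDerivAt_id t).const_mul c
            exact (hGd t).sub h2
          have hψ : MonotoneOn (fun t : ℝ => G (p + t • v) - c * t) (Set.Ici 1) := by
            apply monotoneOn_of_deriv_nonneg (convex_Ici 1)
            · exact fun t _ => ((hψd t).differentiableAt).continuousAt.continuousWithinAt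
            · intro t ht
              exact ((hψd t).differentiableAt).differentiableWithinAt
            · intro t ht
              rw [interior_Ici] at ht
              rw [(hψd t).deriv]
              have := hderge t (Set.mem_Ici.mpr (le_of_lt (Set.mem_Ioi.mp ht)))
              linarith
          have h1r : (fun t : ℝ => G (p + t • v) - c * t) 1 ≤
              (fun t : ℝ => G (p + t • v) - c * t) r :=
            hψ (by simp) (by exact hx) hx
          have hG1 : m ≤ G (p + (1 : ℝ) • v) := by
            apply hminG
            simp [Metric.mem_sphere, dist_eq_norm, hvnorm]
          simp only at h1r
          rw [hxeq]
          have : G (p + (1:ℝ) • v) - c * 1 ≤ G (p + r • v) - c * r := h1r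
          linarith
        -- conclude tendsto
        have hnorm : Tendsto (fun x : V => ‖x - p‖) (Bornology.cobounded V) atTop := by
          apply tendsto_atTop_mono (fun x => ?_)
            (tendsto_atTop_add_const_right _ (-‖p‖) tendsto_norm_cobounded_atTop)
          have := norm_sub_norm_le x p
          linarith
        have hB : Tendsto (fun x : V => m + c * (‖x - p‖ - 1)) (Bornology.cobounded V) atTop := by
          apply tendsto_atTop_add_const_left
          exact (tendsto_atTop_add_const_right _ (-1) hnorm).const_mul_atTop hcpos
        apply tendsto_atTop_mono' _ _ hB
        filter_upwards [hnorm.eventually_ge_atTop 1] with x hx using key x hx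
    · -- stabilitySet ⊆ range
      intro ℓ hℓ
      have hstab : Tendsto (fun x => F x - ℓ x) (Bornology.cobounded V) atTop := hℓ
      rw [Metric.cobounded_eq_cocompact] at hstab
      obtain ⟨p, hp⟩ := (hd.continuous.sub ℓ.continuous).exists_forall_le hstab
      refine ⟨p, ?_⟩
      have hdiff : DifferentiableAt ℝ (fun x => F x - ℓ x) p := (hd p).sub ℓ.differentiableAt
      have hloc : IsLocalMin (fun x => F x - ℓ x) p := (isMinOn_univ_iff.mpr hp).isLocalMin
        (by simp)
      have h0 : fderiv ℝ (fun x => F x - ℓ x) p = 0 := hloc.fderiv_eq_zero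
      rw [fderiv_fun_sub (hd p) ℓ.differentiableAt, ℓ.fderiv, sub_eq_zero] at h0
      exact h0
end

section
/- Let F, F₁ : V → ℝ be smooth and strictly convex (positive definite second derivative at every point), and suppose the difference F₁ − F is bounded on V. Then the ranges of their Legendre transforms coincide: {dF_p : p ∈ V} = {d(F₁)_p : p ∈ V} as subsets of V*. (This is the analytic core of Theorem 10.2: the moment image of a complexified torus orbit is unchanged when the Kähler potential is modified by a bounded invariant function.) -/
open Filter Metric Set

private lemma legendre_range_subset_aux {V : Type*} [NormedAddCommGroup V]
    [InnerProductSpace ℝ V] [FiniteDimensional ℝ V] [Nontrivial V] (F F₁ : V → ℝ)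
    (hF : ContDiff ℝ (⊤ : ℕ∞) F) (hF₁ : ContDiff ℝ (⊤ : ℕ∞) F₁)
    (hconv : ∀ p v : V, v ≠ 0 → 0 < fderiv ℝ (fderiv ℝ F) p v v)
    (C : ℝ) (hbd : ∀ x : V, |F₁ x - F x| ≤ C) :
    Set.range (fun p : V => fderiv ℝ F p) ⊆ Set.range (fun p : V => fderiv ℝ F₁ p) := by
  rintro ℓ ⟨p, rfl⟩
  set ℓ := fderiv ℝ F p with hℓ
  have hFd : Differentiable ℝ F := hF.differentiable (by simp)
  have hF₁d : Differentiable ℝ F₁ := hF₁.differentiable (by simp)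
  have hF'd : Differentiable ℝ (fderiv ℝ F) :=
    (hF.fderiv_right (m := 1) (by exact WithTop.coe_le_coe.mpr le_top)).differentiable (by simp)
  -- derivative of the line
  have lineD : ∀ (u : V) (t : ℝ), HasDerivAt (fun s : ℝ => p + s • u) u t := by
    intro u t
    simpa using ((hasDerivAt_id t).smul_const u).const_add p
  -- first derivative along a line
  have gD : ∀ (u : V) (t : ℝ),
      HasDerivAt (fun s : ℝ => F (p + s • u) - ℓ (p + s • u))
        (fderiv ℝ F (p + t • u) u - ℓ u) t := by
    intro u t
    have h1 : HasDerivAt (fun s : ℝ => F (p + s • u)) (fderiv ℝ F (p + t • u) u) t :=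
      (hFd (p + t • u)).hasFDerivAt.comp_hasDerivAt t (lineD u t)
    have h2 : HasDerivAt (fun s : ℝ => ℓ (p + s • u)) (ℓ u) t :=
      ℓ.hasFDerivAt.comp_hasDerivAt t (lineD u t)
    exact h1.sub h2
  -- second derivative along a line
  have φD : ∀ (u : V) (t : ℝ),
      HasDerivAt (fun s : ℝ => fderiv ℝ F (p + s • u) u)
        (fderiv ℝ (fderiv ℝ F) (p + t • u) u u) t := by
    intro u t
    have h1 : HasDerivAt (fun s : ℝ => fderiv ℝ F (p + s • u))
        (fderiv ℝ (fderiv ℝ F) (p + t • u) u) t :=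
      (hF'd (p + t • u)).hasFDerivAt.comp_hasDerivAt t (lineD u t)
    simpa using h1.clm_apply (hasDerivAt_const t u)
  have φmono : ∀ u : V, u ≠ 0 → StrictMono (fun s : ℝ => fderiv ℝ F (p + s • u) u) := by
    intro u hu
    apply strictMono_of_deriv_pos
    intro t
    rw [(φD u t).deriv]
    exact hconv _ u hu
  -- ψ positive on the unit sphere
  set ψ : V → ℝ := fun u => fderiv ℝ F (p + u) u - ℓ u with hψ
  have ψcont : Continuous ψ := by
    have h1 : Continuous (fderiv ℝ F) := hF'd.continuous
    exact ((h1.comp (continuous_const.add continuous_id)).clm_apply continuous_id).sub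
      ℓ.continuous
  have ψpos : ∀ u : V, ‖u‖ = 1 → 0 < ψ u := by
    intro u hu
    have hune : u ≠ 0 := by
      intro h; rw [h, norm_zero] at hu; norm_num at hu
    have h01 : (0:ℝ) < 1 := one_pos
    have := φmono u hune h01
    simp only [zero_smul, add_zero, one_smul] at this
    have : ℓ u < fderiv ℝ F (p + u) u := by simpa [hℓ] using this
    simpa [hψ] using sub_pos.mpr this
  -- minima over the unit sphere
  obtain ⟨u₀, hu₀, hδ'⟩ := (isCompact_sphere (0:V) 1).exists_isMinOn
    (NormedSpace.sphere_nonempty.mpr zero_le_one) ψcont.continuousOn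
  have hδ : ∀ y ∈ sphere (0:V) 1, ψ u₀ ≤ ψ y := fun y hy => hδ' hy
  set δ := ψ u₀ with hδdef
  have δpos : 0 < δ := ψpos u₀ (by simpa using mem_sphere_zero_iff_norm.mp hu₀)
  obtain ⟨u₁, hu₁, hm'⟩ := (isCompact_sphere (0:V) 1).exists_isMinOn
    (NormedSpace.sphere_nonempty.mpr zero_le_one)
    (((hFd.continuous.comp (continuous_const.add continuous_id)).sub
      (ℓ.continuous.comp (continuous_const.add continuous_id))).continuousOn :
      ContinuousOn (fun u : V => F (p + u) - ℓ (p + u)) (sphere (0:V) 1))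
  have hm : ∀ y ∈ sphere (0:V) 1, F (p + u₁) - ℓ (p + u₁) ≤ F (p + y) - ℓ (p + y) :=
    fun y hy => hm' hy
  set m := F (p + u₁) - ℓ (p + u₁) with hmdef
  -- the coercivity estimate
  have key : ∀ x : V, 1 ≤ ‖x - p‖ → m + δ * (‖x - p‖ - 1) ≤ F x - ℓ x := by
    intro x hx
    set t := ‖x - p‖ with ht
    have htpos : (0:ℝ) < t := lt_of_lt_of_le one_pos hx
    set u := t⁻¹ • (x - p) with hu
    have hunorm : ‖u‖ = 1 := by
      rw [hu, norm_smul, norm_inv, norm_norm, ← ht, inv_mul_cancel₀ htpos.ne']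
    have hune : u ≠ 0 := by
      intro h; rw [h, norm_zero] at hunorm; norm_num at hunorm
    have hxeq : x = p + t • u := by
      rw [hu, smul_smul, mul_inv_cancel₀ htpos.ne', one_smul]
      abel
    set g : ℝ → ℝ := fun s => F (p + s • u) - ℓ (p + s • u) with hg
    have hg1 : m ≤ g 1 := by
      have : p + (1:ℝ) • u = p + u := by rw [one_smul]
      have hmem : u ∈ sphere (0:V) 1 := mem_sphere_zero_iff_norm.mpr hunorm
      simpa [hg, this] using hm u hmem
    have hslope : δ * (t - 1) ≤ g t - g 1 := by
      refine (convex_Ici (1:ℝ)).mul_sub_le_image_sub_of_le_deriv ?_ ?_ ?_ 1 Set.self_mem_Ici t hx hx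
      · have hline : Continuous (fun s : ℝ => p + s • u) :=
          continuous_const.add (continuous_id.smul continuous_const)
        exact ((hFd.continuous.comp hline).sub (ℓ.continuous.comp hline)).continuousOn
      · intro s _
        exact ((gD u s).differentiableAt).differentiableWithinAt
      · intro s hs
        rw [interior_Ici] at hs
        rw [(gD u s).deriv]
        have h1 : ψ u ≤ fderiv ℝ F (p + s • u) u - ℓ u := by
          have := (φmono u hune).le_iff_le.mpr (le_of_lt hs)
          simp only [one_smul] at this
          simpa [hψ] using sub_le_sub_right this (ℓ u)
        have h2 : δ ≤ ψ u := hδ u (mem_sphere_zero_iff_norm.mpr hunorm)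
        linarith
    have : F x - ℓ x = g t := by rw [hg]; rw [hxeq]
    rw [this]
    linarith
  -- the perturbed function tends to infinity at infinity
  have hC : ∀ x : V, F x - C ≤ F₁ x := by
    intro x
    have := abs_le.mp (hbd x)
    linarith [this.1]
  have hnorm_tendsto : Tendsto (fun x : V => ‖x - p‖) (cocompact V) atTop := by
    apply tendsto_atTop_mono (fun x => ?_)
      (tendsto_atTop_add_const_right _ (-‖p‖) tendsto_norm_cocompact_atTop)
    have := norm_sub_norm_le x p
    linarith
  have hev : ∀ᶠ x : V in cocompact V, 1 ≤ ‖x - p‖ := by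
    refine mem_cocompact.mpr ⟨closedBall p 1, isCompact_closedBall p 1, ?_⟩
    intro x hx
    simp only [Set.mem_compl_iff, mem_closedBall, not_le, dist_eq_norm] at hx
    exact hx.le
  have htend : Tendsto (fun x : V => F₁ x - ℓ x) (cocompact V) atTop := by
    refine tendsto_atTop_mono' _ ?_
      (tendsto_atTop_add_const_left _ (m - C - δ) (hnorm_tendsto.const_mul_atTop δpos))
    filter_upwards [hev] with x hx
    have h1 := key x hx
    have h2 := hC x
    have : m - C - δ + δ * ‖x - p‖ = m + δ * (‖x - p‖ - 1) - C := by ring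
    linarith [this]
  -- a global minimum of F₁ - ℓ exists, where the derivative is ℓ
  obtain ⟨q, hq⟩ := ((hF₁d.continuous).sub ℓ.continuous).exists_forall_le htend
  have hloc : IsLocalMin (fun x => F₁ x - ℓ x) q := Filter.Eventually.of_forall hq
  have hfd : fderiv ℝ (fun x => F₁ x - ℓ x) q = 0 := hloc.fderiv_eq_zero
  rw [fderiv_fun_sub (hF₁d q) ℓ.differentiableAt, ℓ.fderiv, sub_eq_zero] at hfd
  exact ⟨q, hfd⟩

/-- Theorem 10.2 (analytic core): two smooth strictly convex functions with bounded
difference have Legendre transforms with the same range in `V*`. -/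
theorem legendre_range_eq_of_bounded_difference {V : Type*} [NormedAddCommGroup V]
    [InnerProductSpace ℝ V] [FiniteDimensional ℝ V] (F F₁ : V → ℝ)
    (hF : ContDiff ℝ (⊤ : ℕ∞) F) (hF₁ : ContDiff ℝ (⊤ : ℕ∞) F₁)
    (hconv : ∀ p v : V, v ≠ 0 → 0 < fderiv ℝ (fderiv ℝ F) p v v)
    (hconv₁ : ∀ p v : V, v ≠ 0 → 0 < fderiv ℝ (fderiv ℝ F₁) p v v)
    (hbd : ∃ C : ℝ, ∀ x : V, |F₁ x - F x| ≤ C) :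
    Set.range (fun p : V => fderiv ℝ F p) = Set.range (fun p : V => fderiv ℝ F₁ p) := by
  obtain ⟨C, hC⟩ := hbd
  rcases subsingleton_or_nontrivial V with hV | hV
  · ext ℓ
    constructor
    · rintro ⟨x, rfl⟩
      exact ⟨x, ContinuousLinearMap.ext fun v => by rw [Subsingleton.elim v 0]; simp⟩
    · rintro ⟨x, rfl⟩
      exact ⟨x, ContinuousLinearMap.ext fun v => by rw [Subsingleton.elim v 0]; simp⟩
  · apply Set.Subset.antisymm
    · exact legendre_range_subset_aux F F₁ hF hF₁ hconv C hC
    · exact legendre_range_subset_aux F₁ F hF₁ hF hconv₁ C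
        (fun x => by rw [abs_sub_comm]; exact hC x)
end

section
/- Let α₁, …, α_N ∈ V* (N ≥ 1) and c₁, …, c_N > 0, and suppose that α₁, …, α_N span V*. Define F : V → ℝ by F(x) = log(1 + Σᵢ cᵢ · e^{αᵢ(x)}). Then F is smooth and strictly convex (positive definite second derivative at every point), and the range of its Legendre transform, {dF_x : x ∈ V}, equals the interior of the convex hull of {0, α₁, …, α_N} in V*. (This is Theorem 10.1 in coordinates: the moment image of the complexified torus orbit through a point of projective space with homogeneous coordinates giving the constants cᵢ is the interior of the convex hull of 0 and the shifted weights αᵢ; in particular it is a convex polytope.) -/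
open Real Finset Filter

section MomentAux

variable {V : Type*} [NormedAddCommGroup V] [InnerProductSpace ℝ V] [FiniteDimensional ℝ V]
  {N : ℕ} (α : Fin N → V →L[ℝ] ℝ) (c : Fin N → ℝ)

/-- The denominator `1 + Σ cᵢ e^{αᵢ x}`. -/
noncomputable def gfun (x : V) : ℝ := 1 + ∑ i, c i * Real.exp (α i x)

/-- The derivative of `gfun`. -/
noncomputable def Gmap (x : V) : V →L[ℝ] ℝ := ∑ i, (c i * Real.exp (α i x)) • α i

/-- The derivative of `F = log ∘ gfun` (the Legendre transform / moment map). -/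
noncomputable def Dmap (x : V) : V →L[ℝ] ℝ := (gfun α c x)⁻¹ • Gmap α c x

/-- The derivative of `Gmap`. -/
noncomputable def Kmap (x : V) : V →L[ℝ] (V →L[ℝ] ℝ) :=
  ∑ i, ((c i * Real.exp (α i x)) • α i).smulRight (α i)

/-- The second derivative of `F`. -/
noncomputable def Hmap (x : V) : V →L[ℝ] (V →L[ℝ] ℝ) :=
  (gfun α c x)⁻¹ • Kmap α c x + ((-(gfun α c x ^ 2)⁻¹) • Gmap α c x).smulRight (Gmap α c x)

lemma gpos (hc : ∀ i, 0 < c i) (x : V) : 0 < gfun α c x := by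
  have : ∀ i ∈ Finset.univ, 0 ≤ c i * Real.exp (α i x) :=
    fun i _ => le_of_lt (mul_pos (hc i) (Real.exp_pos _))
  have := Finset.sum_nonneg this
  unfold gfun; linarith

lemma hasFDerivAt_w (i : Fin N) (x : V) :
    HasFDerivAt (fun y => c i * Real.exp (α i y)) ((c i * Real.exp (α i x)) • α i) x := by
  simpa [smul_smul] using (((α i).hasFDerivAt (x := x)).exp.const_mul (c i))

lemma hasFDerivAt_g (x : V) : HasFDerivAt (gfun α c) (Gmap α c x) x := by
  unfold gfun Gmap
  exact (HasFDerivAt.fun_sum (fun i _ => hasFDerivAt_w α c i x)).const_add 1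

lemma hasFDerivAt_F (hc : ∀ i, 0 < c i) (x : V) :
    HasFDerivAt (fun y => Real.log (gfun α c y)) (Dmap α c x) x :=
  (hasFDerivAt_g α c x).log (gpos α c hc x).ne'

lemma hasFDerivAt_G (x : V) : HasFDerivAt (Gmap α c) (Kmap α c x) x := by
  unfold Gmap Kmap
  refine HasFDerivAt.fun_sum (fun i _ => ?_)
  simpa using (hasFDerivAt_w α c i x).fun_smul (hasFDerivAt_const (α i) x)

lemma hasFDerivAt_D (hc : ∀ i, 0 < c i) (x : V) :
    HasFDerivAt (Dmap α c) (Hmap α c x) x := by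
  unfold Dmap Hmap
  have h1 : HasFDerivAt (fun y => (gfun α c y)⁻¹)
      ((-(gfun α c x ^ 2)⁻¹) • Gmap α c x) x :=
    (hasDerivAt_inv (gpos α c hc x).ne').comp_hasFDerivAt x (hasFDerivAt_g α c x)
  exact h1.smul (hasFDerivAt_G α c x)

lemma Hmap_apply (x v : V) :
    Hmap α c x v v = (gfun α c x)⁻¹ * (∑ i, c i * Real.exp (α i x) * (α i v)^2)
      - (gfun α c x ^ 2)⁻¹ * (∑ i, c i * Real.exp (α i x) * α i v)^2 := by
  have hG : Gmap α c x v = ∑ i, c i * Real.exp (α i x) * α i v := by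
    simp [Gmap, ContinuousLinearMap.sum_apply, smul_eq_mul]
  have hK : Kmap α c x v v = ∑ i, c i * Real.exp (α i x) * (α i v)^2 := by
    simp [Kmap, ContinuousLinearMap.sum_apply, smul_eq_mul, pow_two]
    exact Finset.sum_congr rfl (fun i _ => by ring)
  simp only [Hmap, ContinuousLinearMap.add_apply, ContinuousLinearMap.smul_apply,
    ContinuousLinearMap.smulRight_apply, smul_eq_mul, hG, hK]
  ring

lemma eq_zero_of_forall (hspan : Submodule.span ℝ (Set.range α) = ⊤) (v : V)
    (h : ∀ i, α i v = 0) : v = 0 := by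
  have hall : ∀ φ : V →L[ℝ] ℝ, φ v = 0 := by
    intro φ
    have hφ : φ ∈ Submodule.span ℝ (Set.range α) := hspan ▸ Submodule.mem_top
    induction hφ using Submodule.span_induction with
    | mem x hx => obtain ⟨i, rfl⟩ := hx; exact h i
    | zero => simp
    | add x y _ _ hx hy => simp [hx, hy]
    | smul a x _ hx => simp [hx]
  have := hall (innerSL ℝ v)
  simpa [innerSL_apply_apply, inner_self_eq_zero] using this

lemma Hmap_pos (hc : ∀ i, 0 < c i) (hspan : Submodule.span ℝ (Set.range α) = ⊤)
    (x v : V) (hv : v ≠ 0) : 0 < Hmap α c x v v := by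
  have hwpos : ∀ i, 0 < c i * Real.exp (α i x) := fun i => mul_pos (hc i) (Real.exp_pos _)
  have hApos : 0 < ∑ i, c i * Real.exp (α i x) * (α i v)^2 := by
    obtain ⟨i0, hi0⟩ : ∃ i, α i v ≠ 0 := by
      by_contra h; push_neg at h
      exact hv (eq_zero_of_forall α hspan v h)
    exact Finset.sum_pos' (fun i _ => mul_nonneg (hwpos i).le (sq_nonneg _))
      ⟨i0, Finset.mem_univ _, mul_pos (hwpos i0) (pow_two_pos_of_ne_zero hi0)⟩
  have hCS : (∑ i, c i * Real.exp (α i x) * α i v)^2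
      ≤ (∑ i, c i * Real.exp (α i x)) * ∑ i, c i * Real.exp (α i x) * (α i v)^2 := by
    have h := Finset.sum_mul_sq_le_sq_mul_sq Finset.univ
      (fun i => Real.sqrt (c i * Real.exp (α i x)))
      (fun i => Real.sqrt (c i * Real.exp (α i x)) * α i v)
    calc (∑ i, c i * Real.exp (α i x) * α i v)^2
        = (∑ i, Real.sqrt (c i * Real.exp (α i x)) *
            (Real.sqrt (c i * Real.exp (α i x)) * α i v))^2 := by
          congr 1; refine Finset.sum_congr rfl (fun i _ => ?_)
          rw [← mul_assoc, Real.mul_self_sqrt (hwpos i).le]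
      _ ≤ (∑ i, Real.sqrt (c i * Real.exp (α i x))^2) *
            (∑ i, (Real.sqrt (c i * Real.exp (α i x)) * α i v)^2) := h
      _ = (∑ i, c i * Real.exp (α i x)) * ∑ i, c i * Real.exp (α i x) * (α i v)^2 := by
          congr 1
          · exact Finset.sum_congr rfl (fun i _ => Real.sq_sqrt (hwpos i).le)
          · refine Finset.sum_congr rfl (fun i _ => ?_)
            rw [mul_pow, Real.sq_sqrt (hwpos i).le]
  have hg1 : gfun α c x = 1 + ∑ i, c i * Real.exp (α i x) := rfl
  rw [Hmap_apply]
  set A := ∑ i, c i * Real.exp (α i x) * (α i v)^2 with hA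
  set B := ∑ i, c i * Real.exp (α i x) * α i v with hB
  set S := ∑ i, c i * Real.exp (α i x) with hS
  have hSnn : 0 ≤ S := Finset.sum_nonneg (fun i _ => (hwpos i).le)
  have hg : 0 < gfun α c x := by rw [hg1]; linarith
  have key : 0 < gfun α c x * A - B^2 := by rw [hg1]; nlinarith
  have heq : (gfun α c x)⁻¹ * A - (gfun α c x ^ 2)⁻¹ * B^2
      = (gfun α c x * A - B^2) / gfun α c x ^ 2 := by field_simp
  rw [heq]; positivity

/-- The linear parametrization `u ↦ Σ uᵢ αᵢ`. -/
noncomputable def Tmap : (Fin N → ℝ) →L[ℝ] (V →L[ℝ] ℝ) :=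
  LinearMap.toContinuousLinearMap (∑ i, (LinearMap.proj i).smulRight (α i))

lemma Tmap_apply (u : Fin N → ℝ) : Tmap α u = ∑ i, u i • α i := by
  simp [Tmap, LinearMap.sum_apply]

lemma Tmap_surj (hspan : Submodule.span ℝ (Set.range α) = ⊤) :
    Function.Surjective (Tmap α) := by
  have hle : Submodule.span ℝ (Set.range α)
      ≤ LinearMap.range ((Tmap α : (Fin N → ℝ) →ₗ[ℝ] (V →L[ℝ] ℝ))) := by
    rw [Submodule.span_le]
    rintro _ ⟨i, rfl⟩
    refine ⟨Pi.single i 1, ?_⟩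
    show Tmap α (Pi.single i 1) = α i
    rw [Tmap_apply, Finset.sum_eq_single i]
    · simp
    · intro j _ hj; simp [Pi.single_apply, hj]
    · simp
  intro φ
  exact hle (hspan ▸ Submodule.mem_top)

/-- The open simplex of coefficients. -/
def Uset (N : ℕ) : Set (Fin N → ℝ) := {u | (∀ i, 0 < u i) ∧ ∑ i, u i < 1}

lemma Uset_open : IsOpen (Uset N) := by
  have h1 : IsOpen {u : Fin N → ℝ | ∀ i, 0 < u i} := by
    rw [Set.setOf_forall]
    exact isOpen_iInter_of_finite fun i => isOpen_lt continuous_const (continuous_apply i)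
  have h2 : IsOpen {u : Fin N → ℝ | ∑ i, u i < 1} :=
    isOpen_lt (by exact continuous_finset_sum _ fun i _ => continuous_apply i) continuous_const
  exact h1.inter h2

lemma Tmap_mem_hull {u : Fin N → ℝ} (hu : u ∈ Uset N) :
    Tmap α u ∈ convexHull ℝ (insert (0 : V →L[ℝ] ℝ) (Set.range α)) := by
  obtain ⟨hpos, hsum⟩ := hu
  have := Finset.centerMass_mem_convexHull (t := (Finset.univ : Finset (Option (Fin N))))
    (w := fun o => o.elim (1 - ∑ i, u i) u)
    (z := fun o => o.elim (0 : V →L[ℝ] ℝ) (fun i => α i))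
    (s := insert (0 : V →L[ℝ] ℝ) (Set.range α))
    ?_ ?_ ?_
  · convert this using 1
    rw [Tmap_apply, Finset.centerMass, Fintype.sum_option, Fintype.sum_option]
    simp
  · rintro (_|i) _
    · simp; linarith
    · exact (hpos i).le
  · rw [Fintype.sum_option]; simp
  · rintro (_|i) _
    · exact Set.mem_insert _ _
    · exact Set.mem_insert_of_mem _ ⟨i, rfl⟩

lemma hull_apply_le (hne : (Finset.univ : Finset (Fin N)).Nonempty) (x : V) :
    ∀ γ ∈ convexHull ℝ (insert (0 : V →L[ℝ] ℝ) (Set.range α)),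
      γ x ≤ max 0 (Finset.univ.sup' hne fun i => α i x) := by
  intro γ hγ
  have hconv : Convex ℝ {δ : V →L[ℝ] ℝ | δ x ≤ max 0 (Finset.univ.sup' hne fun i => α i x)} :=
    convex_halfSpace_le ⟨fun a b => ContinuousLinearMap.add_apply a b x,
      fun r a => ContinuousLinearMap.smul_apply a r x⟩ _
  have hsub : insert (0 : V →L[ℝ] ℝ) (Set.range α)
      ⊆ {δ : V →L[ℝ] ℝ | δ x ≤ max 0 (Finset.univ.sup' hne fun i => α i x)} := by
    rintro δ (rfl | ⟨i, rfl⟩)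
    · simp only [Set.mem_setOf_eq, ContinuousLinearMap.zero_apply]
      exact le_max_left _ _
    · simp only [Set.mem_setOf_eq]
      refine le_trans ?_ (le_max_right _ _)
      exact Finset.le_sup' (f := fun i => α i x) (Finset.mem_univ i)
  exact convexHull_min hsub hconv hγ

lemma log_g_nonneg (hc : ∀ i, 0 < c i) (x : V) : 0 ≤ Real.log (gfun α c x) := by
  apply Real.log_nonneg
  have : (0:ℝ) ≤ ∑ i, c i * Real.exp (α i x) :=
    Finset.sum_nonneg fun i _ => (mul_pos (hc i) (Real.exp_pos _)).le
  unfold gfun; linarith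

lemma alpha_le_log_g (hc : ∀ i, 0 < c i) (x : V) (i : Fin N) :
    α i x + Real.log (c i) ≤ Real.log (gfun α c x) := by
  have h1 : c i * Real.exp (α i x) ≤ gfun α c x := by
    have h2 : ∀ j ∈ Finset.univ, 0 ≤ c j * Real.exp (α j x) :=
      fun j _ => (mul_pos (hc j) (Real.exp_pos _)).le
    have := Finset.single_le_sum h2 (Finset.mem_univ i)
    unfold gfun; linarith
  have h0 : 0 < c i * Real.exp (α i x) := mul_pos (hc i) (Real.exp_pos _)
  calc α i x + Real.log (c i) = Real.log (c i * Real.exp (α i x)) := by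
        rw [Real.log_mul (hc i).ne' (Real.exp_pos _).ne', Real.log_exp]; ring
    _ ≤ Real.log (gfun α c x) := Real.log_le_log h0 h1

lemma C_nonneg (hne : (Finset.univ : Finset (Fin N)).Nonempty) :
    0 ≤ Finset.univ.sup' hne (fun i => max 0 (-Real.log (c i))) := by
  obtain ⟨i, _⟩ := hne
  refine le_trans (le_max_left 0 (-Real.log (c i))) ?_
  exact Finset.le_sup' (f := fun j => max 0 (-Real.log (c j))) (Finset.mem_univ i)

lemma max_le_log_add (hc : ∀ i, 0 < c i) (hne : (Finset.univ : Finset (Fin N)).Nonempty)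
    (x : V) :
    max 0 (Finset.univ.sup' hne fun i => α i x)
      ≤ Real.log (gfun α c x) + Finset.univ.sup' hne (fun i => max 0 (-Real.log (c i))) := by
  have hC0 := C_nonneg c hne
  apply max_le
  · linarith [log_g_nonneg α c hc x]
  · apply Finset.sup'_le
    intro i _
    have h1 := alpha_le_log_g α c hc x i
    have h2 : -Real.log (c i) ≤ Finset.univ.sup' hne (fun i => max 0 (-Real.log (c i))) := by
      refine le_trans (le_max_right 0 (-Real.log (c i))) ?_
      exact Finset.le_sup' (f := fun j => max 0 (-Real.log (c j))) (Finset.mem_univ i)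
    linarith

end MomentAux

set_option maxHeartbeats 1000000 in
/-- Theorem 10.1 (in coordinates): for `F(x) = log(1 + Σᵢ cᵢ e^{αᵢ(x)})` with `cᵢ > 0`
and the `αᵢ` spanning `V*`, `F` is smooth and strictly convex, and the range of its
Legendre transform is the interior of the convex hull of `{0, α₁, …, α_N}`. -/
theorem moment_image_of_orbit {V : Type*} [NormedAddCommGroup V]
    [InnerProductSpace ℝ V] [FiniteDimensional ℝ V] {N : ℕ} (hN : 1 ≤ N)
    (α : Fin N → V →L[ℝ] ℝ) (c : Fin N → ℝ) (hc : ∀ i, 0 < c i)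
    (hspan : Submodule.span ℝ (Set.range α) = ⊤)
    (F : V → ℝ) (hF : F = fun x => Real.log (1 + ∑ i, c i * Real.exp (α i x))) :
    ContDiff ℝ (⊤ : ℕ∞) F ∧
      (∀ p v : V, v ≠ 0 → 0 < fderiv ℝ (fderiv ℝ F) p v v) ∧
      Set.range (fun p : V => fderiv ℝ F p) =
        interior (convexHull ℝ (insert (0 : V →L[ℝ] ℝ) (Set.range α))) := by
  subst hF
  have hne : (Finset.univ : Finset (Fin N)).Nonempty := ⟨⟨0, hN⟩, Finset.mem_univ _⟩
  -- derivative identification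
  have hDF : ∀ p : V, HasFDerivAt (fun x => Real.log (1 + ∑ i, c i * Real.exp (α i x)))
      (Dmap α c p) p := fun p => hasFDerivAt_F α c hc p
  have hfd : fderiv ℝ (fun x => Real.log (1 + ∑ i, c i * Real.exp (α i x))) = Dmap α c :=
    funext fun p => (hDF p).fderiv
  -- smoothness
  have hsmooth : ContDiff ℝ (⊤ : ℕ∞) (fun x => Real.log (1 + ∑ i, c i * Real.exp (α i x))) := by
    refine ContDiff.log ?_ (fun x => (gpos α c hc x).ne')
    exact contDiff_const.add (ContDiff.sum fun i _ => contDiff_const.mul ((α i).contDiff.exp))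
  refine ⟨hsmooth, ?_, ?_⟩
  · -- strict convexity
    intro p v hv
    rw [hfd, (hasFDerivAt_D α c hc p).fderiv]
    exact Hmap_pos α c hc hspan p v hv
  · -- range of the Legendre transform
    have hfd' : (fun p : V => fderiv ℝ (fun x => Real.log (1 + ∑ i, c i * Real.exp (α i x))) p)
        = Dmap α c := funext fun p => (hDF p).fderiv
    rw [hfd']
    apply Set.Subset.antisymm
    · -- range ⊆ interior hull
      have hTopen : IsOpen (Tmap α '' Uset N) :=
        ((Tmap α).isOpenMap (Tmap_surj α hspan)) _ Uset_open
      have hsub : Set.range (Dmap α c) ⊆ Tmap α '' Uset N := by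
        rintro _ ⟨p, rfl⟩
        refine ⟨fun i => (gfun α c p)⁻¹ * (c i * Real.exp (α i p)), ⟨?_, ?_⟩, ?_⟩
        · intro i
          exact mul_pos (inv_pos.mpr (gpos α c hc p)) (mul_pos (hc i) (Real.exp_pos _))
        · rw [← Finset.mul_sum]
          have hg1 : gfun α c p = 1 + ∑ i, c i * Real.exp (α i p) := rfl
          have hg := gpos α c hc p
          rw [inv_mul_lt_one₀ hg, hg1]
          linarith
        · rw [Tmap_apply]
          unfold Dmap Gmap
          rw [Finset.smul_sum]
          exact Finset.sum_congr rfl fun i _ => (smul_smul _ _ _).symm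
      refine Set.Subset.trans hsub (interior_maximal ?_ hTopen)
      rintro _ ⟨u, hu, rfl⟩
      exact Tmap_mem_hull α hu
    · -- interior hull ⊆ range
      intro β hβ
      obtain ⟨ε, hε, hball⟩ := Metric.mem_nhds_iff.mp (mem_interior_iff_mem_nhds.mp hβ)
      set C := Finset.univ.sup' hne (fun i => max 0 (-Real.log (c i))) with hCdef
      have hC0 : 0 ≤ C := C_nonneg c hne
      -- coercivity bound
      have hbound : ∀ x : V, ε / 2 * ‖x‖ - C ≤ Real.log (gfun α c x) - β x := by
        intro x
        by_cases hx : x = 0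
        · subst hx
          simp only [norm_zero, mul_zero, map_zero, sub_zero, zero_sub]
          linarith [log_g_nonneg α c hc 0]
        · set φ : V →L[ℝ] ℝ := ‖x‖⁻¹ • innerSL ℝ x with hφdef
          have hxn : (0:ℝ) < ‖x‖ := norm_pos_iff.mpr hx
          have hφx : φ x = ‖x‖ := by
            rw [hφdef]
            simp only [ContinuousLinearMap.smul_apply, innerSL_apply_apply, smul_eq_mul,
              real_inner_self_eq_norm_sq]
            field_simp
          have hφn : ‖(ε/2) • φ‖ ≤ ε/2 := by
            refine ContinuousLinearMap.opNorm_le_bound _ (by linarith) (fun v => ?_)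
            have hi := abs_real_inner_le_norm x v
            have he : ((ε/2) • φ) v = ε/2 * (‖x‖⁻¹ * (inner ℝ x v : ℝ)) := by
              simp [hφdef, ContinuousLinearMap.smul_apply, innerSL_apply_apply]
            rw [he, Real.norm_eq_abs, abs_mul, abs_mul, abs_of_pos (by linarith : (0:ℝ) < ε/2),
              abs_of_nonneg (inv_nonneg.mpr hxn.le)]
            calc ε/2 * (‖x‖⁻¹ * |(inner ℝ x v : ℝ)|) ≤ ε/2 * (‖x‖⁻¹ * (‖x‖ * ‖v‖)) := by
                  have h5 : (0:ℝ) < ε/2 := by linarith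
                  have h6 : (0:ℝ) ≤ ‖x‖⁻¹ := inv_nonneg.mpr hxn.le
                  exact mul_le_mul_of_nonneg_left (mul_le_mul_of_nonneg_left hi h6) h5.le
              _ = ε/2 * ‖v‖ := by field_simp
          have hγK : β + (ε/2) • φ ∈
              convexHull ℝ (insert (0 : V →L[ℝ] ℝ) (Set.range α)) := by
            apply hball
            rw [Metric.mem_ball, dist_eq_norm]
            have : β + (ε/2) • φ - β = (ε/2) • φ := by abel
            rw [this]
            calc ‖(ε/2) • φ‖ ≤ ε/2 := hφn
              _ < ε := by linarith
          have h1 := hull_apply_le α hne x _ hγK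
          have h2 := max_le_log_add α c hc hne x
          have h3 : (β + (ε/2) • φ) x = β x + ε/2 * ‖x‖ := by
            simp [ContinuousLinearMap.add_apply, ContinuousLinearMap.smul_apply, hφx]
          rw [h3] at h1
          rw [← hCdef] at h2
          linarith
      -- existence of a minimizer
      have hGcont : Continuous (fun x : V => Real.log (gfun α c x) - β x) := by
        have hdiff : Differentiable ℝ (fun x : V => Real.log (gfun α c x)) :=
          fun p => (hasFDerivAt_F α c hc p).differentiableAt
        exact hdiff.continuous.sub β.continuous
      have hGtends : Tendsto (fun x : V => Real.log (gfun α c x) - β x)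
          (cocompact V) atTop := by
        refine tendsto_atTop_mono hbound ?_
        have h1 : Tendsto (fun x : V => ε / 2 * ‖x‖) (cocompact V) atTop :=
          (tendsto_norm_cocompact_atTop).const_mul_atTop (by linarith)
        have := Filter.tendsto_atTop_add_const_right (cocompact V) (-C) h1
        simpa [sub_eq_add_neg] using this
      obtain ⟨x₀, hx₀⟩ := hGcont.exists_forall_le hGtends
      have hloc : IsLocalMin (fun x : V => Real.log (gfun α c x) - β x) x₀ :=
        Filter.Eventually.of_forall hx₀
      have hG' : HasFDerivAt (fun x : V => Real.log (gfun α c x) - β x)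
          (Dmap α c x₀ - β) x₀ := (hasFDerivAt_F α c hc x₀).sub β.hasFDerivAt
      have h0 := hloc.fderiv_eq_zero
      rw [hG'.fderiv] at h0
      exact ⟨x₀, sub_eq_zero.mp h0⟩
end

section
/- Let W be a finite-dimensional real normed vector space and let α₁, …, αₙ ∈ W* (n ≥ 1). Define ψ : ℂⁿ → W* by ψ(z) = Σᵢ |zᵢ|² · αᵢ. Then ψ is a proper map (the preimage of every compact subset of W* is compact) if and only if the αᵢ are polarized, i.e., there exists ξ ∈ W such that αᵢ(ξ) > 0 for all i = 1, …, n. -/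
/-!
If `αᵢ(ξ) > 0` for all `i`, then evaluating `ψ(z) = Σ |zᵢ|² αᵢ` at `ξ` bounds every `|zᵢ|²`
on the preimage of a compact set, which is therefore closed and bounded. Conversely, `ψ` is
homogeneous of degree two, so its fibre over `0` is a cone and can only be compact if it is `{0}`.
Since `ψ` maps the nonnegative orthant onto the cone spanned by the `αᵢ`, this says that `0` is not
a convex combination of the `αᵢ`; separating `0` from their convex hull by a linear functional on
`W*`, which is evaluation at some `ξ ∈ W` since `W` is finite-dimensional, gives the polarization.
-/

open Set Bornology

theorem NormedSpace.surjective_inclusionInDoubleDual {𝕜 E : Type*} [NontriviallyNormedField 𝕜]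
    [CompleteSpace 𝕜] [NormedAddCommGroup E] [NormedSpace 𝕜 E] [FiniteDimensional 𝕜 E] :
    Function.Surjective (inclusionInDoubleDual 𝕜 E) := by
  intro f
  refine ⟨(Module.evalEquiv 𝕜 E).symm
    (f.toLinearMap ∘ₗ LinearMap.toContinuousLinearMap.toLinearMap), ?_⟩
  ext g
  rw [NormedSpace.dual_def]
  calc g _ = f (LinearMap.toContinuousLinearMap (g : E →ₗ[𝕜] 𝕜)) :=
        Module.apply_evalEquiv_symm_apply 𝕜 E _ _
    _ = f g := by rw [← LinearMap.coe_toContinuousLinearMap_symm, LinearEquiv.apply_symm_apply]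

/-- One half of Gordan's alternative. -/
theorem exists_forall_pos_of_zero_notMem_convexHull {W ι : Type*} [NormedAddCommGroup W]
    [NormedSpace ℝ W] [FiniteDimensional ℝ W] [Finite ι] {α : ι → StrongDual ℝ W}
    (h : 0 ∉ convexHull ℝ (range α)) : ∃ ξ : W, ∀ i, 0 < α i ξ := by
  obtain ⟨f, u, hf0, hfα⟩ := geometric_hahn_banach_point_closed (convex_convexHull ℝ _)
    ((finite_range α).isCompact_convexHull (𝕜 := ℝ)).isClosed h
  obtain ⟨ξ, rfl⟩ := NormedSpace.surjective_inclusionInDoubleDual (𝕜 := ℝ) f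
  refine ⟨ξ, fun i => ?_⟩
  have := hfα _ (subset_convexHull ℝ _ (mem_range_self i))
  simp only [map_zero, NormedSpace.dual_def] at hf0 this
  linarith

theorem convexHull_range_eq_image_stdSimplex {R E ι : Type*} [Field R] [LinearOrder R]
    [IsStrictOrderedRing R] [AddCommGroup E] [Module R E] [Fintype ι] (v : ι → E) :
    convexHull R (range v) = (fun t => ∑ i, t i • v i) '' stdSimplex R ι := by
  classical
  have hsum : (fun t : ι → R => ∑ i, t i • v i) = Fintype.linearCombination R v :=
    funext fun t => (Fintype.linearCombination_apply R v t).symm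
  rw [← convexHull_rangle_single_eq_stdSimplex, hsum, LinearMap.image_convexHull, ← range_comp]
  congr 2
  ext i
  simp

section MomentMap

variable {ι F : Type*} [Fintype ι] [NormedAddCommGroup F] [NormedSpace ℝ F]

noncomputable def momentMap (α : ι → F) (z : ι → ℂ) : F := ∑ i, ‖z i‖ ^ 2 • α i

variable (α : ι → F)

theorem continuous_momentMap : Continuous (momentMap α) := by
  unfold momentMap
  fun_prop

theorem momentMap_smul (c : ℂ) (z : ι → ℂ) : momentMap α (c • z) = ‖c‖ ^ 2 • momentMap α z := by
  simp only [momentMap, Pi.smul_apply, smul_eq_mul, norm_mul, mul_pow, mul_smul, Finset.smul_sum]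

theorem momentMap_ofReal_sqrt {t : ι → ℝ} (ht : 0 ≤ t) :
    momentMap α (fun i => (√(t i) : ℂ)) = ∑ i, t i • α i := by
  simp only [momentMap, Complex.norm_real, Real.norm_eq_abs, sq_abs, Real.sq_sqrt (ht _)]

theorem sq_norm_mul_le_apply_momentMap {ℓ : StrongDual ℝ F} (hℓ : ∀ i, 0 ≤ ℓ (α i))
    (z : ι → ℂ) (i : ι) : ‖z i‖ ^ 2 * ℓ (α i) ≤ ℓ (momentMap α z) := by
  simp only [momentMap, map_sum, map_smul, smul_eq_mul]
  exact Finset.single_le_sum (f := fun j => ‖z j‖ ^ 2 * ℓ (α j))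
    (fun j _ => mul_nonneg (by positivity) (hℓ j)) (Finset.mem_univ i)

theorem isBounded_momentMap_preimage {ℓ : StrongDual ℝ F} (hℓ : ∀ i, 0 < ℓ (α i)) {K : Set F}
    (hK : IsBounded K) : IsBounded (momentMap α ⁻¹' K) := by
  obtain ⟨R, hR⟩ := hK.exists_norm_le
  rw [← forall_isBounded_image_eval_iff]
  intro i
  refine isBounded_iff_forall_norm_le.2 ⟨√(‖ℓ‖ * R / ℓ (α i)), ?_⟩
  rintro _ ⟨z, hz, rfl⟩
  refine Real.le_sqrt_of_sq_le ((le_div_iff₀ (hℓ i)).2 ?_)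
  calc ‖z i‖ ^ 2 * ℓ (α i) ≤ ℓ (momentMap α z) :=
        sq_norm_mul_le_apply_momentMap α (hℓ · |>.le) z i
    _ ≤ ‖ℓ (momentMap α z)‖ := Real.le_norm_self _
    _ ≤ ‖ℓ‖ * ‖momentMap α z‖ := ℓ.le_opNorm _
    _ ≤ ‖ℓ‖ * R := by gcongr; exact hR _ hz

theorem isCompact_momentMap_preimage {ℓ : StrongDual ℝ F} (hℓ : ∀ i, 0 < ℓ (α i)) {K : Set F}
    (hK : IsCompact K) : IsCompact (momentMap α ⁻¹' K) :=
  Metric.isCompact_of_isClosed_isBounded (hK.isClosed.preimage (continuous_momentMap α))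
    (isBounded_momentMap_preimage α hℓ hK.isBounded)

theorem zero_notMem_convexHull_of_isBounded_momentMap_preimage_zero
    (h : IsBounded (momentMap α ⁻¹' {0})) : (0 : F) ∉ convexHull ℝ (range α) := by
  rw [convexHull_range_eq_image_stdSimplex]
  rintro ⟨t, ⟨ht0, ht1⟩, hzero⟩
  set z : ι → ℂ := fun i => (√(t i) : ℂ)
  have hz : z ≠ 0 := by
    intro hz
    refine one_ne_zero (α := ℝ) (ht1 ▸ Finset.sum_eq_zero fun i _ => ?_)
    simpa [z, Real.sqrt_eq_zero (ht0 i)] using congrFun hz i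
  have hline : range (· • z : ℂ → ι → ℂ) ⊆ momentMap α ⁻¹' {0} := by
    rintro _ ⟨c, rfl⟩
    simp [momentMap_smul, z, momentMap_ofReal_sqrt α ht0, hzero]
  obtain ⟨R, hR⟩ := (h.subset hline).exists_norm_le
  have hR0 : 0 ≤ R := (norm_nonneg _).trans (hR _ ⟨0, rfl⟩)
  have := hR _ ⟨((R + 1) / ‖z‖ : ℝ), rfl⟩
  rw [norm_smul, Complex.norm_real, Real.norm_eq_abs, abs_of_nonneg (by positivity),
    div_mul_cancel₀ _ (norm_ne_zero_iff.2 hz)] at this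
  linarith

end MomentMap

theorem moment_map_proper_iff_polarized_general {W : Type*} [NormedAddCommGroup W]
    [NormedSpace ℝ W] [FiniteDimensional ℝ W] {n : ℕ}
    (α : Fin n → W →L[ℝ] ℝ)
    (ψ : (Fin n → ℂ) → W →L[ℝ] ℝ)
    (hψ : ψ = fun z => ∑ i, (‖z i‖ ^ 2) • α i) :
    (∀ K : Set (W →L[ℝ] ℝ), IsCompact K → IsCompact (ψ ⁻¹' K)) ↔
      ∃ ξ : W, ∀ i, 0 < α i ξ := by
  subst hψ
  refine ⟨fun hproper => ?_, fun ⟨ξ, hξ⟩ K hK => ?_⟩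
  · exact exists_forall_pos_of_zero_notMem_convexHull
      (zero_notMem_convexHull_of_isBounded_momentMap_preimage_zero α
        (hproper {0} isCompact_singleton).isBounded)
  · exact isCompact_momentMap_preimage α (ℓ := ContinuousLinearMap.apply ℝ ℝ ξ) hξ hK

/-- The moment map `ψ(z) = Σᵢ |zᵢ|² αᵢ` of a linear torus action is proper if and only
if the weights `αᵢ` are polarized: there is `ξ` with `αᵢ(ξ) > 0` for all `i`. -/
theorem moment_map_proper_iff_polarized {W : Type*} [NormedAddCommGroup W]
    [NormedSpace ℝ W] [FiniteDimensional ℝ W] {n : ℕ} (hn : 1 ≤ n)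
    (α : Fin n → W →L[ℝ] ℝ)
    (ψ : (Fin n → ℂ) → W →L[ℝ] ℝ)
    (hψ : ψ = fun z => ∑ i, (‖z i‖ ^ 2) • α i) :
    (∀ K : Set (W →L[ℝ] ℝ), IsCompact K → IsCompact (ψ ⁻¹' K)) ↔
      ∃ ξ : W, ∀ i, 0 < α i ξ :=
  moment_map_proper_iff_polarized_general α ψ hψ
end

section
/- Let g : ℝⁿ × ℝᵐ → ℝ be twice continuously differentiable and let s : ℝᵐ → ℝⁿ be differentiable, and suppose that for every w ∈ ℝᵐ the point s(w) is a critical point of g in the first variable: the partial derivative of g with respect to the first (ℝⁿ) variable vanishes at (s(w), w). Then the function h(w) := g(s(w), w) is twice differentiable and its second derivative is given, for all u, v ∈ ℝᵐ, by D²h(w)(u, v) = g_{ww}(u, v) − g_{ss}(Ds(w)·u, Ds(w)·v), where g_{ww} and g_{ss} denote the blocks of the Hessian of g at (s(w), w) acting on the second and first variables respectively, and Ds(w) is the derivative of s at w. (This is the real-coordinate content of formula (5.7): the Hessian of the reduced potential is the w-block of the Hessian of g minus the g_{ss}-quadratic form evaluated on the derivative of the critical section.) -/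
/-!
Write `σ w = (s w, w)`. Since `D₁g` vanishes along the graph of `s`, the chain rule gives
`Dh(w) = Dg(σ w) ∘ inr`, so `D²h(w)(u, v) = D²g(σ w)(Ds u, u)(0, v)`. Differentiating the
criticality condition along the graph gives `D²g(σ w)(Ds v, v)(a, 0) = 0` for all `a`; with the
symmetry of `D²g` this turns the mixed term `D²g(Ds u, 0)(0, v)` into `-D²g(Ds u, 0)(Ds v, 0)`.
-/

open ContinuousLinearMap Filter Topology

variable {𝕜 : Type*} [NontriviallyNormedField 𝕜]
  {E W X G : Type*} [NormedAddCommGroup E] [NormedSpace 𝕜 E] [NormedAddCommGroup W]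
  [NormedSpace 𝕜 W] [NormedAddCommGroup X] [NormedSpace 𝕜 X] [NormedAddCommGroup G]
  [NormedSpace 𝕜 G]

theorem ContinuousLinearMap.map_prodMk_eq_add (L : E × W →L[𝕜] G) (a : E) (b : W) :
    L (a, b) = L (a, 0) + L (0, b) := by
  rw [← map_add, Prod.mk_add_mk, add_zero, zero_add]

theorem HasFDerivAt.comp_graph_of_map_inl_eq_zero {g : E × W → G} {g' : E × W →L[𝕜] G}
    {s : W → E} {s' : W →L[𝕜] E} {w : W} (hg : HasFDerivAt g g' (s w, w))
    (hs : HasFDerivAt s s' w) (hcrit : ∀ a, g' (a, 0) = 0) :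
    HasFDerivAt (fun w => g (s w, w)) (g'.comp (inr 𝕜 E W)) w := by
  refine (hg.comp (f := fun w => (s w, w)) w (hs.prodMk (hasFDerivAt_id w))).congr_fderiv ?_
  ext v
  simp only [comp_apply, prod_apply, id_apply, inr_apply]
  rw [g'.map_prodMk_eq_add, hcrit, zero_add]

theorem HasFDerivAt.apply_eq_zero_of_eventually_apply_eq_zero {F : W → X →L[𝕜] G}
    {F' : W →L[𝕜] X →L[𝕜] G} {x : W} {v : X} (hF : HasFDerivAt F F' x)
    (hv : ∀ᶠ w in 𝓝 x, F w v = 0) (y : W) : F' y v = 0 := by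
  have hderiv : HasFDerivAt (fun w => F w v) (F'.flip v) x := by
    simpa using hF.clm_apply (hasFDerivAt_const v x)
  have hzero : HasFDerivAt (fun w => F w v) (0 : W →L[𝕜] G) x :=
    (hasFDerivAt_const 0 x).congr_of_eventuallyEq hv
  simpa using congr($(hderiv.unique hzero) y)

theorem ContinuousLinearMap.apply_graph_apply_inr_of_symm {B : E × W →L[𝕜] E × W →L[𝕜] G}
    (hB : ∀ p q, B p q = B q p) {f : W → E} (hcrit : ∀ x a, B (f x, x) (a, 0) = 0) (u v : W) :
    B (f u, u) (0, v) = B (0, u) (0, v) - B (f u, 0) (f v, 0) := by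
  have hmixed : B (f u, 0) (0, v) = -B (f u, 0) (f v, 0) := by
    have h := hcrit v (f u)
    rw [B.map_prodMk_eq_add, add_apply, hB (0, v), hB (f v, 0)] at h
    exact eq_neg_of_add_eq_zero_right h
  rw [B.map_prodMk_eq_add, add_apply, hmixed]
  abel

/-- Formula (5.7) in real coordinates: if `s(w)` is a critical point of `g(·, w)` for
every `w`, then `h(w) = g(s(w), w)` is twice differentiable and its Hessian is the
`ww`-block of the Hessian of `g` minus the `ss`-block evaluated on `Ds(w)`. -/
theorem hessian_of_reduced_potential {n m : ℕ}
    (g : (Fin n → ℝ) × (Fin m → ℝ) → ℝ)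
    (s : (Fin m → ℝ) → (Fin n → ℝ))
    (hg : ContDiff ℝ 2 g) (hs : Differentiable ℝ s)
    (hcrit : ∀ w : Fin m → ℝ, ∀ a : Fin n → ℝ, fderiv ℝ g (s w, w) (a, 0) = 0) :
    Differentiable ℝ (fun w => g (s w, w)) ∧
    Differentiable ℝ (fderiv ℝ (fun w => g (s w, w))) ∧
    ∀ w u v : Fin m → ℝ,
      fderiv ℝ (fderiv ℝ (fun w => g (s w, w))) w u v =
        fderiv ℝ (fderiv ℝ g) (s w, w) ((0 : Fin n → ℝ), u) ((0 : Fin n → ℝ), v) -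
          fderiv ℝ (fderiv ℝ g) (s w, w) (fderiv ℝ s w u, (0 : Fin m → ℝ))
            (fderiv ℝ s w v, (0 : Fin m → ℝ)) := by
  have hDg : ∀ p, HasFDerivAt g (fderiv ℝ g p) p :=
    fun p => ((hg.differentiable two_ne_zero) p).hasFDerivAt
  have hD2g : ∀ p, HasFDerivAt (fderiv ℝ g) (fderiv ℝ (fderiv ℝ g) p) p :=
    fun p => ((hg.fderiv_right le_rfl).differentiable one_ne_zero p).hasFDerivAt
  have hgraph : ∀ w, HasFDerivAt (fun w => (s w, w)) ((fderiv ℝ s w).prod (.id ℝ _)) w :=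
    fun w => (hs w).hasFDerivAt.prodMk (hasFDerivAt_id w)
  have hDg_graph : ∀ w, HasFDerivAt (fun w => fderiv ℝ g (s w, w))
      ((fderiv ℝ (fderiv ℝ g) (s w, w)).comp ((fderiv ℝ s w).prod (.id ℝ _))) w :=
    fun w => (hD2g _).comp w (hgraph w)
  have hDh : ∀ w, HasFDerivAt (fun w => g (s w, w)) ((fderiv ℝ g (s w, w)).comp (inr ℝ _ _)) w :=
    fun w => (hDg _).comp_graph_of_map_inl_eq_zero (hs w).hasFDerivAt (hcrit w)
  have hD2h : ∀ w, HasFDerivAt (fderiv ℝ fun w => g (s w, w)) _ w := fun w => by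
    rw [funext fun w => (hDh w).fderiv]
    exact (hDg_graph w).clm_comp (hasFDerivAt_const _ w)
  refine ⟨fun w => (hDh w).differentiableAt, fun w => (hD2h w).differentiableAt, fun w u v => ?_⟩
  have hcrit2 := fun x a =>
    (hDg_graph w).apply_eq_zero_of_eventually_apply_eq_zero (v := (a, 0))
      (Eventually.of_forall fun w => hcrit w a) x
  have hsymm := (hg.contDiffAt (x := (s w, w))).isSymmSndFDerivAt (by simp)
  simp only [comp_apply, prod_apply, id_apply] at hcrit2
  simpa [(hD2h w).fderiv] using apply_graph_apply_inr_of_symm hsymm hcrit2 u v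
end
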